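/- arXiv:1904.11078 — 3 statements merged into one kernel-verified Lean document; each statement's English description precedes it below -/
import Mathlib

section
/- Claim (exchanging rows, KA-2f in d = 2): Fix y ∈ Z² and ℓ ≥ 2, and let M_dom be the set of configurations η ∈ {0,1}^{Z²} for which the row y + [ℓ]×{0} is empty and the row y + [ℓ]×{1} contains at least one empty site. There exist constants C (independent of ℓ) and a T-step move M with domain M_dom, taking place in the strip y + [ℓ]×{0,1}, such that T ≤ C·ℓ, Loss(M) ≤ C·log₂(ℓ), and for every η ∈ M_dom the final configuration M_T(η) is obtained from η by exchanging the contents of the rows y + [ℓ]×{0} and y + [ℓ]×{1}. -/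
/-- ℓ¹-distance on `ℤ²`. -/
def d1 (a b : ℤ × ℤ) : ℕ := (a.1 - b.1).natAbs + (a.2 - b.2).natAbs

/-- The four nearest neighbours of a site of `ℤ²`. -/
def nbrs2 (x : ℤ × ℤ) : Finset (ℤ × ℤ) :=
  {x + (1, 0), x + (-1, 0), x + (0, 1), x + (0, -1)}

/-- The configuration obtained from `η` by exchanging the values at `x` and `y`
(`true` = occupied, `false` = empty). -/
def swap2 (η : ℤ × ℤ → Bool) (x y : ℤ × ℤ) : ℤ × ℤ → Bool :=
  fun z => if z = x then η y else if z = y then η x else η z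

/-- A legal KA-2f exchange inside the region `V`: swap the values at nearest neighbours
`x,y ∈ V`, each of which has at least one empty nearest neighbour in `V` other than
`x,y` (sites outside `V` are treated as occupied). -/
def LegalEx2 (V : Set (ℤ × ℤ)) (η η' : ℤ × ℤ → Bool) : Prop :=
  ∃ x y : ℤ × ℤ, x ∈ V ∧ y ∈ V ∧ d1 x y = 1 ∧
    (∃ z ∈ nbrs2 x, z ∈ V ∧ z ≠ y ∧ η z = false) ∧
    (∃ z ∈ nbrs2 y, z ∈ V ∧ z ≠ x ∧ η z = false) ∧
    η' = swap2 η x y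

/-- `M` is a `T`-step move for the KA-2f dynamics taking place in `V` with domain `Dom`. -/
def IsTMove2 (V : Set (ℤ × ℤ)) (Dom : Set (ℤ × ℤ → Bool))
    (M : ℕ → (ℤ × ℤ → Bool) → (ℤ × ℤ → Bool)) (T : ℕ) : Prop :=
  ∀ η ∈ Dom, M 0 η = η ∧
    ∀ t < T, M (t + 1) η = M t η ∨ LegalEx2 V (M t η) (M (t + 1) η)

/-- The information loss of `M` is at most `b`: knowing `M t η` and `M (t+1) η` one can
reconstruct `η ∈ Dom` up to at most `2^b` possibilities. -/
def LossLE2 (Dom : Set (ℤ × ℤ → Bool)) (M : ℕ → (ℤ × ℤ → Bool) → (ℤ × ℤ → Bool))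
    (T : ℕ) (b : ℝ) : Prop :=
  ∀ t < T, ∀ η' ∈ Dom,
    ({η | η ∈ Dom ∧ M t η = M t η' ∧ M (t + 1) η = M (t + 1) η'}.ncard : ℝ) ≤ 2 ^ b

/-- The two-row strip `y + [ℓ] × {0,1}`. -/
def strip2 (y : ℤ × ℤ) (ℓ : ℕ) : Set (ℤ × ℤ) :=
  {z | 1 ≤ z.1 - y.1 ∧ z.1 - y.1 ≤ (ℓ : ℤ) ∧ (z.2 = y.2 ∨ z.2 = y.2 + 1)}

/-- Domain of the row-exchanging move: the row `y + [ℓ] × {0}` is empty and the row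
`y + [ℓ] × {1}` contains at least one empty site. -/
def DomRows (y : ℤ × ℤ) (ℓ : ℕ) : Set (ℤ × ℤ → Bool) :=
  {η | (∀ a : ℤ, 1 ≤ a → a ≤ (ℓ : ℤ) → η (y.1 + a, y.2) = false) ∧
       (∃ a : ℤ, 1 ≤ a ∧ a ≤ (ℓ : ℤ) ∧ η (y.1 + a, y.2 + 1) = false)}



namespace RowEx

def Bp (y : ℤ × ℤ) (j : ℤ) : ℤ × ℤ := (y.1 + j, y.2)
def Tq (y : ℤ × ℤ) (j : ℤ) : ℤ × ℤ := (y.1 + j, y.2 + 1)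

def Hs (y : ℤ × ℤ) (ℓ : ℕ) (m : ℤ) : Set (ℤ × ℤ) :=
  {z | (∃ j : ℤ, 1 ≤ j ∧ j ≤ (ℓ : ℤ) ∧ z = Bp y j) ∨ z = Tq y m}

lemma Tq_inj {y : ℤ × ℤ} {a b : ℤ} : Tq y a = Tq y b ↔ a = b := by
  simp [Tq, Prod.ext_iff]

lemma Bp_inj {y : ℤ × ℤ} {a b : ℤ} : Bp y a = Bp y b ↔ a = b := by
  simp [Bp, Prod.ext_iff]

lemma Bp_ne_Tq {y : ℤ × ℤ} {a b : ℤ} : Bp y a ≠ Tq y b := by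
  simp [Bp, Tq, Prod.ext_iff]

lemma Tq_ne_Bp {y : ℤ × ℤ} {a b : ℤ} : Tq y a ≠ Bp y b := by
  simp [Bp, Tq, Prod.ext_iff]

lemma Bp_mem_Hs {y : ℤ × ℤ} {ℓ : ℕ} {m j : ℤ} (h1 : 1 ≤ j) (h2 : j ≤ (ℓ:ℤ)) :
    Bp y j ∈ Hs y ℓ m := Or.inl ⟨j, h1, h2, rfl⟩

lemma Tq_mem_Hs {y : ℤ × ℤ} {ℓ : ℕ} {m : ℤ} : Tq y m ∈ Hs y ℓ m := Or.inr rfl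

lemma Tq_mem_strip {y : ℤ × ℤ} {ℓ : ℕ} {j : ℤ} (h1 : 1 ≤ j) (h2 : j ≤ (ℓ:ℤ)) :
    Tq y j ∈ strip2 y ℓ := by
  refine ⟨by simp [Tq]; omega, by simp [Tq]; omega, Or.inr (by simp [Tq])⟩

lemma Bp_mem_strip {y : ℤ × ℤ} {ℓ : ℕ} {j : ℤ} (h1 : 1 ≤ j) (h2 : j ≤ (ℓ:ℤ)) :
    Bp y j ∈ strip2 y ℓ := by
  refine ⟨by simp [Bp]; omega, by simp [Bp]; omega, Or.inl (by simp [Bp])⟩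

lemma mem_nbrs2 {x z : ℤ × ℤ} :
    z ∈ nbrs2 x ↔ z = x + (1,0) ∨ z = x + (-1,0) ∨ z = x + (0,1) ∨ z = x + (0,-1) := by
  simp [nbrs2]

lemma Bp_mem_nbrs_Tq {y : ℤ × ℤ} {c : ℤ} : Bp y c ∈ nbrs2 (Tq y c) := by
  rw [mem_nbrs2]
  exact Or.inr (Or.inr (Or.inr (by simp [Bp, Tq, Prod.ext_iff])))

lemma Tq_mem_nbrs_Bp {y : ℤ × ℤ} {c : ℤ} : Tq y c ∈ nbrs2 (Bp y c) := by
  rw [mem_nbrs2]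
  exact Or.inr (Or.inr (Or.inl (by simp [Bp, Tq, Prod.ext_iff])))

lemma Tq_succ_mem_nbrs {y : ℤ × ℤ} {c : ℤ} : Tq y (c+1) ∈ nbrs2 (Tq y c) := by
  rw [mem_nbrs2]
  exact Or.inl (by simp [Tq, Prod.ext_iff]; ring)

lemma Tq_pred_mem_nbrs {y : ℤ × ℤ} {c : ℤ} : Tq y (c-1) ∈ nbrs2 (Tq y c) := by
  rw [mem_nbrs2]
  exact Or.inr (Or.inl (by simp [Tq, Prod.ext_iff]; ring))

lemma Bp_succ_mem_nbrs {y : ℤ × ℤ} {c : ℤ} : Bp y (c+1) ∈ nbrs2 (Bp y c) := by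
  rw [mem_nbrs2]
  exact Or.inl (by simp [Bp, Prod.ext_iff]; ring)

lemma Bp_pred_mem_nbrs {y : ℤ × ℤ} {c : ℤ} : Bp y (c-1) ∈ nbrs2 (Bp y c) := by
  rw [mem_nbrs2]
  exact Or.inr (Or.inl (by simp [Bp, Prod.ext_iff]; ring))

lemma d1_Tq_Tq {y : ℤ × ℤ} {a b : ℤ} (h : (a - b).natAbs = 1) : d1 (Tq y a) (Tq y b) = 1 := by
  simp [d1, Tq]; omega

lemma d1_Tq_Bp {y : ℤ × ℤ} {a : ℤ} : d1 (Tq y a) (Bp y a) = 1 := by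
  simp [d1, Tq, Bp]

lemma d1_Bp_Bp {y : ℤ × ℤ} {a b : ℤ} (h : (a - b).natAbs = 1) : d1 (Bp y a) (Bp y b) = 1 := by
  simp [d1, Bp]; omega

/-- the swap function on sites -/
def swf (x y z : ℤ × ℤ) : ℤ × ℤ := if z = x then y else if z = y then x else z

lemma swf_left {x y : ℤ × ℤ} : swf x y x = y := by simp [swf]

lemma swf_right {x y : ℤ × ℤ} : swf x y y = x := by
  by_cases h : y = x <;> simp [swf, h]

lemma swf_ne {x y z : ℤ × ℤ} (h1 : z ≠ x) (h2 : z ≠ y) : swf x y z = z := by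
  simp [swf, h1, h2]

lemma swf_invol (x y z : ℤ × ℤ) : swf x y (swf x y z) = z := by
  unfold swf; split_ifs <;> try simp_all

lemma swf_TT_T {y : ℤ × ℤ} {c1 c2 j : ℤ} :
    swf (Tq y c1) (Tq y c2) (Tq y j) = Tq y (if j = c1 then c2 else if j = c2 then c1 else j) := by
  unfold swf; split_ifs <;> simp_all [Tq_inj]

lemma swf_TT_B {y : ℤ × ℤ} {c1 c2 j : ℤ} :
    swf (Tq y c1) (Tq y c2) (Bp y j) = Bp y j := swf_ne Bp_ne_Tq Bp_ne_Tq

lemma swf_TB_T {y : ℤ × ℤ} {c1 c2 j : ℤ} :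
    swf (Tq y c1) (Bp y c2) (Tq y j) = if j = c1 then Bp y c2 else Tq y j := by
  unfold swf; split_ifs <;> simp_all [Tq_inj, Tq_ne_Bp]

lemma swf_TB_B {y : ℤ × ℤ} {c1 c2 j : ℤ} :
    swf (Tq y c1) (Bp y c2) (Bp y j) = if j = c2 then Tq y c1 else Bp y j := by
  unfold swf; split_ifs <;> simp_all [Bp_inj, Bp_ne_Tq]

lemma swf_BB_T {y : ℤ × ℤ} {c1 c2 j : ℤ} :
    swf (Bp y c1) (Bp y c2) (Tq y j) = Tq y j := swf_ne Tq_ne_Bp Tq_ne_Bp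

lemma swf_BB_B {y : ℤ × ℤ} {c1 c2 j : ℤ} :
    swf (Bp y c1) (Bp y c2) (Bp y j) = Bp y (if j = c1 then c2 else if j = c2 then c1 else j) := by
  unfold swf; split_ifs <;> simp_all [Bp_inj]

end RowEx
namespace RowEx

/-- schedule of swaps: time `t` ↦ pair of sites exchanged -/
def sw (y : ℤ × ℤ) (ℓ m : ℕ) (t : ℕ) : (ℤ × ℤ) × (ℤ × ℤ) :=
  if t < m-1 then (Tq y ((m:ℤ)-1-t), Tq y ((m:ℤ)-t))
  else if t < m-1+(m-2) then (Tq y ((t:ℤ)-m+3), Bp y ((t:ℤ)-m+3))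
  else if t < m-1+(m-2)+(m-2) then (Bp y ((t:ℤ)-2*m+4), Bp y ((t:ℤ)-2*m+5))
  else if t < 3*(m-1) then
    (if t = m-1+(m-2)+(m-2) then (Tq y (m:ℤ), Bp y (m:ℤ)) else (Bp y ((m:ℤ)-1), Bp y (m:ℤ)))
  else if t < 3*(m-1)+(ℓ-m) then (Tq y ((t:ℤ)-2*m+3), Tq y ((t:ℤ)-2*m+4))
  else if t < 3*(m-1)+(ℓ-m)+(ℓ-m-1) then
    (Tq y (2*(ℓ:ℤ)+2*m-t-4), Bp y (2*(ℓ:ℤ)+2*m-t-4))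
  else if t < 3*(m-1)+(ℓ-m)+(ℓ-m-1)+(ℓ-m-1) then
    (Bp y (3*(ℓ:ℤ)+m-t-5), Bp y (3*(ℓ:ℤ)+m-t-4))
  else if t = 3*(m-1)+(ℓ-m)+(ℓ-m-1)+(ℓ-m-1) then (Tq y (m:ℤ), Bp y (m:ℤ))
  else (Bp y (m:ℤ), Bp y ((m:ℤ)+1))

/-- `Cf y ℓ m t z` = the original position of the value sitting at `z` after `t` steps -/
def Cf (y : ℤ × ℤ) (ℓ m : ℕ) : ℕ → (ℤ × ℤ) → (ℤ × ℤ)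
  | 0 => fun z => z
  | t+1 => fun z =>
      if t < 3*(ℓ-1) then Cf y ℓ m t (swf (sw y ℓ m t).1 (sw y ℓ m t).2 z)
      else Cf y ℓ m t z

/-- inverse tracking function -/
def Df (y : ℤ × ℤ) (ℓ m : ℕ) : ℕ → (ℤ × ℤ) → (ℤ × ℤ)
  | 0 => fun z => z
  | t+1 => fun z =>
      if t < 3*(ℓ-1) then swf (sw y ℓ m t).1 (sw y ℓ m t).2 (Df y ℓ m t z)
      else Df y ℓ m t z

lemma Cf_Df (y : ℤ × ℤ) (ℓ m : ℕ) (t : ℕ) (z : ℤ × ℤ) :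
    Cf y ℓ m t (Df y ℓ m t z) = z := by
  induction t with
  | zero => rfl
  | succ t ih =>
      by_cases h : t < 3*(ℓ-1)
      · simp only [Cf, Df, if_pos h, swf_invol]; exact ih
      · simp only [Cf, Df, if_neg h]; exact ih

section Segs

variable (y : ℤ × ℤ) (ℓ : ℕ) (m : ℤ) (C : (ℤ × ℤ) → (ℤ × ℤ))

def OutOk : Prop := ∀ z, z ∉ strip2 y ℓ → C z = z

def S1 (k : ℤ) : Prop :=
  (∀ j : ℤ, 1 ≤ j → j ≤ m-k-1 → C (Tq y j) = Tq y j) ∧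
  (C (Tq y (m-k)) ∈ Hs y ℓ m) ∧
  (∀ j : ℤ, m-k+1 ≤ j → j ≤ m → C (Tq y j) = Tq y (j-1)) ∧
  (∀ j : ℤ, m+1 ≤ j → j ≤ (ℓ:ℤ) → C (Tq y j) = Tq y j) ∧
  (∀ j : ℤ, 1 ≤ j → j ≤ (ℓ:ℤ) → C (Bp y j) ∈ Hs y ℓ m)

def S2 (i : ℤ) : Prop :=
  (∀ j : ℤ, 1 ≤ j → j ≤ i+1 → C (Tq y j) ∈ Hs y ℓ m) ∧
  (∀ j : ℤ, i+2 ≤ j → j ≤ m → C (Tq y j) = Tq y (j-1)) ∧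
  (∀ j : ℤ, m+1 ≤ j → j ≤ (ℓ:ℤ) → C (Tq y j) = Tq y j) ∧
  (∀ j : ℤ, 2 ≤ j → j ≤ i+1 → C (Bp y j) = Tq y (j-1)) ∧
  (C (Bp y 1) ∈ Hs y ℓ m) ∧
  (∀ j : ℤ, i+2 ≤ j → j ≤ (ℓ:ℤ) → C (Bp y j) ∈ Hs y ℓ m)

def S3 (i : ℤ) : Prop :=
  (∀ j : ℤ, 1 ≤ j → j ≤ m-1 → C (Tq y j) ∈ Hs y ℓ m) ∧
  (C (Tq y m) = Tq y (m-1)) ∧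
  (∀ j : ℤ, m+1 ≤ j → j ≤ (ℓ:ℤ) → C (Tq y j) = Tq y j) ∧
  (∀ j : ℤ, 1 ≤ j → j ≤ i → C (Bp y j) = Tq y j) ∧
  (C (Bp y (i+1)) ∈ Hs y ℓ m) ∧
  (∀ j : ℤ, i+2 ≤ j → j ≤ m-1 → C (Bp y j) = Tq y (j-1)) ∧
  (∀ j : ℤ, m ≤ j → j ≤ (ℓ:ℤ) → C (Bp y j) ∈ Hs y ℓ m)

def S4 : Prop :=
  (∀ j : ℤ, 1 ≤ j → j ≤ m → C (Tq y j) ∈ Hs y ℓ m) ∧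
  (∀ j : ℤ, m+1 ≤ j → j ≤ (ℓ:ℤ) → C (Tq y j) = Tq y j) ∧
  (∀ j : ℤ, 1 ≤ j → j ≤ m-2 → C (Bp y j) = Tq y j) ∧
  (C (Bp y (m-1)) ∈ Hs y ℓ m) ∧
  (C (Bp y m) = Tq y (m-1)) ∧
  (∀ j : ℤ, m+1 ≤ j → j ≤ (ℓ:ℤ) → C (Bp y j) ∈ Hs y ℓ m)

def S5 (s : ℤ) : Prop :=
  (∀ j : ℤ, 1 ≤ j → j ≤ m-1 → C (Tq y j) ∈ Hs y ℓ m) ∧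
  (∀ j : ℤ, m ≤ j → j ≤ m+s-1 → C (Tq y j) = Tq y (j+1)) ∧
  (C (Tq y (m+s)) ∈ Hs y ℓ m) ∧
  (∀ j : ℤ, m+s+1 ≤ j → j ≤ (ℓ:ℤ) → C (Tq y j) = Tq y j) ∧
  (∀ j : ℤ, 1 ≤ j → j ≤ m-1 → C (Bp y j) = Tq y j) ∧
  (∀ j : ℤ, m ≤ j → j ≤ (ℓ:ℤ) → C (Bp y j) ∈ Hs y ℓ m)

def S6 (i : ℤ) : Prop :=
  (∀ j : ℤ, 1 ≤ j → j ≤ m-1 → C (Tq y j) ∈ Hs y ℓ m) ∧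
  (∀ j : ℤ, m ≤ j → j ≤ (ℓ:ℤ)-1-i → C (Tq y j) = Tq y (j+1)) ∧
  (∀ j : ℤ, (ℓ:ℤ)-i ≤ j → j ≤ (ℓ:ℤ) → C (Tq y j) ∈ Hs y ℓ m) ∧
  (∀ j : ℤ, 1 ≤ j → j ≤ m-1 → C (Bp y j) = Tq y j) ∧
  (∀ j : ℤ, m ≤ j → j ≤ (ℓ:ℤ)-1-i → C (Bp y j) ∈ Hs y ℓ m) ∧
  (∀ j : ℤ, (ℓ:ℤ)-i ≤ j → j ≤ (ℓ:ℤ)-1 → C (Bp y j) = Tq y (j+1)) ∧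
  (C (Bp y (ℓ:ℤ)) ∈ Hs y ℓ m)

def S7 (i : ℤ) : Prop :=
  (∀ j : ℤ, 1 ≤ j → j ≤ m-1 → C (Tq y j) ∈ Hs y ℓ m) ∧
  (C (Tq y m) = Tq y (m+1)) ∧
  (∀ j : ℤ, m+1 ≤ j → j ≤ (ℓ:ℤ) → C (Tq y j) ∈ Hs y ℓ m) ∧
  (∀ j : ℤ, 1 ≤ j → j ≤ m-1 → C (Bp y j) = Tq y j) ∧
  (C (Bp y m) ∈ Hs y ℓ m) ∧
  (∀ j : ℤ, m+1 ≤ j → j ≤ (ℓ:ℤ)-1-i → C (Bp y j) = Tq y (j+1)) ∧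
  (C (Bp y ((ℓ:ℤ)-i)) ∈ Hs y ℓ m) ∧
  (∀ j : ℤ, (ℓ:ℤ)-i+1 ≤ j → j ≤ (ℓ:ℤ) → C (Bp y j) = Tq y j)

def S8 : Prop :=
  (∀ j : ℤ, 1 ≤ j → j ≤ (ℓ:ℤ) → C (Tq y j) ∈ Hs y ℓ m) ∧
  (∀ j : ℤ, 1 ≤ j → j ≤ m-1 → C (Bp y j) = Tq y j) ∧
  (C (Bp y m) = Tq y (m+1)) ∧
  (C (Bp y (m+1)) ∈ Hs y ℓ m) ∧
  (∀ j : ℤ, m+2 ≤ j → j ≤ (ℓ:ℤ) → C (Bp y j) = Tq y j)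

def SF : Prop :=
  (∀ j : ℤ, 1 ≤ j → j ≤ (ℓ:ℤ) → C (Tq y j) ∈ Hs y ℓ m) ∧
  (C (Bp y m) ∈ Hs y ℓ m) ∧
  (∀ j : ℤ, 1 ≤ j → j ≤ (ℓ:ℤ) → j ≠ m → C (Bp y j) = Tq y j)

end Segs

def Inv (y : ℤ × ℤ) (ℓ m : ℕ) (t : ℕ) (C : (ℤ × ℤ) → (ℤ × ℤ)) : Prop :=
  OutOk y ℓ C ∧
  (if t < m-1 then S1 y ℓ m C (t:ℤ)
   else if t < m-1+(m-2) then S2 y ℓ m C ((t:ℤ)-(m-1))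
   else if t < m-1+(m-2)+(m-2) then S3 y ℓ m C ((t:ℤ)-(2*m-3))
   else if t < 3*(m-1) then
     (if t = m-1+(m-2)+(m-2) then S3 y ℓ m C ((m:ℤ)-2) else S4 y ℓ m C)
   else if t < 3*(m-1)+(ℓ-m) then S5 y ℓ m C ((t:ℤ)-(3*m-3))
   else if t < 3*(m-1)+(ℓ-m)+(ℓ-m-1) then S6 y ℓ m C ((t:ℤ)-(2*m+ℓ-3))
   else if t < 3*(m-1)+(ℓ-m)+(ℓ-m-1)+(ℓ-m-1) then S7 y ℓ m C ((t:ℤ)-(m+2*ℓ-4))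
   else if t < 3*(ℓ-1) then
     (if t = 3*(m-1)+(ℓ-m)+(ℓ-m-1)+(ℓ-m-1) then S7 y ℓ m C ((ℓ:ℤ)-m-1) else S8 y ℓ m C)
   else SF y ℓ m C)

end RowEx
namespace RowEx

variable {y : ℤ × ℤ} {ℓ : ℕ} {m : ℤ} {C : (ℤ × ℤ) → (ℤ × ℤ)}

lemma OutOk_id : OutOk y ℓ (fun z => z) := fun _ _ => rfl

lemma OutOk_step {x x' : ℤ × ℤ} (hx : x ∈ strip2 y ℓ) (hx' : x' ∈ strip2 y ℓ)
    (h : OutOk y ℓ C) : OutOk y ℓ (fun z => C (swf x x' z)) := by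
  intro z hz
  have : swf x x' z = z := swf_ne (fun e => hz (e ▸ hx)) (fun e => hz (e ▸ hx'))
  simp only [this]; exact h z hz

lemma base_S1 (hm1 : 1 ≤ m) (hmL : m ≤ (ℓ:ℤ)) : S1 y ℓ m (fun z => z) 0 := by
  refine ⟨fun j h1 h2 => rfl, ?_, fun j h1 h2 => by omega, fun j h1 h2 => rfl,
    fun j h1 h2 => Bp_mem_Hs h1 h2⟩
  have : m - 0 = m := by ring
  rw [this]; exact Tq_mem_Hs

lemma base_S5 (hm1 : m = 1) (hmL : m ≤ (ℓ:ℤ)) : S5 y ℓ m (fun z => z) 0 := by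
  refine ⟨fun j h1 h2 => by omega, fun j h1 h2 => by omega, ?_, fun j h1 h2 => rfl,
    fun j h1 h2 => by omega, fun j h1 h2 => Bp_mem_Hs (by omega) h2⟩
  have : m + 0 = m := by ring
  rw [this]; exact Tq_mem_Hs

lemma trans_R1 {k : ℤ} (hm1 : 1 ≤ m) (hmL : m ≤ (ℓ:ℤ)) (hk0 : 0 ≤ k) (hk : k ≤ m-2)
    (h : S1 y ℓ m C k) :
    S1 y ℓ m (fun z => C (swf (Tq y (m-1-k)) (Tq y (m-k)) z)) (k+1) := by
  obtain ⟨h1, h2, h3, h4, h5⟩ := h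
  refine ⟨?_, ?_, ?_, ?_, ?_⟩
  · intro j hj1 hj2
    simp only [swf_TT_T]
    rw [if_neg (by omega), if_neg (by omega)]
    exact h1 j hj1 (by omega)
  · simp only [swf_TT_T]
    rw [if_pos (by omega : m-(k+1) = m-1-k)]
    exact h2
  · intro j hj1 hj2
    simp only [swf_TT_T]
    rcases eq_or_ne j (m-k) with rfl | hj
    · rw [if_neg (by omega), if_pos rfl]
      exact (h1 (m-1-k) (by omega) (by omega)).trans (Tq_inj.mpr (by omega))
    · rw [if_neg (by omega), if_neg hj]
      exact h3 j (by omega) hj2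
  · intro j hj1 hj2
    simp only [swf_TT_T]
    rw [if_neg (by omega), if_neg (by omega)]
    exact h4 j hj1 hj2
  · intro j hj1 hj2
    simp only [swf_TT_B]
    exact h5 j hj1 hj2

lemma S1_to_S2 (hm1 : 1 ≤ m) (hmL : m ≤ (ℓ:ℤ)) (h : S1 y ℓ m C (m-1)) : S2 y ℓ m C 0 := by
  obtain ⟨h1, h2, h3, h4, h5⟩ := h
  refine ⟨?_, ?_, h4, fun j hj1 hj2 => by omega, h5 1 le_rfl (by omega),
    fun j hj1 hj2 => h5 j (by omega) hj2⟩
  · intro j hj1 hj2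
    have : j = 1 := by omega
    subst this
    have e : m - (m-1) = 1 := by ring
    rw [e] at h2; exact h2
  · intro j hj1 hj2
    exact h3 j (by omega) hj2

lemma trans_R2a {i : ℤ} (hm1 : 1 ≤ m) (hmL : m ≤ (ℓ:ℤ)) (hi0 : 0 ≤ i) (hi : i ≤ m-3)
    (h : S2 y ℓ m C i) :
    S2 y ℓ m (fun z => C (swf (Tq y (i+2)) (Bp y (i+2)) z)) (i+1) := by
  obtain ⟨h1, h2, h3, h4, h5, h6⟩ := h
  refine ⟨?_, ?_, ?_, ?_, ?_, ?_⟩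
  · intro j hj1 hj2
    simp only [swf_TB_T]
    rcases eq_or_ne j (i+2) with rfl | hj
    · rw [if_pos rfl]; exact h6 (i+2) (by omega) (by omega)
    · rw [if_neg hj]; exact h1 j hj1 (by omega)
  · intro j hj1 hj2
    simp only [swf_TB_T]
    rw [if_neg (by omega)]
    exact h2 j (by omega) hj2
  · intro j hj1 hj2
    simp only [swf_TB_T]
    rw [if_neg (by omega)]
    exact h3 j hj1 hj2
  · intro j hj1 hj2
    simp only [swf_TB_B]
    rcases eq_or_ne j (i+2) with rfl | hj
    · rw [if_pos rfl]
      exact (h2 (i+2) (by omega) (by omega)).trans (Tq_inj.mpr (by omega))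
    · rw [if_neg hj]; exact h4 j hj1 (by omega)
  · simp only [swf_TB_B]
    rw [if_neg (by omega)]
    exact h5
  · intro j hj1 hj2
    simp only [swf_TB_B]
    rw [if_neg (by omega)]
    exact h6 j (by omega) hj2

lemma S2_to_S3 (hm1 : 2 ≤ m) (h : S2 y ℓ m C (m-2)) : S3 y ℓ m C 0 := by
  obtain ⟨h1, h2, h3, h4, h5, h6⟩ := h
  refine ⟨fun j hj1 hj2 => h1 j hj1 (by omega), h2 m (by omega) le_rfl, h3,
    fun j hj1 hj2 => by omega, ?_, fun j hj1 hj2 => h4 j (by omega) (by omega),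
    fun j hj1 hj2 => h6 j (by omega) hj2⟩
  have e : (0:ℤ) + 1 = 1 := by ring
  rw [e]; exact h5

lemma trans_R2b {i : ℤ} (hm1 : 1 ≤ m) (hmL : m ≤ (ℓ:ℤ)) (hi0 : 0 ≤ i) (hi : i ≤ m-3)
    (h : S3 y ℓ m C i) :
    S3 y ℓ m (fun z => C (swf (Bp y (i+1)) (Bp y (i+2)) z)) (i+1) := by
  obtain ⟨h1, h2, h3, h4, h5, h6, h7⟩ := h
  refine ⟨fun j hj1 hj2 => by simpa only [swf_BB_T] using h1 j hj1 hj2,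
    by simpa only [swf_BB_T] using h2,
    fun j hj1 hj2 => by simpa only [swf_BB_T] using h3 j hj1 hj2, ?_, ?_, ?_, ?_⟩
  · intro j hj1 hj2
    simp only [swf_BB_B]
    rcases eq_or_ne j (i+1) with rfl | hj
    · rw [if_pos rfl]
      exact (h6 (i+2) (by omega) (by omega)).trans (Tq_inj.mpr (by omega))
    · rw [if_neg hj, if_neg (by omega)]
      exact h4 j hj1 (by omega)
  · simp only [swf_BB_B]
    rw [if_neg (by omega), if_pos (show i+1+1 = i+2 by ring)]
    exact h5
  · intro j hj1 hj2
    simp only [swf_BB_B]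
    rw [if_neg (by omega), if_neg (by omega)]
    exact h6 j (by omega) hj2
  · intro j hj1 hj2
    simp only [swf_BB_B]
    rw [if_neg (by omega), if_neg (by omega)]
    exact h7 j hj1 hj2

lemma trans_X1 (hm2 : 2 ≤ m) (hmL : m ≤ (ℓ:ℤ)) (h : S3 y ℓ m C (m-2)) :
    S4 y ℓ m (fun z => C (swf (Tq y m) (Bp y m) z)) := by
  obtain ⟨h1, h2, h3, h4, h5, h6, h7⟩ := h
  refine ⟨?_, ?_, ?_, ?_, ?_, ?_⟩
  · intro j hj1 hj2
    simp only [swf_TB_T]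
    rcases eq_or_ne j m with rfl | hj
    · rw [if_pos rfl]; exact h7 j le_rfl hmL
    · rw [if_neg hj]; exact h1 j hj1 (by omega)
  · intro j hj1 hj2
    simp only [swf_TB_T]
    rw [if_neg (by omega)]
    exact h3 j hj1 hj2
  · intro j hj1 hj2
    simp only [swf_TB_B]
    rw [if_neg (by omega)]
    exact h4 j hj1 (by omega)
  · simp only [swf_TB_B]
    rw [if_neg (by omega)]
    have e : m - 2 + 1 = m - 1 := by ring
    rw [e] at h5; exact h5
  · simp only [swf_TB_B]
    rw [if_pos trivial]
    exact h2
  · intro j hj1 hj2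
    simp only [swf_TB_B]
    rw [if_neg (by omega)]
    exact h7 j (by omega) hj2

lemma trans_X2 (hm2 : 2 ≤ m) (hmL : m ≤ (ℓ:ℤ)) (h : S4 y ℓ m C) :
    S5 y ℓ m (fun z => C (swf (Bp y (m-1)) (Bp y m) z)) 0 := by
  obtain ⟨h1, h2, h3, h4, h5, h6⟩ := h
  refine ⟨fun j hj1 hj2 => by simpa only [swf_BB_T] using h1 j hj1 (by omega),
    fun j hj1 hj2 => by omega, ?_, ?_, ?_, ?_⟩
  · simp only [swf_BB_T]
    have e : m + 0 = m := by ring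
    rw [e]; exact h1 m (by omega) le_rfl
  · intro j hj1 hj2
    simp only [swf_BB_T]
    exact h2 j (by omega) hj2
  · intro j hj1 hj2
    simp only [swf_BB_B]
    rcases eq_or_ne j (m-1) with rfl | hj
    · rw [if_pos rfl]
      exact h5.trans (Tq_inj.mpr rfl)
    · rw [if_neg hj, if_neg (by omega)]
      exact h3 j hj1 (by omega)
  · intro j hj1 hj2
    simp only [swf_BB_B]
    rcases eq_or_ne j m with rfl | hj
    · rw [if_neg (by omega), if_pos rfl]
      exact h4
    · rw [if_neg (by omega), if_neg hj]
      exact h6 j (by omega) hj2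

lemma S5_zero_SF (hme : m = (ℓ:ℤ)) (hm1 : 1 ≤ m) (h : S5 y ℓ m C 0) : SF y ℓ m C := by
  obtain ⟨h1, h2, h3, h4, h5, h6⟩ := h
  have e : m + 0 = m := by ring
  rw [e] at h3
  refine ⟨?_, h6 m le_rfl (by omega), ?_⟩
  · intro j hj1 hj2
    rcases eq_or_ne j m with rfl | hj
    · exact h3
    · exact h1 j hj1 (by omega)
  · intro j hj1 hj2 hj3
    exact h5 j hj1 (by omega)

lemma trans_R3 {s : ℤ} (hm1 : 1 ≤ m) (hmL : m ≤ (ℓ:ℤ)) (hs0 : 0 ≤ s) (hs : s ≤ (ℓ:ℤ)-m-1)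
    (h : S5 y ℓ m C s) :
    S5 y ℓ m (fun z => C (swf (Tq y (m+s)) (Tq y (m+s+1)) z)) (s+1) := by
  obtain ⟨h1, h2, h3, h4, h5, h6⟩ := h
  refine ⟨?_, ?_, ?_, ?_, ?_, ?_⟩
  · intro j hj1 hj2
    simp only [swf_TT_T]
    rw [if_neg (by omega), if_neg (by omega)]
    exact h1 j hj1 hj2
  · intro j hj1 hj2
    simp only [swf_TT_T]
    rcases eq_or_ne j (m+s) with rfl | hj
    · rw [if_pos rfl]
      exact (h4 (m+s+1) (by omega) (by omega)).trans (Tq_inj.mpr (by omega))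
    · rw [if_neg hj, if_neg (by omega)]
      exact h2 j hj1 (by omega)
  · simp only [swf_TT_T]
    rw [if_neg (by omega), if_pos (by omega : m+(s+1) = m+s+1)]
    exact h3
  · intro j hj1 hj2
    simp only [swf_TT_T]
    rw [if_neg (by omega), if_neg (by omega)]
    exact h4 j (by omega) hj2
  · intro j hj1 hj2
    simp only [swf_TT_B]
    exact h5 j hj1 hj2
  · intro j hj1 hj2
    simp only [swf_TT_B]
    exact h6 j hj1 hj2

lemma S5_to_S6 (hm1 : 1 ≤ m) (hmL : m ≤ (ℓ:ℤ)) (h : S5 y ℓ m C ((ℓ:ℤ)-m)) :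
    S6 y ℓ m C 0 := by
  obtain ⟨h1, h2, h3, h4, h5, h6⟩ := h
  have e : m + ((ℓ:ℤ)-m) = (ℓ:ℤ) := by ring
  rw [e] at h3
  refine ⟨h1, fun j hj1 hj2 => h2 j hj1 (by omega), ?_, h5,
    fun j hj1 hj2 => h6 j hj1 (by omega), fun j hj1 hj2 => by omega,
    h6 (ℓ:ℤ) (by omega) le_rfl⟩
  intro j hj1 hj2
  have : j = (ℓ:ℤ) := by omega
  subst this; exact h3

lemma trans_R4a {i : ℤ} (hm1 : 1 ≤ m) (hmL : m ≤ (ℓ:ℤ)) (hi0 : 0 ≤ i) (hi : i ≤ (ℓ:ℤ)-m-2)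
    (h : S6 y ℓ m C i) :
    S6 y ℓ m (fun z => C (swf (Tq y ((ℓ:ℤ)-1-i)) (Bp y ((ℓ:ℤ)-1-i)) z)) (i+1) := by
  obtain ⟨h1, h2, h3, h4, h5, h6, h7⟩ := h
  refine ⟨?_, ?_, ?_, ?_, ?_, ?_, ?_⟩
  · intro j hj1 hj2
    simp only [swf_TB_T]
    rw [if_neg (by omega)]
    exact h1 j hj1 hj2
  · intro j hj1 hj2
    simp only [swf_TB_T]
    rw [if_neg (by omega)]
    exact h2 j hj1 (by omega)
  · intro j hj1 hj2
    simp only [swf_TB_T]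
    rcases eq_or_ne j ((ℓ:ℤ)-1-i) with rfl | hj
    · rw [if_pos rfl]
      exact h5 _ (by omega) (by omega)
    · rw [if_neg hj]
      exact h3 j (by omega) hj2
  · intro j hj1 hj2
    simp only [swf_TB_B]
    rw [if_neg (by omega)]
    exact h4 j hj1 hj2
  · intro j hj1 hj2
    simp only [swf_TB_B]
    rw [if_neg (by omega)]
    exact h5 j hj1 (by omega)
  · intro j hj1 hj2
    simp only [swf_TB_B]
    rcases eq_or_ne j ((ℓ:ℤ)-1-i) with rfl | hj
    · rw [if_pos rfl]
      exact h2 _ (by omega) (by omega)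
    · rw [if_neg hj]
      exact h6 j (by omega) hj2
  · simp only [swf_TB_B]
    rw [if_neg (by omega)]
    exact h7

lemma S6_to_S7 (hm1 : 1 ≤ m) (hmlt : m + 1 ≤ (ℓ:ℤ)) (h : S6 y ℓ m C ((ℓ:ℤ)-m-1)) :
    S7 y ℓ m C 0 := by
  obtain ⟨h1, h2, h3, h4, h5, h6, h7⟩ := h
  refine ⟨h1, (h2 m le_rfl (by omega)).trans (Tq_inj.mpr rfl),
    fun j hj1 hj2 => h3 j (by omega) hj2, h4, h5 m le_rfl (by omega),
    fun j hj1 hj2 => h6 j (by omega) (by omega), ?_, fun j hj1 hj2 => by omega⟩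
  have e : (ℓ:ℤ) - 0 = (ℓ:ℤ) := by ring
  rw [e]; exact h7

lemma trans_R4b {i : ℤ} (hm1 : 1 ≤ m) (hmL : m ≤ (ℓ:ℤ)) (hi0 : 0 ≤ i) (hi : i ≤ (ℓ:ℤ)-m-2)
    (h : S7 y ℓ m C i) :
    S7 y ℓ m (fun z => C (swf (Bp y ((ℓ:ℤ)-1-i)) (Bp y ((ℓ:ℤ)-i)) z)) (i+1) := by
  obtain ⟨h1, h2, h3, h4, h5, h6, h7, h8⟩ := h
  refine ⟨fun j hj1 hj2 => by simpa only [swf_BB_T] using h1 j hj1 hj2,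
    by simpa only [swf_BB_T] using h2,
    fun j hj1 hj2 => by simpa only [swf_BB_T] using h3 j hj1 hj2, ?_, ?_, ?_, ?_, ?_⟩
  · intro j hj1 hj2
    simp only [swf_BB_B]
    rw [if_neg (by omega), if_neg (by omega)]
    exact h4 j hj1 hj2
  · simp only [swf_BB_B]
    rw [if_neg (by omega), if_neg (by omega)]
    exact h5
  · intro j hj1 hj2
    simp only [swf_BB_B]
    rw [if_neg (by omega), if_neg (by omega)]
    exact h6 j hj1 (by omega)
  · simp only [swf_BB_B]
    rw [if_pos (by omega : (ℓ:ℤ)-(i+1) = (ℓ:ℤ)-1-i)]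
    exact h7
  · intro j hj1 hj2
    simp only [swf_BB_B]
    rcases eq_or_ne j ((ℓ:ℤ)-i) with rfl | hj
    · rw [if_neg (by omega), if_pos rfl]
      exact (h6 ((ℓ:ℤ)-1-i) (by omega) (by omega)).trans (Tq_inj.mpr (by omega))
    · rw [if_neg (by omega), if_neg hj]
      exact h8 j (by omega) hj2

lemma trans_Y1 (hm1 : 1 ≤ m) (hmlt : m + 1 ≤ (ℓ:ℤ)) (h : S7 y ℓ m C ((ℓ:ℤ)-m-1)) :
    S8 y ℓ m (fun z => C (swf (Tq y m) (Bp y m) z)) := by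
  obtain ⟨h1, h2, h3, h4, h5, h6, h7, h8⟩ := h
  have e : (ℓ:ℤ) - ((ℓ:ℤ)-m-1) = m+1 := by ring
  rw [e] at h7
  refine ⟨?_, ?_, ?_, ?_, ?_⟩
  · intro j hj1 hj2
    simp only [swf_TB_T]
    rcases eq_or_ne j m with rfl | hj
    · rw [if_pos rfl]; exact h5
    · rw [if_neg hj]
      rcases lt_or_gt_of_ne hj with hlt | hgt
      · exact h1 j hj1 (by omega)
      · exact h3 j (by omega) hj2
  · intro j hj1 hj2
    simp only [swf_TB_B]
    rw [if_neg (by omega)]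
    exact h4 j hj1 hj2
  · simp only [swf_TB_B]
    rw [if_pos trivial]
    exact h2
  · simp only [swf_TB_B]
    rw [if_neg (by omega)]
    exact h7
  · intro j hj1 hj2
    simp only [swf_TB_B]
    rw [if_neg (by omega)]
    exact h8 j (by omega) hj2

lemma trans_Y2 (hm1 : 1 ≤ m) (hmlt : m + 1 ≤ (ℓ:ℤ)) (h : S8 y ℓ m C) :
    SF y ℓ m (fun z => C (swf (Bp y m) (Bp y (m+1)) z)) := by
  obtain ⟨h1, h2, h3, h4, h5⟩ := h
  refine ⟨fun j hj1 hj2 => by simpa only [swf_BB_T] using h1 j hj1 hj2, ?_, ?_⟩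
  · simp only [swf_BB_B]
    rw [if_pos trivial]
    exact h4
  · intro j hj1 hj2 hj3
    simp only [swf_BB_B]
    rcases eq_or_ne j (m+1) with rfl | hj
    · rw [if_neg (by omega), if_pos rfl]
      exact h3.trans (Tq_inj.mpr rfl)
    · rw [if_neg hj3, if_neg hj]
      rcases lt_or_gt_of_ne hj3 with hlt | hgt
      · exact h2 j hj1 (by omega)
      · exact h5 j (by omega) hj2

end RowEx
namespace RowEx

section MasterSteps
variable (y : ℤ × ℤ) (ℓ m : ℕ)

set_option maxHeartbeats 1000000 in
lemma mstep_R1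
    (hl : 2 ≤ ℓ) (hm1 : 1 ≤ m) (hmL : m ≤ ℓ) (t : ℕ) (hT : t < 3*(ℓ-1))
    (c1 : t < m-1)
    (ih : Inv y ℓ m t (Cf y ℓ m t)) : Inv y ℓ m (t+1) (Cf y ℓ m (t+1)) := by
  have hm1' : 1 ≤ (m:ℤ) := by exact_mod_cast hm1
  have hmL' : (m:ℤ) ≤ (ℓ:ℤ) := by exact_mod_cast hmL
  -- R1
  have hsw : sw y ℓ m t = (Tq y ((m:ℤ)-1-t), Tq y ((m:ℤ)-t)) := by
    simp only [sw]; rw [if_pos c1]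
  have hC : Cf y ℓ m (t+1)
      = fun z => Cf y ℓ m t (swf (Tq y ((m:ℤ)-1-(t:ℤ))) (Tq y ((m:ℤ)-(t:ℤ))) z) := by
    funext z; simp only [Cf, if_pos hT, hsw]
  simp only [Inv] at ih ⊢
  rw [if_pos c1] at ih
  have step := trans_R1 hm1' hmL' (k := (t:ℤ)) (by positivity) (by omega) ih.2
  have hout := OutOk_step (x := Tq y ((m:ℤ)-1-(t:ℤ))) (x' := Tq y ((m:ℤ)-(t:ℤ)))
    (Tq_mem_strip (by omega) (by omega)) (Tq_mem_strip (by omega) (by omega)) ih.1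
  rw [hC]
  by_cases d1 : t+1 < m-1
  · rw [if_pos d1]
    refine ⟨hout, ?_⟩
    rwa [show ((t:ℤ))+1 = ((t+1:ℕ):ℤ) by push_cast; ring] at step
  · have s2 := S1_to_S2 hm1' hmL'
      (by rwa [show ((t:ℤ))+1 = (m:ℤ)-1 by omega] at step)
    by_cases hm3 : 3 ≤ m
    · rw [if_neg d1, if_pos (show t+1 < m-1+(m-2) by omega)]
      refine ⟨hout, ?_⟩
      rwa [show ((t+1:ℕ):ℤ) - ((m:ℤ)-1) = 0 by push_cast; omega]
    · have hm2 : m = 2 := by omega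
      rw [if_neg d1, if_neg (show ¬(t+1 < m-1+(m-2)) by omega),
        if_neg (show ¬(t+1 < m-1+(m-2)+(m-2)) by omega),
        if_pos (show t+1 < 3*(m-1) by omega),
        if_pos (show t+1 = m-1+(m-2)+(m-2) by omega)]
      refine ⟨hout, ?_⟩
      rw [show (0:ℤ) = (m:ℤ)-2 by omega] at s2
      have s3 := S2_to_S3 (m := (m:ℤ)) (by omega) s2
      rwa [show (0:ℤ) = (m:ℤ)-2 by omega] at s3


set_option maxHeartbeats 1000000 in
lemma mstep_R2a
    (hl : 2 ≤ ℓ) (hm1 : 1 ≤ m) (hmL : m ≤ ℓ) (t : ℕ) (hT : t < 3*(ℓ-1))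
    (c1 : ¬ t < m-1) (c2 : t < m-1+(m-2))
    (ih : Inv y ℓ m t (Cf y ℓ m t)) : Inv y ℓ m (t+1) (Cf y ℓ m (t+1)) := by
  have hm1' : 1 ≤ (m:ℤ) := by exact_mod_cast hm1
  have hmL' : (m:ℤ) ≤ (ℓ:ℤ) := by exact_mod_cast hmL
  -- R2a: drops on the left
  have hsw : sw y ℓ m t
      = (Tq y ((t:ℤ)-((m:ℤ)-1)+2), Bp y ((t:ℤ)-((m:ℤ)-1)+2)) := by
    simp only [sw]
    rw [if_neg c1, if_pos c2, show (t:ℤ)-(m:ℤ)+3 = (t:ℤ)-((m:ℤ)-1)+2 by ring]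
  have hC : Cf y ℓ m (t+1) = fun z => Cf y ℓ m t
      (swf (Tq y ((t:ℤ)-((m:ℤ)-1)+2)) (Bp y ((t:ℤ)-((m:ℤ)-1)+2)) z) := by
    funext z; simp only [Cf, if_pos hT, hsw]
  simp only [Inv] at ih ⊢
  split_ifs at ih <;> try omega
  have step := trans_R2a hm1' hmL' (i := (t:ℤ)-((m:ℤ)-1)) (by omega) (by omega) ih.2
  have hout := OutOk_step (x := Tq y ((t:ℤ)-((m:ℤ)-1)+2))
    (x' := Bp y ((t:ℤ)-((m:ℤ)-1)+2))
    (Tq_mem_strip (by omega) (by omega)) (Bp_mem_strip (by omega) (by omega)) ih.1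
  rw [hC]
  refine ⟨hout, ?_⟩
  split_ifs <;> try omega
  · rwa [show ((t+1:ℕ):ℤ)-((m:ℤ)-1) = (t:ℤ)-((m:ℤ)-1)+1 by push_cast; ring]
  · rw [show (t:ℤ)-((m:ℤ)-1)+1 = (m:ℤ)-2 by push_cast; omega] at step
    have s3 := S2_to_S3 (m := (m:ℤ)) (by omega) step
    rwa [show ((t+1:ℕ):ℤ)-(2*(m:ℤ)-3) = 0 by push_cast; omega]


set_option maxHeartbeats 1000000 in
lemma mstep_R2b
    (hl : 2 ≤ ℓ) (hm1 : 1 ≤ m) (hmL : m ≤ ℓ) (t : ℕ) (hT : t < 3*(ℓ-1))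
    (c1 : ¬ t < m-1) (c2 : ¬ t < m-1+(m-2)) (c3 : t < m-1+(m-2)+(m-2))
    (ih : Inv y ℓ m t (Cf y ℓ m t)) : Inv y ℓ m (t+1) (Cf y ℓ m (t+1)) := by
  have hm1' : 1 ≤ (m:ℤ) := by exact_mod_cast hm1
  have hmL' : (m:ℤ) ≤ (ℓ:ℤ) := by exact_mod_cast hmL
  -- R2b: shifts on the left
  have hsw : sw y ℓ m t
      = (Bp y ((t:ℤ)-(2*(m:ℤ)-3)+1), Bp y ((t:ℤ)-(2*(m:ℤ)-3)+2)) := by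
    simp only [sw]
    rw [if_neg c1, if_neg c2, if_pos c3,
      show (t:ℤ)-2*(m:ℤ)+4 = (t:ℤ)-(2*(m:ℤ)-3)+1 by ring,
      show (t:ℤ)-2*(m:ℤ)+5 = (t:ℤ)-(2*(m:ℤ)-3)+2 by ring]
  have hC : Cf y ℓ m (t+1) = fun z => Cf y ℓ m t
      (swf (Bp y ((t:ℤ)-(2*(m:ℤ)-3)+1)) (Bp y ((t:ℤ)-(2*(m:ℤ)-3)+2)) z) := by
    funext z; simp only [Cf, if_pos hT, hsw]
  simp only [Inv] at ih ⊢
  split_ifs at ih <;> try omega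
  have step := trans_R2b hm1' hmL' (i := (t:ℤ)-(2*(m:ℤ)-3)) (by omega) (by omega) ih.2
  have hout := OutOk_step (x := Bp y ((t:ℤ)-(2*(m:ℤ)-3)+1))
    (x' := Bp y ((t:ℤ)-(2*(m:ℤ)-3)+2))
    (Bp_mem_strip (by omega) (by omega)) (Bp_mem_strip (by omega) (by omega)) ih.1
  rw [hC]
  refine ⟨hout, ?_⟩
  split_ifs <;> try omega
  · rwa [show ((t+1:ℕ):ℤ)-(2*(m:ℤ)-3) = (t:ℤ)-(2*(m:ℤ)-3)+1 by push_cast; ring]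
  · rwa [show ((m:ℤ)-2) = (t:ℤ)-(2*(m:ℤ)-3)+1 by push_cast; omega]


set_option maxHeartbeats 1000000 in
lemma mstep_X
    (hl : 2 ≤ ℓ) (hm1 : 1 ≤ m) (hmL : m ≤ ℓ) (t : ℕ) (hT : t < 3*(ℓ-1))
    (c1 : ¬ t < m-1) (c2 : ¬ t < m-1+(m-2)) (c3 : ¬ t < m-1+(m-2)+(m-2))
    (c4 : t < 3*(m-1))
    (ih : Inv y ℓ m t (Cf y ℓ m t)) : Inv y ℓ m (t+1) (Cf y ℓ m (t+1)) := by
  have hm1' : 1 ≤ (m:ℤ) := by exact_mod_cast hm1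
  have hmL' : (m:ℤ) ≤ (ℓ:ℤ) := by exact_mod_cast hmL
  by_cases e4 : t = m-1+(m-2)+(m-2)
  · -- X1
    have hsw : sw y ℓ m t = (Tq y (m:ℤ), Bp y (m:ℤ)) := by
      simp only [sw]
      rw [if_neg c1, if_neg c2, if_neg c3, if_pos c4, if_pos e4]
    have hC : Cf y ℓ m (t+1) = fun z => Cf y ℓ m t
        (swf (Tq y (m:ℤ)) (Bp y (m:ℤ)) z) := by
      funext z; simp only [Cf, if_pos hT, hsw]
    simp only [Inv] at ih ⊢
    split_ifs at ih <;> try omega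
    have step := trans_X1 (by omega) hmL' ih.2
    have hout := OutOk_step (x := Tq y (m:ℤ)) (x' := Bp y (m:ℤ))
      (Tq_mem_strip (by omega) (by omega)) (Bp_mem_strip (by omega) (by omega)) ih.1
    rw [hC]
    refine ⟨hout, ?_⟩
    split_ifs <;> try omega
  · -- X2
    have hsw : sw y ℓ m t = (Bp y ((m:ℤ)-1), Bp y (m:ℤ)) := by
      simp only [sw]
      rw [if_neg c1, if_neg c2, if_neg c3, if_pos c4, if_neg e4]
    have hC : Cf y ℓ m (t+1) = fun z => Cf y ℓ m t
        (swf (Bp y ((m:ℤ)-1)) (Bp y (m:ℤ)) z) := by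
      funext z; simp only [Cf, if_pos hT, hsw]
    simp only [Inv] at ih ⊢
    split_ifs at ih <;> try omega
    have step := trans_X2 (by omega) hmL' ih.2
    have hout := OutOk_step (x := Bp y ((m:ℤ)-1)) (x' := Bp y (m:ℤ))
      (Bp_mem_strip (by omega) (by omega)) (Bp_mem_strip (by omega) (by omega)) ih.1
    rw [hC]
    refine ⟨hout, ?_⟩
    split_ifs <;> try omega
    · rwa [show ((t+1:ℕ):ℤ)-(3*(m:ℤ)-3) = 0 by push_cast; omega]
    · exact S5_zero_SF (by omega) (by omega) step


set_option maxHeartbeats 1000000 in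
lemma mstep_R3
    (hl : 2 ≤ ℓ) (hm1 : 1 ≤ m) (hmL : m ≤ ℓ) (t : ℕ) (hT : t < 3*(ℓ-1))
    (c1 : ¬ t < m-1) (c2 : ¬ t < m-1+(m-2)) (c3 : ¬ t < m-1+(m-2)+(m-2))
    (c4 : ¬ t < 3*(m-1)) (c5 : t < 3*(m-1)+(ℓ-m))
    (ih : Inv y ℓ m t (Cf y ℓ m t)) : Inv y ℓ m (t+1) (Cf y ℓ m (t+1)) := by
  have hm1' : 1 ≤ (m:ℤ) := by exact_mod_cast hm1
  have hmL' : (m:ℤ) ≤ (ℓ:ℤ) := by exact_mod_cast hmL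
  -- R3
  have hsw : sw y ℓ m t
      = (Tq y ((m:ℤ)+((t:ℤ)-(3*(m:ℤ)-3))), Tq y ((m:ℤ)+((t:ℤ)-(3*(m:ℤ)-3))+1)) := by
    simp only [sw]
    rw [if_neg c1, if_neg c2, if_neg c3, if_neg c4, if_pos c5,
      show (t:ℤ)-2*(m:ℤ)+3 = (m:ℤ)+((t:ℤ)-(3*(m:ℤ)-3)) by ring,
      show (t:ℤ)-2*(m:ℤ)+4 = (m:ℤ)+((t:ℤ)-(3*(m:ℤ)-3))+1 by ring]
  have hC : Cf y ℓ m (t+1) = fun z => Cf y ℓ m t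
      (swf (Tq y ((m:ℤ)+((t:ℤ)-(3*(m:ℤ)-3)))) (Tq y ((m:ℤ)+((t:ℤ)-(3*(m:ℤ)-3))+1)) z) := by
    funext z; simp only [Cf, if_pos hT, hsw]
  simp only [Inv] at ih ⊢
  split_ifs at ih <;> try omega
  have step := trans_R3 hm1' hmL' (s := (t:ℤ)-(3*(m:ℤ)-3)) (by omega) (by omega) ih.2
  have hout := OutOk_step (x := Tq y ((m:ℤ)+((t:ℤ)-(3*(m:ℤ)-3))))
    (x' := Tq y ((m:ℤ)+((t:ℤ)-(3*(m:ℤ)-3))+1))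
    (Tq_mem_strip (by omega) (by omega)) (Tq_mem_strip (by omega) (by omega)) ih.1
  rw [hC]
  refine ⟨hout, ?_⟩
  split_ifs <;> try omega
  · rwa [show ((t+1:ℕ):ℤ)-(3*(m:ℤ)-3) = (t:ℤ)-(3*(m:ℤ)-3)+1 by push_cast; ring]
  · rw [show (t:ℤ)-(3*(m:ℤ)-3)+1 = (ℓ:ℤ)-(m:ℤ) by push_cast; omega] at step
    have s6 := S5_to_S6 hm1' hmL' step
    rwa [show ((t+1:ℕ):ℤ)-(2*(m:ℤ)+(ℓ:ℤ)-3) = 0 by push_cast; omega]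
  · rw [show (t:ℤ)-(3*(m:ℤ)-3)+1 = (ℓ:ℤ)-(m:ℤ) by push_cast; omega] at step
    have s6 := S5_to_S6 hm1' hmL' step
    rw [show (0:ℤ) = (ℓ:ℤ)-(m:ℤ)-1 by omega] at s6
    have s7 := S6_to_S7 hm1' (by omega) s6
    rwa [show (0:ℤ) = (ℓ:ℤ)-(m:ℤ)-1 by omega] at s7


set_option maxHeartbeats 1000000 in
lemma mstep_R4a
    (hl : 2 ≤ ℓ) (hm1 : 1 ≤ m) (hmL : m ≤ ℓ) (t : ℕ) (hT : t < 3*(ℓ-1))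
    (c1 : ¬ t < m-1) (c2 : ¬ t < m-1+(m-2)) (c3 : ¬ t < m-1+(m-2)+(m-2))
    (c4 : ¬ t < 3*(m-1)) (c5 : ¬ t < 3*(m-1)+(ℓ-m)) (c6 : t < 3*(m-1)+(ℓ-m)+(ℓ-m-1))
    (ih : Inv y ℓ m t (Cf y ℓ m t)) : Inv y ℓ m (t+1) (Cf y ℓ m (t+1)) := by
  have hm1' : 1 ≤ (m:ℤ) := by exact_mod_cast hm1
  have hmL' : (m:ℤ) ≤ (ℓ:ℤ) := by exact_mod_cast hmL
  -- R4a
  have hsw : sw y ℓ m t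
      = (Tq y ((ℓ:ℤ)-1-((t:ℤ)-(2*(m:ℤ)+(ℓ:ℤ)-3))), Bp y ((ℓ:ℤ)-1-((t:ℤ)-(2*(m:ℤ)+(ℓ:ℤ)-3)))) := by
    simp only [sw]
    rw [if_neg c1, if_neg c2, if_neg c3, if_neg c4, if_neg c5, if_pos c6,
      show 2*(ℓ:ℤ)+2*(m:ℤ)-(t:ℤ)-4 = (ℓ:ℤ)-1-((t:ℤ)-(2*(m:ℤ)+(ℓ:ℤ)-3)) by ring]
  have hC : Cf y ℓ m (t+1) = fun z => Cf y ℓ m t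
      (swf (Tq y ((ℓ:ℤ)-1-((t:ℤ)-(2*(m:ℤ)+(ℓ:ℤ)-3))))
        (Bp y ((ℓ:ℤ)-1-((t:ℤ)-(2*(m:ℤ)+(ℓ:ℤ)-3)))) z) := by
    funext z; simp only [Cf, if_pos hT, hsw]
  simp only [Inv] at ih ⊢
  split_ifs at ih <;> try omega
  have step := trans_R4a hm1' hmL' (i := (t:ℤ)-(2*(m:ℤ)+(ℓ:ℤ)-3)) (by omega) (by omega) ih.2
  have hout := OutOk_step (x := Tq y ((ℓ:ℤ)-1-((t:ℤ)-(2*(m:ℤ)+(ℓ:ℤ)-3))))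
    (x' := Bp y ((ℓ:ℤ)-1-((t:ℤ)-(2*(m:ℤ)+(ℓ:ℤ)-3))))
    (Tq_mem_strip (by omega) (by omega)) (Bp_mem_strip (by omega) (by omega)) ih.1
  rw [hC]
  refine ⟨hout, ?_⟩
  split_ifs <;> try omega
  · rwa [show ((t+1:ℕ):ℤ)-(2*(m:ℤ)+(ℓ:ℤ)-3) = (t:ℤ)-(2*(m:ℤ)+(ℓ:ℤ)-3)+1 by push_cast; ring]
  · rw [show (t:ℤ)-(2*(m:ℤ)+(ℓ:ℤ)-3)+1 = (ℓ:ℤ)-(m:ℤ)-1 by push_cast; omega] at step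
    have s7 := S6_to_S7 hm1' (by omega) step
    rwa [show ((t+1:ℕ):ℤ)-((m:ℤ)+2*(ℓ:ℤ)-4) = 0 by push_cast; omega]


set_option maxHeartbeats 1000000 in
lemma mstep_R4b
    (hl : 2 ≤ ℓ) (hm1 : 1 ≤ m) (hmL : m ≤ ℓ) (t : ℕ) (hT : t < 3*(ℓ-1))
    (c1 : ¬ t < m-1) (c2 : ¬ t < m-1+(m-2)) (c3 : ¬ t < m-1+(m-2)+(m-2))
    (c4 : ¬ t < 3*(m-1)) (c5 : ¬ t < 3*(m-1)+(ℓ-m)) (c6 : ¬ t < 3*(m-1)+(ℓ-m)+(ℓ-m-1))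
    (c7 : t < 3*(m-1)+(ℓ-m)+(ℓ-m-1)+(ℓ-m-1))
    (ih : Inv y ℓ m t (Cf y ℓ m t)) : Inv y ℓ m (t+1) (Cf y ℓ m (t+1)) := by
  have hm1' : 1 ≤ (m:ℤ) := by exact_mod_cast hm1
  have hmL' : (m:ℤ) ≤ (ℓ:ℤ) := by exact_mod_cast hmL
  -- R4b
  have hsw : sw y ℓ m t
      = (Bp y ((ℓ:ℤ)-1-((t:ℤ)-((m:ℤ)+2*(ℓ:ℤ)-4))), Bp y ((ℓ:ℤ)-((t:ℤ)-((m:ℤ)+2*(ℓ:ℤ)-4)))) := by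
    simp only [sw]
    rw [if_neg c1, if_neg c2, if_neg c3, if_neg c4, if_neg c5, if_neg c6, if_pos c7,
      show 3*(ℓ:ℤ)+(m:ℤ)-(t:ℤ)-5 = (ℓ:ℤ)-1-((t:ℤ)-((m:ℤ)+2*(ℓ:ℤ)-4)) by ring,
      show 3*(ℓ:ℤ)+(m:ℤ)-(t:ℤ)-4 = (ℓ:ℤ)-((t:ℤ)-((m:ℤ)+2*(ℓ:ℤ)-4)) by ring]
  have hC : Cf y ℓ m (t+1) = fun z => Cf y ℓ m t
      (swf (Bp y ((ℓ:ℤ)-1-((t:ℤ)-((m:ℤ)+2*(ℓ:ℤ)-4))))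
        (Bp y ((ℓ:ℤ)-((t:ℤ)-((m:ℤ)+2*(ℓ:ℤ)-4)))) z) := by
    funext z; simp only [Cf, if_pos hT, hsw]
  simp only [Inv] at ih ⊢
  split_ifs at ih <;> try omega
  have step := trans_R4b hm1' hmL' (i := (t:ℤ)-((m:ℤ)+2*(ℓ:ℤ)-4)) (by omega) (by omega) ih.2
  have hout := OutOk_step (x := Bp y ((ℓ:ℤ)-1-((t:ℤ)-((m:ℤ)+2*(ℓ:ℤ)-4))))
    (x' := Bp y ((ℓ:ℤ)-((t:ℤ)-((m:ℤ)+2*(ℓ:ℤ)-4))))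
    (Bp_mem_strip (by omega) (by omega)) (Bp_mem_strip (by omega) (by omega)) ih.1
  rw [hC]
  refine ⟨hout, ?_⟩
  split_ifs <;> try omega
  · rwa [show ((t+1:ℕ):ℤ)-((m:ℤ)+2*(ℓ:ℤ)-4) = (t:ℤ)-((m:ℤ)+2*(ℓ:ℤ)-4)+1 by push_cast; ring]
  · rwa [show ((ℓ:ℤ)-(m:ℤ)-1) = (t:ℤ)-((m:ℤ)+2*(ℓ:ℤ)-4)+1 by push_cast; omega]


set_option maxHeartbeats 1000000 in
lemma mstep_Y
    (hl : 2 ≤ ℓ) (hm1 : 1 ≤ m) (hmL : m ≤ ℓ) (t : ℕ) (hT : t < 3*(ℓ-1))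
    (c1 : ¬ t < m-1) (c2 : ¬ t < m-1+(m-2)) (c3 : ¬ t < m-1+(m-2)+(m-2))
    (c4 : ¬ t < 3*(m-1)) (c5 : ¬ t < 3*(m-1)+(ℓ-m)) (c6 : ¬ t < 3*(m-1)+(ℓ-m)+(ℓ-m-1))
    (c7 : ¬ t < 3*(m-1)+(ℓ-m)+(ℓ-m-1)+(ℓ-m-1))
    (ih : Inv y ℓ m t (Cf y ℓ m t)) : Inv y ℓ m (t+1) (Cf y ℓ m (t+1)) := by
  have hm1' : 1 ≤ (m:ℤ) := by exact_mod_cast hm1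
  have hmL' : (m:ℤ) ≤ (ℓ:ℤ) := by exact_mod_cast hmL
  by_cases e8 : t = 3*(m-1)+(ℓ-m)+(ℓ-m-1)+(ℓ-m-1)
  · -- Y1
    have hsw : sw y ℓ m t = (Tq y (m:ℤ), Bp y (m:ℤ)) := by
      simp only [sw]
      rw [if_neg c1, if_neg c2, if_neg c3, if_neg c4, if_neg c5, if_neg c6, if_neg c7,
        if_pos e8]
    have hC : Cf y ℓ m (t+1) = fun z => Cf y ℓ m t
        (swf (Tq y (m:ℤ)) (Bp y (m:ℤ)) z) := by
      funext z; simp only [Cf, if_pos hT, hsw]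
    simp only [Inv] at ih ⊢
    split_ifs at ih <;> try omega
    have step := trans_Y1 hm1' (by omega) ih.2
    have hout := OutOk_step (x := Tq y (m:ℤ)) (x' := Bp y (m:ℤ))
      (Tq_mem_strip (by omega) (by omega)) (Bp_mem_strip (by omega) (by omega)) ih.1
    rw [hC]
    refine ⟨hout, ?_⟩
    split_ifs <;> try omega
  · -- Y2
    have hsw : sw y ℓ m t = (Bp y (m:ℤ), Bp y ((m:ℤ)+1)) := by
      simp only [sw]
      rw [if_neg c1, if_neg c2, if_neg c3, if_neg c4, if_neg c5, if_neg c6, if_neg c7,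
        if_neg e8]
    have hC : Cf y ℓ m (t+1) = fun z => Cf y ℓ m t
        (swf (Bp y (m:ℤ)) (Bp y ((m:ℤ)+1)) z) := by
      funext z; simp only [Cf, if_pos hT, hsw]
    simp only [Inv] at ih ⊢
    split_ifs at ih <;> try omega
    have step := trans_Y2 hm1' (by omega) ih.2
    have hout := OutOk_step (x := Bp y (m:ℤ)) (x' := Bp y ((m:ℤ)+1))
      (Bp_mem_strip (by omega) (by omega)) (Bp_mem_strip (by omega) (by omega)) ih.1
    rw [hC]
    refine ⟨hout, ?_⟩
    split_ifs <;> try omega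


end MasterSteps

lemma master (y : ℤ × ℤ) (ℓ m : ℕ) (hl : 2 ≤ ℓ) (hm1 : 1 ≤ m) (hmL : m ≤ ℓ) :
    ∀ t, Inv y ℓ m t (Cf y ℓ m t) := by
  have hm1' : 1 ≤ (m:ℤ) := by exact_mod_cast hm1
  have hmL' : (m:ℤ) ≤ (ℓ:ℤ) := by exact_mod_cast hmL
  intro t
  induction t with
  | zero =>
      simp only [Inv, Cf]
      by_cases hm2 : 2 ≤ m
      · rw [if_pos (by omega)]
        refine ⟨OutOk_id, ?_⟩
        have := base_S1 (y := y) (ℓ := ℓ) (m := (m:ℤ)) hm1' hmL'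
        rwa [show (0:ℤ) = ((0:ℕ):ℤ) by norm_num] at this
      · rw [if_neg (by omega), if_neg (by omega), if_neg (by omega), if_neg (by omega),
          if_pos (by omega)]
        refine ⟨OutOk_id, ?_⟩
        have := base_S5 (y := y) (ℓ := ℓ) (m := (m:ℤ)) (by omega) hmL'
        rwa [show (0:ℤ) = ((0:ℕ):ℤ) - (3*(m:ℤ)-3) by push_cast; omega] at this
  | succ t ih =>
      by_cases hT : t < 3*(ℓ-1)
      swap
      · have hC : Cf y ℓ m (t+1) = Cf y ℓ m t := funext fun z => by
          simp only [Cf, if_neg hT]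
        rw [hC]
        simp only [Inv] at ih ⊢
        rw [if_neg (by omega), if_neg (by omega), if_neg (by omega), if_neg (by omega),
          if_neg (by omega), if_neg (by omega), if_neg (by omega), if_neg (by omega)] at ih ⊢
        exact ih
      by_cases c1 : t < m-1
      · exact mstep_R1 y ℓ m hl hm1 hmL t hT c1 ih
      by_cases c2 : t < m-1+(m-2)
      · exact mstep_R2a y ℓ m hl hm1 hmL t hT c1 c2 ih
      by_cases c3 : t < m-1+(m-2)+(m-2)
      · exact mstep_R2b y ℓ m hl hm1 hmL t hT c1 c2 c3 ih
      by_cases c4 : t < 3*(m-1)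
      · exact mstep_X y ℓ m hl hm1 hmL t hT c1 c2 c3 c4 ih
      by_cases c5 : t < 3*(m-1)+(ℓ-m)
      · exact mstep_R3 y ℓ m hl hm1 hmL t hT c1 c2 c3 c4 c5 ih
      by_cases c6 : t < 3*(m-1)+(ℓ-m)+(ℓ-m-1)
      · exact mstep_R4a y ℓ m hl hm1 hmL t hT c1 c2 c3 c4 c5 c6 ih
      by_cases c7 : t < 3*(m-1)+(ℓ-m)+(ℓ-m-1)+(ℓ-m-1)
      · exact mstep_R4b y ℓ m hl hm1 hmL t hT c1 c2 c3 c4 c5 c6 c7 ih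
      exact mstep_Y y ℓ m hl hm1 hmL t hT c1 c2 c3 c4 c5 c6 c7 ih

end RowEx
namespace RowEx

/-- the data needed for legality of step `t` -/
def LegalPack (y : ℤ × ℤ) (ℓ m : ℕ) (t : ℕ) (C : (ℤ × ℤ) → (ℤ × ℤ)) : Prop :=
  (sw y ℓ m t).1 ∈ strip2 y ℓ ∧ (sw y ℓ m t).2 ∈ strip2 y ℓ ∧
  d1 (sw y ℓ m t).1 (sw y ℓ m t).2 = 1 ∧
  (∃ z ∈ nbrs2 (sw y ℓ m t).1, z ∈ strip2 y ℓ ∧ z ≠ (sw y ℓ m t).2 ∧ C z ∈ Hs y ℓ (m:ℤ)) ∧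
  (∃ z ∈ nbrs2 (sw y ℓ m t).2, z ∈ strip2 y ℓ ∧ z ≠ (sw y ℓ m t).1 ∧ C z ∈ Hs y ℓ (m:ℤ))

set_option maxHeartbeats 1000000 in
lemma step_legal (y : ℤ × ℤ) (ℓ m : ℕ) (hl : 2 ≤ ℓ) (hm1 : 1 ≤ m) (hmL : m ≤ ℓ)
    (t : ℕ) (hT : t < 3*(ℓ-1)) (C : (ℤ × ℤ) → (ℤ × ℤ)) (hInv : Inv y ℓ m t C) :
    LegalPack y ℓ m t C := by
  simp only [Inv] at hInv
  unfold LegalPack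
  by_cases c1 : t < m-1
  · have hsw : sw y ℓ m t = (Tq y ((m:ℤ)-1-t), Tq y ((m:ℤ)-t)) := by
      simp only [sw]; rw [if_pos c1]
    rw [if_pos c1] at hInv
    obtain ⟨-, h1, h2, h3, h4, h5⟩ := hInv
    rw [hsw]
    exact ⟨Tq_mem_strip (by omega) (by omega), Tq_mem_strip (by omega) (by omega),
      d1_Tq_Tq (by omega),
      ⟨Bp y ((m:ℤ)-1-t), Bp_mem_nbrs_Tq, Bp_mem_strip (by omega) (by omega), Bp_ne_Tq,
        h5 _ (by omega) (by omega)⟩,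
      ⟨Bp y ((m:ℤ)-t), Bp_mem_nbrs_Tq, Bp_mem_strip (by omega) (by omega), Bp_ne_Tq,
        h5 _ (by omega) (by omega)⟩⟩
  by_cases c2 : t < m-1+(m-2)
  · have hsw : sw y ℓ m t
        = (Tq y ((t:ℤ)-((m:ℤ)-1)+2), Bp y ((t:ℤ)-((m:ℤ)-1)+2)) := by
      simp only [sw]
      rw [if_neg c1, if_pos c2, show (t:ℤ)-(m:ℤ)+3 = (t:ℤ)-((m:ℤ)-1)+2 by ring]
    split_ifs at hInv <;> try omega
    obtain ⟨-, h1, h2, h3, h4, h5, h6⟩ := hInv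
    rw [hsw]
    exact ⟨Tq_mem_strip (by omega) (by omega), Bp_mem_strip (by omega) (by omega),
      d1_Tq_Bp,
      ⟨Tq y ((t:ℤ)-((m:ℤ)-1)+2-1), Tq_pred_mem_nbrs, Tq_mem_strip (by omega) (by omega),
        Tq_ne_Bp, h1 _ (by omega) (by omega)⟩,
      ⟨Bp y ((t:ℤ)-((m:ℤ)-1)+2+1), Bp_succ_mem_nbrs, Bp_mem_strip (by omega) (by omega),
        Bp_ne_Tq, h6 _ (by omega) (by omega)⟩⟩
  by_cases c3 : t < m-1+(m-2)+(m-2)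
  · have hsw : sw y ℓ m t
        = (Bp y ((t:ℤ)-(2*(m:ℤ)-3)+1), Bp y ((t:ℤ)-(2*(m:ℤ)-3)+2)) := by
      simp only [sw]
      rw [if_neg c1, if_neg c2, if_pos c3,
        show (t:ℤ)-2*(m:ℤ)+4 = (t:ℤ)-(2*(m:ℤ)-3)+1 by ring,
        show (t:ℤ)-2*(m:ℤ)+5 = (t:ℤ)-(2*(m:ℤ)-3)+2 by ring]
    split_ifs at hInv <;> try omega
    obtain ⟨-, h1, h2, h3, h4, h5, h6, h7⟩ := hInv
    rw [hsw]
    exact ⟨Bp_mem_strip (by omega) (by omega), Bp_mem_strip (by omega) (by omega),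
      d1_Bp_Bp (by omega),
      ⟨Tq y ((t:ℤ)-(2*(m:ℤ)-3)+1), Tq_mem_nbrs_Bp, Tq_mem_strip (by omega) (by omega),
        Tq_ne_Bp, h1 _ (by omega) (by omega)⟩,
      ⟨Tq y ((t:ℤ)-(2*(m:ℤ)-3)+2), Tq_mem_nbrs_Bp, Tq_mem_strip (by omega) (by omega),
        Tq_ne_Bp, h1 _ (by omega) (by omega)⟩⟩
  by_cases c4 : t < 3*(m-1)
  · by_cases e4 : t = m-1+(m-2)+(m-2)
    · have hsw : sw y ℓ m t = (Tq y (m:ℤ), Bp y (m:ℤ)) := by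
        simp only [sw]
        rw [if_neg c1, if_neg c2, if_neg c3, if_pos c4, if_pos e4]
      split_ifs at hInv <;> try omega
      obtain ⟨-, h1, h2, h3, h4, h5, h6, h7⟩ := hInv
      rw [hsw]
      exact ⟨Tq_mem_strip (by omega) (by omega), Bp_mem_strip (by omega) (by omega),
        d1_Tq_Bp,
        ⟨Tq y ((m:ℤ)-1), Tq_pred_mem_nbrs, Tq_mem_strip (by omega) (by omega),
          Tq_ne_Bp, h1 _ (by omega) (by omega)⟩,
        ⟨Bp y ((m:ℤ)-1), Bp_pred_mem_nbrs, Bp_mem_strip (by omega) (by omega),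
          Bp_ne_Tq, by rwa [show (m:ℤ)-1 = (m:ℤ)-2+1 by ring]⟩⟩
    · have hsw : sw y ℓ m t = (Bp y ((m:ℤ)-1), Bp y (m:ℤ)) := by
        simp only [sw]
        rw [if_neg c1, if_neg c2, if_neg c3, if_pos c4, if_neg e4]
      split_ifs at hInv <;> try omega
      obtain ⟨-, h1, h2, h3, h4, h5, h6⟩ := hInv
      rw [hsw]
      exact ⟨Bp_mem_strip (by omega) (by omega), Bp_mem_strip (by omega) (by omega),
        d1_Bp_Bp (by omega),
        ⟨Tq y ((m:ℤ)-1), Tq_mem_nbrs_Bp, Tq_mem_strip (by omega) (by omega),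
          Tq_ne_Bp, h1 _ (by omega) (by omega)⟩,
        ⟨Tq y (m:ℤ), Tq_mem_nbrs_Bp, Tq_mem_strip (by omega) (by omega),
          Tq_ne_Bp, h1 _ (by omega) (by omega)⟩⟩
  by_cases c5 : t < 3*(m-1)+(ℓ-m)
  · have hsw : sw y ℓ m t
        = (Tq y ((m:ℤ)+((t:ℤ)-(3*(m:ℤ)-3))), Tq y ((m:ℤ)+((t:ℤ)-(3*(m:ℤ)-3))+1)) := by
      simp only [sw]
      rw [if_neg c1, if_neg c2, if_neg c3, if_neg c4, if_pos c5,
        show (t:ℤ)-2*(m:ℤ)+3 = (m:ℤ)+((t:ℤ)-(3*(m:ℤ)-3)) by ring,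
        show (t:ℤ)-2*(m:ℤ)+4 = (m:ℤ)+((t:ℤ)-(3*(m:ℤ)-3))+1 by ring]
    split_ifs at hInv <;> try omega
    obtain ⟨-, h1, h2, h3, h4, h5, h6⟩ := hInv
    rw [hsw]
    exact ⟨Tq_mem_strip (by omega) (by omega), Tq_mem_strip (by omega) (by omega),
      d1_Tq_Tq (by omega),
      ⟨Bp y ((m:ℤ)+((t:ℤ)-(3*(m:ℤ)-3))), Bp_mem_nbrs_Tq, Bp_mem_strip (by omega) (by omega),
        Bp_ne_Tq, h6 _ (by omega) (by omega)⟩,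
      ⟨Bp y ((m:ℤ)+((t:ℤ)-(3*(m:ℤ)-3))+1), Bp_mem_nbrs_Tq, Bp_mem_strip (by omega) (by omega),
        Bp_ne_Tq, h6 _ (by omega) (by omega)⟩⟩
  by_cases c6 : t < 3*(m-1)+(ℓ-m)+(ℓ-m-1)
  · have hsw : sw y ℓ m t
        = (Tq y ((ℓ:ℤ)-1-((t:ℤ)-(2*(m:ℤ)+(ℓ:ℤ)-3))), Bp y ((ℓ:ℤ)-1-((t:ℤ)-(2*(m:ℤ)+(ℓ:ℤ)-3)))) := by
      simp only [sw]
      rw [if_neg c1, if_neg c2, if_neg c3, if_neg c4, if_neg c5, if_pos c6,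
        show 2*(ℓ:ℤ)+2*(m:ℤ)-(t:ℤ)-4 = (ℓ:ℤ)-1-((t:ℤ)-(2*(m:ℤ)+(ℓ:ℤ)-3)) by ring]
    split_ifs at hInv <;> try omega
    obtain ⟨-, h1, h2, h3, h4, h5, h6, h7⟩ := hInv
    rw [hsw]
    refine ⟨Tq_mem_strip (by omega) (by omega), Bp_mem_strip (by omega) (by omega),
      d1_Tq_Bp,
      ⟨Tq y ((ℓ:ℤ)-1-((t:ℤ)-(2*(m:ℤ)+(ℓ:ℤ)-3))+1), Tq_succ_mem_nbrs,
        Tq_mem_strip (by omega) (by omega), Tq_ne_Bp, h3 _ (by omega) (by omega)⟩,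
      ⟨Bp y ((ℓ:ℤ)-1-((t:ℤ)-(2*(m:ℤ)+(ℓ:ℤ)-3))-1), Bp_pred_mem_nbrs,
        Bp_mem_strip (by omega) (by omega), Bp_ne_Tq, h5 _ (by omega) (by omega)⟩⟩
  by_cases c7 : t < 3*(m-1)+(ℓ-m)+(ℓ-m-1)+(ℓ-m-1)
  · have hsw : sw y ℓ m t
        = (Bp y ((ℓ:ℤ)-1-((t:ℤ)-((m:ℤ)+2*(ℓ:ℤ)-4))), Bp y ((ℓ:ℤ)-((t:ℤ)-((m:ℤ)+2*(ℓ:ℤ)-4)))) := by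
      simp only [sw]
      rw [if_neg c1, if_neg c2, if_neg c3, if_neg c4, if_neg c5, if_neg c6, if_pos c7,
        show 3*(ℓ:ℤ)+(m:ℤ)-(t:ℤ)-5 = (ℓ:ℤ)-1-((t:ℤ)-((m:ℤ)+2*(ℓ:ℤ)-4)) by ring,
        show 3*(ℓ:ℤ)+(m:ℤ)-(t:ℤ)-4 = (ℓ:ℤ)-((t:ℤ)-((m:ℤ)+2*(ℓ:ℤ)-4)) by ring]
    split_ifs at hInv <;> try omega
    obtain ⟨-, h1, h2, h3, h4, h5, h6, h7, h8⟩ := hInv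
    rw [hsw]
    exact ⟨Bp_mem_strip (by omega) (by omega), Bp_mem_strip (by omega) (by omega),
      d1_Bp_Bp (by omega),
      ⟨Tq y ((ℓ:ℤ)-1-((t:ℤ)-((m:ℤ)+2*(ℓ:ℤ)-4))), Tq_mem_nbrs_Bp,
        Tq_mem_strip (by omega) (by omega), Tq_ne_Bp, h3 _ (by omega) (by omega)⟩,
      ⟨Tq y ((ℓ:ℤ)-((t:ℤ)-((m:ℤ)+2*(ℓ:ℤ)-4))), Tq_mem_nbrs_Bp,
        Tq_mem_strip (by omega) (by omega), Tq_ne_Bp, h3 _ (by omega) (by omega)⟩⟩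
  by_cases e8 : t = 3*(m-1)+(ℓ-m)+(ℓ-m-1)+(ℓ-m-1)
  · have hsw : sw y ℓ m t = (Tq y (m:ℤ), Bp y (m:ℤ)) := by
      simp only [sw]
      rw [if_neg c1, if_neg c2, if_neg c3, if_neg c4, if_neg c5, if_neg c6, if_neg c7, if_pos e8]
    split_ifs at hInv <;> try omega
    obtain ⟨-, h1, h2, h3, h4, h5, h6, h7, h8⟩ := hInv
    rw [show (ℓ:ℤ)-((ℓ:ℤ)-(m:ℤ)-1) = (m:ℤ)+1 by ring] at h7
    rw [hsw]
    exact ⟨Tq_mem_strip (by omega) (by omega), Bp_mem_strip (by omega) (by omega),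
      d1_Tq_Bp,
      ⟨Tq y ((m:ℤ)+1), Tq_succ_mem_nbrs, Tq_mem_strip (by omega) (by omega),
        Tq_ne_Bp, h3 _ (by omega) (by omega)⟩,
      ⟨Bp y ((m:ℤ)+1), Bp_succ_mem_nbrs, Bp_mem_strip (by omega) (by omega),
        Bp_ne_Tq, h7⟩⟩
  · have hsw : sw y ℓ m t = (Bp y (m:ℤ), Bp y ((m:ℤ)+1)) := by
      simp only [sw]
      rw [if_neg c1, if_neg c2, if_neg c3, if_neg c4, if_neg c5, if_neg c6, if_neg c7, if_neg e8]
    split_ifs at hInv <;> try omega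
    obtain ⟨-, h1, h2, h3, h4, h5⟩ := hInv
    rw [hsw]
    exact ⟨Bp_mem_strip (by omega) (by omega), Bp_mem_strip (by omega) (by omega),
      d1_Bp_Bp (by omega),
      ⟨Tq y (m:ℤ), Tq_mem_nbrs_Bp, Tq_mem_strip (by omega) (by omega),
        Tq_ne_Bp, h1 _ (by omega) (by omega)⟩,
      ⟨Tq y ((m:ℤ)+1), Tq_mem_nbrs_Bp, Tq_mem_strip (by omega) (by omega),
        Tq_ne_Bp, h1 _ (by omega) (by omega)⟩⟩

end RowEx
namespace RowEx

/-- index of an empty site in the top row -/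
def hidx (y : ℤ × ℤ) (ℓ : ℕ) (η : ℤ × ℤ → Bool) : ℕ :=
  (if h : ∃ k : ℕ, k < ℓ ∧ η (y.1 + ((k:ℤ)+1), y.2+1) = false then Nat.find h else 0) + 1

lemma hidx_spec {y : ℤ × ℤ} {ℓ : ℕ} {η : ℤ × ℤ → Bool} (hη : η ∈ DomRows y ℓ) :
    1 ≤ hidx y ℓ η ∧ hidx y ℓ η ≤ ℓ ∧ η (Tq y ((hidx y ℓ η : ℕ):ℤ)) = false := by
  obtain ⟨h0, a, ha1, ha2, ha3⟩ := hη
  have hex : ∃ k : ℕ, k < ℓ ∧ η (y.1 + ((k:ℤ)+1), y.2+1) = false := by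
    refine ⟨(a-1).toNat, by omega, ?_⟩
    rw [show (((a-1).toNat : ℕ):ℤ) + 1 = a by omega]
    exact ha3
  have hspec := Nat.find_spec hex
  unfold hidx
  rw [dif_pos hex]
  refine ⟨by omega, by omega, ?_⟩
  show η (y.1 + ((Nat.find hex + 1 : ℕ):ℤ), y.2+1) = false
  rw [show ((Nat.find hex + 1 : ℕ):ℤ) = ((Nat.find hex : ℕ):ℤ)+1 by push_cast; ring]
  exact hspec.2

lemma Hs_empty {y : ℤ × ℤ} {ℓ : ℕ} {η : ℤ × ℤ → Bool} (hη : η ∈ DomRows y ℓ)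
    {z : ℤ × ℤ} (hz : z ∈ Hs y ℓ ((hidx y ℓ η : ℕ):ℤ)) : η z = false := by
  rcases hz with ⟨j, hj1, hj2, rfl⟩ | rfl
  · exact hη.1 j hj1 hj2
  · exact (hidx_spec hη).2.2

/-- the move -/
def Mv (y : ℤ × ℤ) (ℓ : ℕ) (t : ℕ) (η : ℤ × ℤ → Bool) : ℤ × ℤ → Bool :=
  fun z => η (Cf y ℓ (hidx y ℓ η) t z)

theorem exchange_rows' :
    ∃ C : ℝ, 0 < C ∧ ∀ ℓ : ℕ, 2 ≤ ℓ → ∀ y : ℤ × ℤ,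
      ∃ (T : ℕ) (M : ℕ → (ℤ × ℤ → Bool) → (ℤ × ℤ → Bool)),
        (T : ℝ) ≤ C * ℓ ∧
        IsTMove2 (strip2 y ℓ) (DomRows y ℓ) M T ∧
        LossLE2 (DomRows y ℓ) M T (C * Real.logb 2 ℓ) ∧
        ∀ η ∈ DomRows y ℓ,
          (∀ a : ℤ, 1 ≤ a → a ≤ (ℓ : ℤ) →
            M T η (y.1 + a, y.2) = η (y.1 + a, y.2 + 1) ∧
            M T η (y.1 + a, y.2 + 1) = η (y.1 + a, y.2)) ∧
          ∀ z : ℤ × ℤ, z ∉ strip2 y ℓ → M T η z = η z := by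
  refine ⟨3, by norm_num, ?_⟩
  intro ℓ hl y
  refine ⟨3*(ℓ-1), Mv y ℓ, ?_, ?_, ?_, ?_⟩
  · -- time bound
    have h : (3*(ℓ-1) : ℕ) ≤ 3*ℓ := by omega
    calc ((3*(ℓ-1) : ℕ) : ℝ) ≤ ((3*ℓ : ℕ) : ℝ) := by exact_mod_cast h
      _ = 3 * (ℓ:ℝ) := by push_cast; ring
  · -- IsTMove2
    intro η hη
    have hm1 : 1 ≤ hidx y ℓ η := (hidx_spec hη).1
    have hmL : hidx y ℓ η ≤ ℓ := (hidx_spec hη).2.1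
    set m := hidx y ℓ η with hm
    constructor
    · funext z; rfl
    · intro t ht
      right
      have hInv := master y ℓ m hl hm1 hmL t
      have pack := step_legal y ℓ m hl hm1 hmL t ht _ hInv
      obtain ⟨hx, hx', hd, ⟨w1, hw1n, hw1s, hw1ne, hw1h⟩, ⟨w2, hw2n, hw2s, hw2ne, hw2h⟩⟩ := pack
      refine ⟨(sw y ℓ m t).1, (sw y ℓ m t).2, hx, hx', hd,
        ⟨w1, hw1n, hw1s, hw1ne, Hs_empty hη hw1h⟩,
        ⟨w2, hw2n, hw2s, hw2ne, Hs_empty hη hw2h⟩, ?_⟩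
      funext z
      have hCs : Cf y ℓ m (t+1) z
          = Cf y ℓ m t (swf (sw y ℓ m t).1 (sw y ℓ m t).2 z) := by
        simp only [Cf, if_pos ht]
      show η (Cf y ℓ m (t+1) z) = _
      rw [hCs]
      simp only [Mv, swap2, swf, ← hm]
      split_ifs <;> rfl
  · -- loss
    intro t ht η' hη'
    have hsub : {η | η ∈ DomRows y ℓ ∧ Mv y ℓ t η = Mv y ℓ t η' ∧
        Mv y ℓ (t+1) η = Mv y ℓ (t+1) η'}
        ⊆ (fun k => fun z => Mv y ℓ t η' (Df y ℓ k t z)) '' (Set.Icc 1 ℓ) := by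
      rintro η ⟨hdom, he1, he2⟩
      refine ⟨hidx y ℓ η, Set.mem_Icc.mpr ⟨(hidx_spec hdom).1, (hidx_spec hdom).2.1⟩, ?_⟩
      funext z
      show Mv y ℓ t η' (Df y ℓ (hidx y ℓ η) t z) = η z
      rw [← he1]
      show η (Cf y ℓ (hidx y ℓ η) t (Df y ℓ (hidx y ℓ η) t z)) = η z
      rw [Cf_Df]
    have hfin : (Set.Icc 1 ℓ).Finite := Set.finite_Icc _ _
    have h1 : {η | η ∈ DomRows y ℓ ∧ Mv y ℓ t η = Mv y ℓ t η' ∧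
        Mv y ℓ (t+1) η = Mv y ℓ (t+1) η'}.ncard ≤ ℓ := by
      have ha := Set.ncard_le_ncard hsub (hfin.image _)
      have hb := Set.ncard_image_le (f := fun k => fun z => Mv y ℓ t η' (Df y ℓ k t z)) hfin
      have hc : (Set.Icc 1 ℓ).ncard = ℓ := by
        rw [← Finset.coe_Icc, Set.ncard_coe_finset, Nat.card_Icc]; omega
      omega
    have hl1 : (1:ℝ) ≤ (ℓ:ℝ) := by exact_mod_cast Nat.one_le_of_lt hl
    have hpow : (2:ℝ) ^ ((3:ℝ) * Real.logb 2 ℓ) = ((ℓ:ℝ)) ^ (3:ℕ) := by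
      rw [mul_comm, Real.rpow_mul (by norm_num : (0:ℝ) ≤ 2),
        Real.rpow_logb (by norm_num) (by norm_num) (by positivity),
        ← Real.rpow_natCast ((ℓ:ℝ)) 3]
      norm_num
    calc ({η | η ∈ DomRows y ℓ ∧ Mv y ℓ t η = Mv y ℓ t η' ∧
          Mv y ℓ (t+1) η = Mv y ℓ (t+1) η'}.ncard : ℝ) ≤ (ℓ:ℝ) := by exact_mod_cast h1
      _ ≤ ((ℓ:ℝ)) ^ (3:ℕ) := by nlinarith [sq_nonneg ((ℓ:ℝ)), sq_nonneg ((ℓ:ℝ)-1)]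
      _ = (2:ℝ) ^ ((3:ℝ) * Real.logb 2 ℓ) := hpow.symm
  · -- final state
    intro η hη
    have hm1 : 1 ≤ hidx y ℓ η := (hidx_spec hη).1
    have hmL : hidx y ℓ η ≤ ℓ := (hidx_spec hη).2.1
    set m := hidx y ℓ η with hm
    have hInv := master y ℓ m hl hm1 hmL (3*(ℓ-1))
    simp only [Inv] at hInv
    rw [if_neg (by omega), if_neg (by omega), if_neg (by omega), if_neg (by omega),
      if_neg (by omega), if_neg (by omega), if_neg (by omega), if_neg (by omega)] at hInv
    obtain ⟨hout, hSF1, hSF2, hSF3⟩ := hInv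
    constructor
    · intro a ha1 ha2
      constructor
      · show η (Cf y ℓ m (3*(ℓ-1)) (Bp y a)) = η (Tq y a)
        by_cases ha : a = ((m:ℕ):ℤ)
        · rw [ha]
          rw [Hs_empty hη hSF2]
          exact ((hidx_spec hη).2.2).symm
        · rw [hSF3 a ha1 ha2 ha]
      · show η (Cf y ℓ m (3*(ℓ-1)) (Tq y a)) = η (Bp y a)
        rw [Hs_empty hη (hSF1 a ha1 ha2)]
        exact (hη.1 a ha1 ha2).symm
    · intro z hz
      show η (Cf y ℓ m (3*(ℓ-1)) z) = η z
      rw [hout z hz]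

end RowEx

/-- Claim 3.7 (exchanging rows, KA-2f in `d = 2`): there is a constant `C` such that for
every `ℓ ≥ 2` and `y ∈ ℤ²` there is a `T`-step move with domain `DomRows y ℓ`, taking
place in the strip `y + [ℓ] × {0,1}`, with `T ≤ C ℓ` and information loss `≤ C log₂ ℓ`,
whose final state exchanges the two rows `y + [ℓ] × {0}` and `y + [ℓ] × {1}`. -/
theorem exchange_rows :
    ∃ C : ℝ, 0 < C ∧ ∀ ℓ : ℕ, 2 ≤ ℓ → ∀ y : ℤ × ℤ,
      ∃ (T : ℕ) (M : ℕ → (ℤ × ℤ → Bool) → (ℤ × ℤ → Bool)),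
        (T : ℝ) ≤ C * ℓ ∧
        IsTMove2 (strip2 y ℓ) (DomRows y ℓ) M T ∧
        LossLE2 (DomRows y ℓ) M T (C * Real.logb 2 ℓ) ∧
        ∀ η ∈ DomRows y ℓ,
          (∀ a : ℤ, 1 ≤ a → a ≤ (ℓ : ℤ) →
            M T η (y.1 + a, y.2) = η (y.1 + a, y.2 + 1) ∧
            M T η (y.1 + a, y.2 + 1) = η (y.1 + a, y.2)) ∧
          ∀ z : ℤ × ℤ, z ∉ strip2 y ℓ → M T η z = η z :=
  RowEx.exchange_rows'
end

section
/- Claim (moving a marked site across an empty column, KA-2f in d = 2): Fix y ∈ Z², ℓ ≥ 2, and a marked site ⋆ ∈ y + {−1}×[ℓ]. Let M_dom be the set of configurations η ∈ {0,1}^{Z²} for which the column y + {0}×[ℓ] is empty and each of the columns y + {−1}×[ℓ] and y + {1}×[ℓ] contains at least one empty site other than ⋆ and ⋆+(2,0) respectively. There exist constants C (independent of ℓ) and a T-step move M with domain M_dom, taking place in the three columns y + {−1,0,1}×[ℓ], such that T ≤ C·ℓ, Loss(M) ≤ C·log₂(ℓ), and for every η ∈ M_dom the final configuration M_T(η) is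 obtained from η by exchanging the occupation values at ⋆ and ⋆ + (2,0). -/
/-- The three columns `y + {-1,0,1} × [ℓ]`. -/
def cols3 (y : ℤ × ℤ) (ℓ : ℕ) : Set (ℤ × ℤ) :=
  {z | |z.1 - y.1| ≤ 1 ∧ 1 ≤ z.2 - y.2 ∧ z.2 - y.2 ≤ (ℓ : ℤ)}

/-- Domain of the marked-site move: the column `y + {0} × [ℓ]` is empty, and each of the
columns `y + {-1} × [ℓ]` and `y + {1} × [ℓ]` has an empty site other than `⋆` and
`⋆ + (2,0)` respectively (`⋆ = y + (-1, s)`). -/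
def DomStar (y : ℤ × ℤ) (ℓ : ℕ) (s : ℤ) : Set (ℤ × ℤ → Bool) :=
  {η | (∀ a : ℤ, 1 ≤ a → a ≤ (ℓ : ℤ) → η (y.1, y.2 + a) = false) ∧
       (∃ a : ℤ, 1 ≤ a ∧ a ≤ (ℓ : ℤ) ∧ a ≠ s ∧ η (y.1 - 1, y.2 + a) = false) ∧
       (∃ a : ℤ, 1 ≤ a ∧ a ≤ (ℓ : ℤ) ∧ a ≠ s ∧ η (y.1 + 1, y.2 + a) = false)}

namespace KA2f
open Equiv

lemma legalEx_of (V : Set (ℤ × ℤ)) (η : ℤ × ℤ → Bool) (P Q : Perm (ℤ × ℤ))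
    (x y zx zy : ℤ × ℤ)
    (hQ : Q = P * Equiv.swap x y)
    (hx : x ∈ V) (hy : y ∈ V) (hd : d1 x y = 1)
    (hzx : zx ∈ nbrs2 x) (hzxV : zx ∈ V) (hzxy : zx ≠ y) (hzxv : η (P zx) = false)
    (hzy : zy ∈ nbrs2 y) (hzyV : zy ∈ V) (hzyx : zy ≠ x) (hzyv : η (P zy) = false) :
    LegalEx2 V (fun z => η (P z)) (fun z => η (Q z)) := by
  refine ⟨x, y, hx, hy, hd, ⟨zx, hzx, hzxV, hzxy, hzxv⟩, ⟨zy, hzy, hzyV, hzyx, hzyv⟩, ?_⟩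
  funext z
  rw [hQ]
  simp only [swap2, Perm.mul_apply, Equiv.swap_apply_def]
  split_ifs <;> rfl

lemma mem_cols3 {y1 w2 : ℤ} {ℓ : ℕ} {c r : ℤ}
    (hc : c = y1 - 1 ∨ c = y1 ∨ c = y1 + 1) (h1 : 1 ≤ r - w2) (h2 : r - w2 ≤ (ℓ:ℤ)) :
    ((c, r) : ℤ × ℤ) ∈ cols3 (y1, w2) ℓ := by
  refine ⟨abs_le.mpr ⟨?_, ?_⟩, h1, h2⟩ <;> rcases hc with rfl | rfl | rfl <;> simp

lemma mem_nbrs2_iff (x z : ℤ × ℤ) :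
    z ∈ nbrs2 x ↔ (z = x + (1,0) ∨ z = x + (-1,0) ∨ z = x + (0,1) ∨ z = x + (0,-1)) := by
  simp [nbrs2]



-- copies from perm.lean (will merge later)
def pt (c w e : ℤ) (i : ℕ) : ℤ × ℤ := (c, w + e * i)
def cperm (c w e : ℤ) : ℕ → Perm (ℤ × ℤ)
  | 0 => 1
  | i+1 => cperm c w e i * Equiv.swap (pt c w e i) (pt c w e (i+1))
def rperm (c w e : ℤ) (k : ℕ) : ℕ → Perm (ℤ × ℤ)
  | 0 => 1
  | j+1 => rperm c w e k j * Equiv.swap (pt c w e (k-1-j)) (pt c w e (k-j))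

lemma cperm_fix_col (c w e : ℤ) (i : ℕ) {z : ℤ × ℤ} (hz : z.1 ≠ c) :
    cperm c w e i z = z := by
  induction i with
  | zero => rfl
  | succ i ih =>
    have h1 : z ≠ pt c w e i := by intro h; exact hz (by rw [h]; rfl)
    have h2 : z ≠ pt c w e (i+1) := by intro h; exact hz (by rw [h]; rfl)
    simp only [cperm, Perm.mul_apply, swap_apply_of_ne_of_ne h1 h2, ih]

lemma rperm_fix_col (c w e : ℤ) (k : ℕ) (j : ℕ) {z : ℤ × ℤ} (hz : z.1 ≠ c) :
    rperm c w e k j z = z := by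
  induction j with
  | zero => rfl
  | succ j ih =>
    have h1 : z ≠ pt c w e (k-1-j) := by intro h; exact hz (by rw [h]; rfl)
    have h2 : z ≠ pt c w e (k-j) := by intro h; exact hz (by rw [h]; rfl)
    simp only [rperm, Perm.mul_apply, swap_apply_of_ne_of_ne h1 h2, ih]

lemma cperm_fix_row (c w e : ℤ) (i : ℕ) {r : ℤ}
    (hr : ∀ j : ℕ, j ≤ i → r ≠ w + e * j) :
    cperm c w e i (c, r) = (c, r) := by
  induction i with
  | zero => rfl
  | succ i ih =>
    have h1 : ((c, r) : ℤ × ℤ) ≠ pt c w e i := by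
      intro h; exact hr i (Nat.le_succ i) (congrArg Prod.snd h)
    have h2 : ((c, r) : ℤ × ℤ) ≠ pt c w e (i+1) := by
      intro h; exact hr (i+1) le_rfl (congrArg Prod.snd h)
    simp only [cperm, Perm.mul_apply, swap_apply_of_ne_of_ne h1 h2]
    exact ih (fun j hj => hr j (Nat.le_succ_of_le hj))

lemma rperm_fix_row (c w e : ℤ) (k j : ℕ) {r : ℤ}
    (hr : ∀ j' : ℕ, j' ≤ k → r ≠ w + e * j') :
    rperm c w e k j (c, r) = (c, r) := by
  induction j with
  | zero => rfl
  | succ j ih =>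
    have h1 : ((c, r) : ℤ × ℤ) ≠ pt c w e (k-1-j) := by
      intro h
      exact hr (k-1-j) (le_trans (Nat.sub_le _ _) (Nat.sub_le _ _)) (congrArg Prod.snd h)
    have h2 : ((c, r) : ℤ × ℤ) ≠ pt c w e (k-j) := by
      intro h; exact hr (k-j) (Nat.sub_le _ _) (congrArg Prod.snd h)
    simp only [rperm, Perm.mul_apply, swap_apply_of_ne_of_ne h1 h2, ih]

lemma cperm_top (c w e : ℤ) (k : ℕ) :
    cperm c w e k (pt c w e k) = pt c w e 0 := by
  induction k with
  | zero => rfl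
  | succ k ih => simp only [cperm, Perm.mul_apply, swap_apply_right, ih]

lemma cperm_mul_rperm (c w e : ℤ) (k : ℕ) :
    ∀ j, j ≤ k → cperm c w e k * rperm c w e k j = cperm c w e (k - j) := by
  intro j
  induction j with
  | zero => intro _; simp [rperm]
  | succ j ih =>
    intro hj
    have hj' : j ≤ k := Nat.le_of_succ_le hj
    have hkj : k - j = (k - (j+1)) + 1 := by omega
    have h1 : k - 1 - j = k - (j+1) := by omega
    rw [rperm, ← mul_assoc, ih hj', hkj, cperm, h1, mul_assoc,
      swap_mul_self, mul_one]

lemma cperm_mul_rperm_self (c w e : ℤ) (k : ℕ) :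
    cperm c w e k * rperm c w e k k = 1 := by
  rw [cperm_mul_rperm c w e k k le_rfl, Nat.sub_self]; rfl

lemma comm_of_fixed {σ : Perm (ℤ × ℤ)} {A B : ℤ × ℤ} (hA : σ A = A) (hB : σ B = B) :
    σ * Equiv.swap A B = Equiv.swap A B * σ := by
  apply Equiv.ext; intro z
  simp only [Perm.mul_apply]
  rcases eq_or_ne z A with rfl | hzA
  · rw [swap_apply_left, hB, hA, swap_apply_left]
  rcases eq_or_ne z B with rfl | hzB
  · rw [swap_apply_right, hA, hB, swap_apply_right]
  · rw [swap_apply_of_ne_of_ne hzA hzB, swap_apply_of_ne_of_ne]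
    · intro h; exact hzA (σ.injective (by rw [h, hA]))
    · intro h; exact hzB (σ.injective (by rw [h, hB]))

lemma triple_swap {A C B : ℤ × ℤ} (hCB : C ≠ B) (hAB : A ≠ B) :
    Equiv.swap A C * Equiv.swap C B * Equiv.swap A C = Equiv.swap A B := by
  have := Equiv.swap_mul_swap_mul_swap (x := B) (y := C) (z := A) hCB.symm hAB.symm
  rw [swap_comm C A, swap_comm B C] at this
  rw [this, swap_comm]

/-- rows of a chain avoid `s`. -/
lemma row_ne_chain {s c e : ℤ} {k : ℕ} (he : e = 1 ∨ e = -1)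
    (hsc : s - c = e * (k+1)) :
    ∀ j : ℕ, j ≤ k → s ≠ c + e * j := by
  intro j hj h
  rcases he with rfl | rfl <;> push_cast at hsc h <;> omega

/-- the global schedule permutation at time `t`. -/
def Pfun (y1 w2 s a b eL eR : ℤ) (kL kR : ℕ) (t : ℕ) : Perm (ℤ × ℤ) :=
  if t ≤ kL then cperm (y1-1) (w2+a) eL t
  else if t ≤ kL+kR then
    cperm (y1-1) (w2+a) eL kL * cperm (y1+1) (w2+b) eR (t - kL)
  else if t = kL+kR+1 then
    cperm (y1-1) (w2+a) eL kL * cperm (y1+1) (w2+b) eR kR *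
      Equiv.swap (y1-1, w2+s) (y1, w2+s)
  else if t = kL+kR+2 then
    cperm (y1-1) (w2+a) eL kL * cperm (y1+1) (w2+b) eR kR *
      Equiv.swap (y1-1, w2+s) (y1, w2+s) * Equiv.swap (y1, w2+s) (y1+1, w2+s)
  else if t ≤ kL+kR+3+kR then
    cperm (y1-1) (w2+a) eL kL * cperm (y1+1) (w2+b) eR kR *
      Equiv.swap (y1-1, w2+s) (y1+1, w2+s) * rperm (y1+1) (w2+b) eR kR (t - (kL+kR+3))
  else if t ≤ kL+kR+3+kR+kL then
    cperm (y1-1) (w2+a) eL kL *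
      (cperm (y1+1) (w2+b) eR kR * Equiv.swap (y1-1, w2+s) (y1+1, w2+s) *
        rperm (y1+1) (w2+b) eR kR kR) * rperm (y1-1) (w2+a) eL kL (t - (kL+kR+3+kR))
  else
    cperm (y1-1) (w2+a) eL kL *
      (cperm (y1+1) (w2+b) eR kR * Equiv.swap (y1-1, w2+s) (y1+1, w2+s) *
        rperm (y1+1) (w2+b) eR kR kR) * rperm (y1-1) (w2+a) eL kL kL

section
variable (y1 w2 s a b eL eR : ℤ) (kL kR : ℕ)

lemma Pfun_zero : Pfun y1 w2 s a b eL eR kL kR 0 = 1 := by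
  simp [Pfun, cperm]

lemma Pfun_eq1 {t : ℕ} (h : t ≤ kL) :
    Pfun y1 w2 s a b eL eR kL kR t = cperm (y1-1) (w2+a) eL t := by
  simp [Pfun, h]

lemma Pfun_eq2 {t : ℕ} (h1 : kL ≤ t) (h2 : t ≤ kL+kR) :
    Pfun y1 w2 s a b eL eR kL kR t =
      cperm (y1-1) (w2+a) eL kL * cperm (y1+1) (w2+b) eR (t - kL) := by
  rcases eq_or_lt_of_le h1 with rfl | h1'
  · simp [Pfun, cperm]
  · have : ¬ t ≤ kL := by omega
    simp [Pfun, this, h2]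

lemma Pfun_eq3 :
    Pfun y1 w2 s a b eL eR kL kR (kL+kR+1) =
      cperm (y1-1) (w2+a) eL kL * cperm (y1+1) (w2+b) eR kR *
        Equiv.swap (y1-1, w2+s) (y1, w2+s) := by
  have h1 : ¬ kL+kR+1 ≤ kL := by omega
  have h2 : ¬ kL+kR+1 ≤ kL+kR := by omega
  simp [Pfun, h1, h2]

lemma Pfun_eq4 :
    Pfun y1 w2 s a b eL eR kL kR (kL+kR+2) =
      cperm (y1-1) (w2+a) eL kL * cperm (y1+1) (w2+b) eR kR *
        Equiv.swap (y1-1, w2+s) (y1, w2+s) * Equiv.swap (y1, w2+s) (y1+1, w2+s) := by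
  have h1 : ¬ kL+kR+2 ≤ kL := by omega
  have h2 : ¬ kL+kR+2 ≤ kL+kR := by omega
  have h3 : ¬ kL+kR+2 = kL+kR+1 := by omega
  simp [Pfun, h1, h2, h3]

lemma Pfun_eq5 {t : ℕ} (h1 : kL+kR+3 ≤ t) (h2 : t ≤ kL+kR+3+kR) :
    Pfun y1 w2 s a b eL eR kL kR t =
      cperm (y1-1) (w2+a) eL kL * cperm (y1+1) (w2+b) eR kR *
        Equiv.swap (y1-1, w2+s) (y1+1, w2+s) *
        rperm (y1+1) (w2+b) eR kR (t - (kL+kR+3)) := by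
  have ha : ¬ t ≤ kL := by omega
  have hb : ¬ t ≤ kL+kR := by omega
  have hc : ¬ t = kL+kR+1 := by omega
  have hd : ¬ t = kL+kR+2 := by omega
  simp [Pfun, ha, hb, hc, hd, h2]

lemma Pfun_eq6 {t : ℕ} (h1 : kL+kR+3+kR ≤ t) (h2 : t ≤ kL+kR+3+kR+kL) :
    Pfun y1 w2 s a b eL eR kL kR t =
      cperm (y1-1) (w2+a) eL kL *
        (cperm (y1+1) (w2+b) eR kR * Equiv.swap (y1-1, w2+s) (y1+1, w2+s) *
          rperm (y1+1) (w2+b) eR kR kR) *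
        rperm (y1-1) (w2+a) eL kL (t - (kL+kR+3+kR)) := by
  rcases eq_or_lt_of_le h1 with rfl | h1'
  · have h2' : kL+kR+3 ≤ kL+kR+3+kR := by omega
    rw [Pfun_eq5 y1 w2 s a b eL eR kL kR h2' le_rfl]
    simp [rperm, mul_assoc, Nat.sub_self]
  · have ha : ¬ t ≤ kL := by omega
    have hb : ¬ t ≤ kL+kR := by omega
    have hc : ¬ t = kL+kR+1 := by omega
    have hd : ¬ t = kL+kR+2 := by omega
    have he : ¬ t ≤ kL+kR+3+kR := by omega
    simp [Pfun, ha, hb, hc, hd, he, h2]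

lemma Pfun_eq7 {t : ℕ} (h1 : kL+kR+3+kR+kL ≤ t) :
    Pfun y1 w2 s a b eL eR kL kR t =
      cperm (y1-1) (w2+a) eL kL *
        (cperm (y1+1) (w2+b) eR kR * Equiv.swap (y1-1, w2+s) (y1+1, w2+s) *
          rperm (y1+1) (w2+b) eR kR kR) *
        rperm (y1-1) (w2+a) eL kL kL := by
  rcases eq_or_lt_of_le h1 with rfl | h1'
  · have h := Pfun_eq6 y1 w2 s a b eL eR kL kR (by omega) le_rfl
    rw [h]; simp
  · have ha : ¬ t ≤ kL := by omega
    have hb : ¬ t ≤ kL+kR := by omega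
    have hc : ¬ t = kL+kR+1 := by omega
    have hd : ¬ t = kL+kR+2 := by omega
    have he : ¬ t ≤ kL+kR+3+kR := by omega
    have hf : ¬ t ≤ kL+kR+3+kR+kL := by omega
    simp [Pfun, ha, hb, hc, hd, he, hf]

lemma Pfun_fix_mid (t : ℕ) {z : ℤ × ℤ} (hz1 : z.1 = y1) (hz2 : z ≠ (y1, w2+s)) :
    Pfun y1 w2 s a b eL eR kL kR t z = z := by
  have hL : z.1 ≠ y1 - 1 := by omega
  have hR : z.1 ≠ y1 + 1 := by omega
  have hcL : ∀ i, cperm (y1-1) (w2+a) eL i z = z := fun i => cperm_fix_col _ _ _ i hL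
  have hcR : ∀ i, cperm (y1+1) (w2+b) eR i z = z := fun i => cperm_fix_col _ _ _ i hR
  have hrL : ∀ i, rperm (y1-1) (w2+a) eL kL i z = z := fun i => rperm_fix_col _ _ _ _ i hL
  have hrR : ∀ i, rperm (y1+1) (w2+b) eR kR i z = z := fun i => rperm_fix_col _ _ _ _ i hR
  have hzA : z ≠ (y1-1, w2+s) := by intro h; rw [h] at hz1; simp at hz1
  have hzB : z ≠ (y1+1, w2+s) := by intro h; rw [h] at hz1; simp at hz1
  have hs1 : Equiv.swap ((y1-1, w2+s) : ℤ × ℤ) (y1, w2+s) z = z :=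
    swap_apply_of_ne_of_ne hzA hz2
  have hs2 : Equiv.swap ((y1, w2+s) : ℤ × ℤ) (y1+1, w2+s) z = z :=
    swap_apply_of_ne_of_ne hz2 hzB
  have hs3 : Equiv.swap ((y1-1, w2+s) : ℤ × ℤ) (y1+1, w2+s) z = z :=
    swap_apply_of_ne_of_ne hzA hzB
  unfold Pfun
  split_ifs <;> simp only [Perm.mul_apply, hcL, hcR, hrL, hrR, hs1, hs2, hs3]

lemma Pfun_final (heL : eL = 1 ∨ eL = -1) (heR : eR = 1 ∨ eR = -1)
    (hsa : s - a = eL * (kL+1)) (hsb : s - b = eR * (kR+1))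
    {t : ℕ} (h1 : kL+kR+3+kR+kL ≤ t) :
    Pfun y1 w2 s a b eL eR kL kR t =
      Equiv.swap (y1-1, w2+s) (y1+1, w2+s) := by
  rw [Pfun_eq7 y1 w2 s a b eL eR kL kR h1]
  have hfixRA : cperm (y1+1) (w2+b) eR kR (y1-1, w2+s) = (y1-1, w2+s) :=
    cperm_fix_col _ _ _ _ (by simp; omega)
  have hfixRB : cperm (y1+1) (w2+b) eR kR (y1+1, w2+s) = (y1+1, w2+s) :=
    cperm_fix_row _ _ _ _ (by
      intro j hj h
      exact row_ne_chain heR hsb j hj (by omega))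
  have hfixLA : cperm (y1-1) (w2+a) eL kL (y1-1, w2+s) = (y1-1, w2+s) :=
    cperm_fix_row _ _ _ _ (by
      intro j hj h
      exact row_ne_chain heL hsa j hj (by omega))
  have hfixLB : cperm (y1-1) (w2+a) eL kL (y1+1, w2+s) = (y1+1, w2+s) :=
    cperm_fix_col _ _ _ _ (by simp; omega)
  have hc1 := comm_of_fixed hfixRA hfixRB
  have hc2 := comm_of_fixed hfixLA hfixLB
  calc cperm (y1-1) (w2+a) eL kL *
        (cperm (y1+1) (w2+b) eR kR * Equiv.swap (y1-1, w2+s) (y1+1, w2+s) *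
          rperm (y1+1) (w2+b) eR kR kR) * rperm (y1-1) (w2+a) eL kL kL
      = cperm (y1-1) (w2+a) eL kL *
        (Equiv.swap (y1-1, w2+s) (y1+1, w2+s) *
          (cperm (y1+1) (w2+b) eR kR * rperm (y1+1) (w2+b) eR kR kR)) *
        rperm (y1-1) (w2+a) eL kL kL := by rw [hc1]; simp only [mul_assoc]
    _ = cperm (y1-1) (w2+a) eL kL * Equiv.swap (y1-1, w2+s) (y1+1, w2+s) *
        rperm (y1-1) (w2+a) eL kL kL := by
          rw [cperm_mul_rperm_self, mul_one, mul_assoc]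
    _ = Equiv.swap (y1-1, w2+s) (y1+1, w2+s) *
        (cperm (y1-1) (w2+a) eL kL * rperm (y1-1) (w2+a) eL kL kL) := by
          rw [hc2]; simp only [mul_assoc]
    _ = Equiv.swap (y1-1, w2+s) (y1+1, w2+s) := by
          rw [cperm_mul_rperm_self, mul_one]

end

lemma pt_zero (c w e : ℤ) : pt c w e 0 = (c, w) := by simp [pt]

lemma chain_row_bounds {w2 s c e : ℤ} {k : ℕ} {ℓ : ℕ} (he : e = 1 ∨ e = -1)
    (hsc : s - c = e * (k+1)) (hc1 : 1 ≤ c) (hc2 : c ≤ (ℓ:ℤ))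
    (hs1 : 1 ≤ s) (hs2 : s ≤ (ℓ:ℤ)) {i : ℕ} (hi : i ≤ k) :
    1 ≤ (w2+c) + e*i - w2 ∧ (w2+c) + e*i - w2 ≤ (ℓ:ℤ) ∧ (w2+c) + e*i ≠ w2 + s := by
  rcases he with rfl | rfl <;>
    (simp only [one_mul, neg_one_mul] at hsc ⊢; push_cast at hsc ⊢; omega)

/-- legality of a vertical swap in column `c` (≠ middle) while `P` fixes the
middle column off row `s`. -/
lemma chain_step (y1 w2 s : ℤ) (ℓ : ℕ) (η : ℤ × ℤ → Bool)
    (hmid2 : ∀ r : ℤ, 1 ≤ r - w2 → r - w2 ≤ (ℓ:ℤ) → η (y1, r) = false)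
    (P Q : Perm (ℤ × ℤ)) (c w e : ℤ) (he : e = 1 ∨ e = -1) (i : ℕ)
    (hc : c = y1 - 1 ∨ c = y1 + 1)
    (hQ : Q = P * Equiv.swap (pt c w e i) (pt c w e (i+1)))
    (hr1 : 1 ≤ w + e*i - w2) (hr2 : w + e*i - w2 ≤ (ℓ:ℤ)) (hr3 : w + e*i ≠ w2 + s)
    (hr1' : 1 ≤ w + e*(i+1:ℕ) - w2) (hr2' : w + e*(i+1:ℕ) - w2 ≤ (ℓ:ℤ))
    (hr3' : w + e*(i+1:ℕ) ≠ w2 + s)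
    (hfix : ∀ z : ℤ × ℤ, z.1 = y1 → z ≠ (y1, w2+s) → P z = z) :
    LegalEx2 (cols3 (y1, w2) ℓ) (fun z => η (P z)) (fun z => η (Q z)) := by
  have hmb1 : ((y1, w + e*(i:ℕ)) : ℤ × ℤ) ≠ (y1, w2+s) :=
    fun h => hr3 (congrArg Prod.snd h)
  have hmb2 : ((y1, w + e*(i+1:ℕ)) : ℤ × ℤ) ≠ (y1, w2+s) :=
    fun h => hr3' (congrArg Prod.snd h)
  apply legalEx_of (cols3 (y1, w2) ℓ) η P Q (pt c w e i) (pt c w e (i+1))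
      (y1, w + e*(i:ℕ)) (y1, w + e*(i+1:ℕ)) hQ
  · exact mem_cols3 (by tauto) hr1 hr2
  · exact mem_cols3 (by tauto) hr1' hr2'
  · rcases he with rfl | rfl <;> simp [d1, pt] <;> omega
  · rcases he with rfl | rfl <;> rcases hc with rfl | rfl <;>
      (simp only [mem_nbrs2_iff, pt, Prod.mk_add_mk, Prod.mk.injEq]; push_cast; omega)
  · exact mem_cols3 (by tauto) hr1 hr2
  · rcases hc with rfl | rfl <;> (simp only [pt]; intro h; injection h with h1 h2; omega)
  · rw [hfix _ rfl hmb1]; exact hmid2 _ hr1 hr2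
  · rcases he with rfl | rfl <;> rcases hc with rfl | rfl <;>
      (simp only [mem_nbrs2_iff, pt, Prod.mk_add_mk, Prod.mk.injEq]; push_cast; omega)
  · exact mem_cols3 (by tauto) hr1' hr2'
  · rcases hc with rfl | rfl <;> (simp only [pt]; intro h; injection h with h1 h2; omega)
  · rw [hfix _ rfl hmb2]; exact hmid2 _ hr1' hr2'

lemma step_main (y1 w2 s a b eL eR : ℤ) (kL kR : ℕ) (ℓ : ℕ)
    (hl2 : 2 ≤ ℓ) (hs1 : 1 ≤ s) (hs2 : s ≤ (ℓ:ℤ))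
    (ha1 : 1 ≤ a) (ha2 : a ≤ (ℓ:ℤ)) (hb1 : 1 ≤ b) (hb2 : b ≤ (ℓ:ℤ))
    (heL : eL = 1 ∨ eL = -1) (heR : eR = 1 ∨ eR = -1)
    (hsa : s - a = eL * (kL+1)) (hsb : s - b = eR * (kR+1))
    (η : ℤ × ℤ → Bool)
    (hmid2 : ∀ r : ℤ, 1 ≤ r - w2 → r - w2 ≤ (ℓ:ℤ) → η (y1, r) = false)
    (ham : η (y1-1, w2+a) = false) (hbm : η (y1+1, w2+b) = false)
    (t : ℕ) :
    (fun z => η (Pfun y1 w2 s a b eL eR kL kR (t+1) z))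
        = (fun z => η (Pfun y1 w2 s a b eL eR kL kR t z)) ∨
      LegalEx2 (cols3 (y1, w2) ℓ)
        (fun z => η (Pfun y1 w2 s a b eL eR kL kR t z))
        (fun z => η (Pfun y1 w2 s a b eL eR kL kR (t+1) z)) := by
  have hfix : ∀ t' (z : ℤ × ℤ), z.1 = y1 → z ≠ (y1, w2+s) →
      Pfun y1 w2 s a b eL eR kL kR t' z = z := fun t' z h1 h2 =>
    Pfun_fix_mid y1 w2 s a b eL eR kL kR t' h1 h2
  -- the marked sites
  have hACm : ((y1-1, w2+s) : ℤ × ℤ) ≠ (y1, w2+s) := by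
    intro h; injection h with h1 h2; omega
  have hCmB : ((y1, w2+s) : ℤ × ℤ) ≠ (y1+1, w2+s) := by
    intro h; injection h with h1 h2; omega
  have hAB : ((y1-1, w2+s) : ℤ × ℤ) ≠ (y1+1, w2+s) := by
    intro h; injection h with h1 h2; omega
  obtain ⟨f, hf, hf1, hf2⟩ : ∃ f : ℤ, (f = 1 ∨ f = -1) ∧ 1 ≤ s - f ∧ s - f ≤ (ℓ:ℤ) := by
    rcases le_or_gt 2 s with h | h
    · exact ⟨1, Or.inl rfl, by omega, by omega⟩
    · exact ⟨-1, Or.inr rfl, by omega, by omega⟩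
  have hmf_nbr : ((y1, w2+(s-f)) : ℤ × ℤ) ∈ nbrs2 (y1, w2+s) := by
    rcases hf with rfl | rfl <;>
      (simp only [mem_nbrs2_iff, Prod.mk_add_mk, Prod.mk.injEq]; omega)
  have hmf_V : ((y1, w2+(s-f)) : ℤ × ℤ) ∈ cols3 (y1, w2) ℓ :=
    mem_cols3 (Or.inr (Or.inl rfl)) (by omega) (by omega)
  have hmf_ne : ((y1, w2+(s-f)) : ℤ × ℤ) ≠ (y1, w2+s) := by
    intro h; injection h with h1 h2; rcases hf with rfl | rfl <;> omega
  have hmf_neA : ((y1, w2+(s-f)) : ℤ × ℤ) ≠ (y1-1, w2+s) := by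
    intro h; injection h with h1 h2; omega
  have hmf_neB : ((y1, w2+(s-f)) : ℤ × ℤ) ≠ (y1+1, w2+s) := by
    intro h; injection h with h1 h2; omega
  have hmf_val : ∀ t', η (Pfun y1 w2 s a b eL eR kL kR t' (y1, w2+(s-f))) = false := by
    intro t'
    rw [hfix t' _ rfl hmf_ne]
    exact hmid2 _ (by omega) (by omega)
  have hA_V : ((y1-1, w2+s) : ℤ × ℤ) ∈ cols3 (y1, w2) ℓ :=
    mem_cols3 (Or.inl rfl) (by omega) (by omega)
  have hCm_V : ((y1, w2+s) : ℤ × ℤ) ∈ cols3 (y1, w2) ℓ :=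
    mem_cols3 (Or.inr (Or.inl rfl)) (by omega) (by omega)
  have hB_V : ((y1+1, w2+s) : ℤ × ℤ) ∈ cols3 (y1, w2) ℓ :=
    mem_cols3 (Or.inr (Or.inr rfl)) (by omega) (by omega)
  -- DL and DR facts
  have hDL_col : (pt (y1-1) (w2+a) eL kL).1 ≠ y1+1 := by simp [pt]; omega
  have hDR_col : (pt (y1+1) (w2+b) eR kR).1 ≠ y1-1 := by simp [pt]; omega
  have hDL_neCm : pt (y1-1) (w2+a) eL kL ≠ (y1, w2+s) := by
    simp only [pt]; intro h; injection h with h1 h2; omega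
  have hDL_neB : pt (y1-1) (w2+a) eL kL ≠ (y1+1, w2+s) := by
    simp only [pt]; intro h; injection h with h1 h2; omega
  have hDL_neA : pt (y1-1) (w2+a) eL kL ≠ (y1-1, w2+s) := by
    simp only [pt]; intro h; injection h with h1 h2
    rcases heL with rfl | rfl <;> push_cast at hsa h2 <;> omega
  have hDR_neCm : pt (y1+1) (w2+b) eR kR ≠ (y1, w2+s) := by
    simp only [pt]; intro h; injection h with h1 h2; omega
  have hDR_neA : pt (y1+1) (w2+b) eR kR ≠ (y1-1, w2+s) := by
    simp only [pt]; intro h; injection h with h1 h2; omega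
  have hDL_nbrA : pt (y1-1) (w2+a) eL kL ∈ nbrs2 (y1-1, w2+s) := by
    rcases heL with rfl | rfl <;>
      (simp only [mem_nbrs2_iff, pt, Prod.mk_add_mk, Prod.mk.injEq]; push_cast at hsa ⊢; omega)
  have hDR_nbrB : pt (y1+1) (w2+b) eR kR ∈ nbrs2 (y1+1, w2+s) := by
    rcases heR with rfl | rfl <;>
      (simp only [mem_nbrs2_iff, pt, Prod.mk_add_mk, Prod.mk.injEq]; push_cast at hsb ⊢; omega)
  obtain ⟨hDLb1, hDLb2, -⟩ := chain_row_bounds (w2 := w2) heL hsa ha1 ha2 hs1 hs2 (le_refl kL)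
  obtain ⟨hDRb1, hDRb2, -⟩ := chain_row_bounds (w2 := w2) heR hsb hb1 hb2 hs1 hs2 (le_refl kR)
  have hDL_V : pt (y1-1) (w2+a) eL kL ∈ cols3 (y1, w2) ℓ :=
    mem_cols3 (Or.inl rfl) hDLb1 hDLb2
  have hDR_V : pt (y1+1) (w2+b) eR kR ∈ cols3 (y1, w2) ℓ :=
    mem_cols3 (Or.inr (Or.inr rfl)) hDRb1 hDRb2
  by_cases hc1 : t < kL
  -- Phase 1 : left chain
  · right
    obtain ⟨c1, c2, c3⟩ := chain_row_bounds (w2 := w2) heL hsa ha1 ha2 hs1 hs2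
      (show t ≤ kL by omega)
    obtain ⟨c1', c2', c3'⟩ := chain_row_bounds (w2 := w2) heL hsa ha1 ha2 hs1 hs2
      (show t+1 ≤ kL by omega)
    refine chain_step y1 w2 s ℓ η hmid2 _ _ (y1-1) (w2+a) eL heL t (Or.inl rfl)
      ?_ c1 c2 c3 c1' c2' c3' (hfix t)
    rw [Pfun_eq1 y1 w2 s a b eL eR kL kR (show t+1 ≤ kL by omega),
      Pfun_eq1 y1 w2 s a b eL eR kL kR (show t ≤ kL by omega)]
    rfl
  by_cases hc2 : t < kL + kR
  -- Phase 2 : right chain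
  · right
    obtain ⟨c1, c2, c3⟩ := chain_row_bounds (w2 := w2) heR hsb hb1 hb2 hs1 hs2
      (show t - kL ≤ kR by omega)
    obtain ⟨c1', c2', c3'⟩ := chain_row_bounds (w2 := w2) heR hsb hb1 hb2 hs1 hs2
      (show (t - kL) + 1 ≤ kR by omega)
    refine chain_step y1 w2 s ℓ η hmid2 _ _ (y1+1) (w2+b) eR heR (t - kL) (Or.inr rfl)
      ?_ c1 c2 c3 c1' c2' c3' (hfix t)
    rw [Pfun_eq2 y1 w2 s a b eL eR kL kR (show kL ≤ t+1 by omega) (show t+1 ≤ kL+kR by omega),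
      Pfun_eq2 y1 w2 s a b eL eR kL kR (show kL ≤ t by omega) (show t ≤ kL+kR by omega),
      show t+1-kL = (t-kL)+1 from by omega]
    simp only [cperm, mul_assoc]
  by_cases hc3 : t = kL + kR
  -- Phase 3 : swap ⋆ ↔ middle
  · subst hc3
    right
    have hDL : Pfun y1 w2 s a b eL eR kL kR (kL+kR) (pt (y1-1) (w2+a) eL kL)
        = (y1-1, w2+a) := by
      rw [Pfun_eq2 y1 w2 s a b eL eR kL kR (by omega) le_rfl,
        Nat.add_sub_cancel_left]
      rw [Perm.mul_apply, cperm_fix_col _ _ _ _ hDL_col, cperm_top, pt_zero]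
    refine legalEx_of _ η _ _ (y1-1, w2+s) (y1, w2+s)
      (pt (y1-1) (w2+a) eL kL) (y1, w2+(s-f)) ?_ hA_V hCm_V
      (by simp only [d1]; omega)
      hDL_nbrA hDL_V hDL_neCm (by rw [hDL]; exact ham)
      hmf_nbr hmf_V hmf_neA (hmf_val _)
    rw [Pfun_eq3, Pfun_eq2 y1 w2 s a b eL eR kL kR (by omega) le_rfl,
      Nat.add_sub_cancel_left]
  by_cases hc4 : t = kL + kR + 1
  -- Phase 4 : middle ↔ right
  · subst hc4
    right
    have hDR : Pfun y1 w2 s a b eL eR kL kR (kL+kR+1) (pt (y1+1) (w2+b) eR kR)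
        = (y1+1, w2+b) := by
      rw [Pfun_eq3]
      simp only [Perm.mul_apply]
      rw [swap_apply_of_ne_of_ne hDR_neA hDR_neCm, cperm_top, pt_zero,
        cperm_fix_col _ _ _ _ (by simp; omega)]
    refine legalEx_of _ η _ _ (y1, w2+s) (y1+1, w2+s)
      (y1, w2+(s-f)) (pt (y1+1) (w2+b) eR kR) ?_ hCm_V hB_V
      (by simp only [d1]; omega)
      hmf_nbr hmf_V hmf_neB (hmf_val _)
      hDR_nbrB hDR_V hDR_neCm (by rw [hDR]; exact hbm)
    rw [Pfun_eq4, Pfun_eq3]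
  by_cases hc5 : t = kL + kR + 2
  -- Phase 5 : middle ↔ ⋆ site again
  · subst hc5
    right
    have hDL : Pfun y1 w2 s a b eL eR kL kR (kL+kR+2) (pt (y1-1) (w2+a) eL kL)
        = (y1-1, w2+a) := by
      rw [Pfun_eq4]
      simp only [Perm.mul_apply]
      rw [swap_apply_of_ne_of_ne hDL_neCm hDL_neB,
        swap_apply_of_ne_of_ne hDL_neA hDL_neCm,
        cperm_fix_col _ _ _ _ hDL_col, cperm_top, pt_zero]
    refine legalEx_of _ η _ _ (y1-1, w2+s) (y1, w2+s)
      (pt (y1-1) (w2+a) eL kL) (y1, w2+(s-f)) ?_ hA_V hCm_V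
      (by simp only [d1]; omega)
      hDL_nbrA hDL_V hDL_neCm (by rw [hDL]; exact ham)
      hmf_nbr hmf_V hmf_neA (hmf_val _)
    rw [Pfun_eq5 y1 w2 s a b eL eR kL kR le_rfl (by omega), Pfun_eq4,
      Nat.sub_self]
    rw [show rperm (y1+1) (w2+b) eR kR 0 = 1 from rfl, mul_one,
      ← triple_swap hCmB hAB]
    simp only [mul_assoc]
  by_cases hc6 : t < kL + kR + 3 + kR
  -- Phase 6 : reverse right chain
  · right
    have hj : kL + kR + 3 ≤ t := by omega
    obtain ⟨c1, c2, c3⟩ := chain_row_bounds (w2 := w2) heR hsb hb1 hb2 hs1 hs2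
      (show kR - 1 - (t - (kL+kR+3)) ≤ kR by omega)
    obtain ⟨c1', c2', c3'⟩ := chain_row_bounds (w2 := w2) heR hsb hb1 hb2 hs1 hs2
      (show (kR - 1 - (t - (kL+kR+3))) + 1 ≤ kR by omega)
    refine chain_step y1 w2 s ℓ η hmid2 _ _ (y1+1) (w2+b) eR heR
      (kR - 1 - (t - (kL+kR+3))) (Or.inr rfl)
      ?_ c1 c2 c3 c1' c2' c3' (hfix t)
    rw [show (kR - 1 - (t - (kL+kR+3))) + 1 = kR - (t - (kL+kR+3)) from by omega,
      Pfun_eq5 y1 w2 s a b eL eR kL kR (by omega) (by omega),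
      Pfun_eq5 y1 w2 s a b eL eR kL kR (by omega) (by omega),
      show t+1-(kL+kR+3) = (t-(kL+kR+3))+1 from by omega]
    simp only [rperm, mul_assoc]
  by_cases hc7 : t < kL + kR + 3 + kR + kL
  -- Phase 7 : reverse left chain
  · right
    have hj : kL + kR + 3 + kR ≤ t := by omega
    obtain ⟨c1, c2, c3⟩ := chain_row_bounds (w2 := w2) heL hsa ha1 ha2 hs1 hs2
      (show kL - 1 - (t - (kL+kR+3+kR)) ≤ kL by omega)
    obtain ⟨c1', c2', c3'⟩ := chain_row_bounds (w2 := w2) heL hsa ha1 ha2 hs1 hs2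
      (show (kL - 1 - (t - (kL+kR+3+kR))) + 1 ≤ kL by omega)
    refine chain_step y1 w2 s ℓ η hmid2 _ _ (y1-1) (w2+a) eL heL
      (kL - 1 - (t - (kL+kR+3+kR))) (Or.inl rfl)
      ?_ c1 c2 c3 c1' c2' c3' (hfix t)
    rw [show (kL - 1 - (t - (kL+kR+3+kR))) + 1 = kL - (t - (kL+kR+3+kR)) from by omega,
      Pfun_eq6 y1 w2 s a b eL eR kL kR (by omega) (by omega),
      Pfun_eq6 y1 w2 s a b eL eR kL kR (by omega) (by omega),
      show t+1-(kL+kR+3+kR) = (t-(kL+kR+3+kR))+1 from by omega]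
    simp only [rperm, mul_assoc]
  -- Phase 8 : idle
  · left
    rw [Pfun_eq7 y1 w2 s a b eL eR kL kR (by omega),
      Pfun_eq7 y1 w2 s a b eL eR kL kR (by omega)]

/-! ### Choice of the empty sites, and the move -/

open Classical in
noncomputable def aOf (y : ℤ × ℤ) (ℓ : ℕ) (s : ℤ) (η : ℤ × ℤ → Bool) : ℤ :=
  if h : η ∈ DomStar y ℓ s then h.2.1.choose else 1

open Classical in
noncomputable def bOf (y : ℤ × ℤ) (ℓ : ℕ) (s : ℤ) (η : ℤ × ℤ → Bool) : ℤ :=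
  if h : η ∈ DomStar y ℓ s then h.2.2.choose else 1

lemma aOf_spec {y : ℤ × ℤ} {ℓ : ℕ} {s : ℤ} {η : ℤ × ℤ → Bool}
    (h : η ∈ DomStar y ℓ s) :
    1 ≤ aOf y ℓ s η ∧ aOf y ℓ s η ≤ (ℓ:ℤ) ∧ aOf y ℓ s η ≠ s ∧
      η (y.1 - 1, y.2 + aOf y ℓ s η) = false := by
  rw [aOf, dif_pos h]
  obtain ⟨h1, h2, h3, h4⟩ := h.2.1.choose_spec
  exact ⟨h1, h2, h3, h4⟩

lemma bOf_spec {y : ℤ × ℤ} {ℓ : ℕ} {s : ℤ} {η : ℤ × ℤ → Bool}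
    (h : η ∈ DomStar y ℓ s) :
    1 ≤ bOf y ℓ s η ∧ bOf y ℓ s η ≤ (ℓ:ℤ) ∧ bOf y ℓ s η ≠ s ∧
      η (y.1 + 1, y.2 + bOf y ℓ s η) = false := by
  rw [bOf, dif_pos h]
  obtain ⟨h1, h2, h3, h4⟩ := h.2.2.choose_spec
  exact ⟨h1, h2, h3, h4⟩

def eOf (s a : ℤ) : ℤ := if a < s then 1 else -1

def kOf (s a : ℤ) : ℕ := (s - a).natAbs - 1

lemma e_spec (s a : ℤ) (h : a ≠ s) :
    (eOf s a = 1 ∨ eOf s a = -1) ∧ s - a = eOf s a * (kOf s a + 1) := by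
  unfold eOf kOf
  split_ifs with h'
  · exact ⟨Or.inl rfl, by rw [one_mul]; omega⟩
  · exact ⟨Or.inr rfl, by rw [neg_one_mul]; omega⟩

lemma kOf_le {s a : ℤ} {ℓ : ℕ} (h1 : 1 ≤ s) (h2 : s ≤ (ℓ:ℤ))
    (h3 : 1 ≤ a) (h4 : a ≤ (ℓ:ℤ)) : kOf s a + 1 ≤ ℓ := by
  unfold kOf; omega

/-- The move. -/
noncomputable def Mmove (y : ℤ × ℤ) (ℓ : ℕ) (s : ℤ) (t : ℕ)
    (η : ℤ × ℤ → Bool) : ℤ × ℤ → Bool :=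
  fun z => η (Pfun y.1 y.2 s (aOf y ℓ s η) (bOf y ℓ s η)
    (eOf s (aOf y ℓ s η)) (eOf s (bOf y ℓ s η))
    (kOf s (aOf y ℓ s η)) (kOf s (bOf y ℓ s η)) t z)

lemma swap2_eq (η : ℤ × ℤ → Bool) (x y : ℤ × ℤ) :
    (fun z => η (Equiv.swap x y z)) = swap2 η x y := by
  funext z
  simp only [swap2, Equiv.swap_apply_def]
  split_ifs <;> rfl

end KA2f

/-- Claim 3.8 (moving a marked site across an empty column, KA-2f in `d = 2`): there is a
constant `C` such that for every `ℓ ≥ 2`, `y ∈ ℤ²` and marked site `⋆ = y + (-1, s)` with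
`s ∈ [ℓ]`, there is a `T`-step move with domain `DomStar y ℓ s`, taking place in the three
columns `y + {-1,0,1} × [ℓ]`, with `T ≤ C ℓ` and information loss `≤ C log₂ ℓ`, whose
final state exchanges the occupation values at `⋆` and `⋆ + (2,0)`. -/
theorem move_marked_site :
    ∃ C : ℝ, 0 < C ∧ ∀ ℓ : ℕ, 2 ≤ ℓ → ∀ y : ℤ × ℤ, ∀ s : ℤ, 1 ≤ s → s ≤ (ℓ : ℤ) →
      ∃ (T : ℕ) (M : ℕ → (ℤ × ℤ → Bool) → (ℤ × ℤ → Bool)),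
        (T : ℝ) ≤ C * ℓ ∧
        IsTMove2 (cols3 y ℓ) (DomStar y ℓ s) M T ∧
        LossLE2 (DomStar y ℓ s) M T (C * Real.logb 2 ℓ) ∧
        ∀ η ∈ DomStar y ℓ s,
          M T η = swap2 η (y.1 - 1, y.2 + s) (y.1 + 1, y.2 + s) := by
  classical
  refine ⟨10, by norm_num, fun ℓ hl2 y s hs1 hs2 => ?_⟩
  refine ⟨4*ℓ+3, KA2f.Mmove y ℓ s, ?_, ?_, ?_, ?_⟩
  · -- length bound
    push_cast
    have : (2:ℝ) ≤ ℓ := by exact_mod_cast hl2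
    nlinarith
  · -- is a T-step move
    intro η hη
    obtain ⟨ha1, ha2, ha3, ha4⟩ := KA2f.aOf_spec hη
    obtain ⟨hb1, hb2, hb3, hb4⟩ := KA2f.bOf_spec hη
    obtain ⟨heL, hsa⟩ := KA2f.e_spec s (KA2f.aOf y ℓ s η) ha3
    obtain ⟨heR, hsb⟩ := KA2f.e_spec s (KA2f.bOf y ℓ s η) hb3
    constructor
    · funext z
      show η (KA2f.Pfun _ _ _ _ _ _ _ _ _ 0 z) = η z
      rw [KA2f.Pfun_zero]
      rfl
    · intro t _
      have hmid2 : ∀ r : ℤ, 1 ≤ r - y.2 → r - y.2 ≤ (ℓ:ℤ) → η (y.1, r) = false := by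
        intro r h1 h2
        have := hη.1 (r - y.2) h1 h2
        rwa [show y.2 + (r - y.2) = r from by ring] at this
      have := KA2f.step_main y.1 y.2 s (KA2f.aOf y ℓ s η) (KA2f.bOf y ℓ s η)
        (KA2f.eOf s (KA2f.aOf y ℓ s η)) (KA2f.eOf s (KA2f.bOf y ℓ s η))
        (KA2f.kOf s (KA2f.aOf y ℓ s η)) (KA2f.kOf s (KA2f.bOf y ℓ s η)) ℓ
        hl2 hs1 hs2 ha1 ha2 hb1 hb2 heL heR hsa hsb η hmid2 ha4 hb4 t
      exact this.imp id id
  · -- loss bound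
    intro t _ η' hη'
    set S := {η | η ∈ DomStar y ℓ s ∧ KA2f.Mmove y ℓ s t η = KA2f.Mmove y ℓ s t η' ∧
      KA2f.Mmove y ℓ s (t+1) η = KA2f.Mmove y ℓ s (t+1) η'} with hS
    have hinj : S.InjOn (fun η => (KA2f.aOf y ℓ s η, KA2f.bOf y ℓ s η)) := by
      intro η₁ h₁ η₂ h₂ heq
      have hab : KA2f.aOf y ℓ s η₁ = KA2f.aOf y ℓ s η₂ ∧
          KA2f.bOf y ℓ s η₁ = KA2f.bOf y ℓ s η₂ := by
        constructor
        · exact congrArg Prod.fst heq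
        · exact congrArg Prod.snd heq
      have hM : KA2f.Mmove y ℓ s t η₁ = KA2f.Mmove y ℓ s t η₂ :=
        h₁.2.1.trans h₂.2.1.symm
      funext w
      have := congrFun hM
        ((KA2f.Pfun y.1 y.2 s (KA2f.aOf y ℓ s η₁) (KA2f.bOf y ℓ s η₁)
          (KA2f.eOf s (KA2f.aOf y ℓ s η₁)) (KA2f.eOf s (KA2f.bOf y ℓ s η₁))
          (KA2f.kOf s (KA2f.aOf y ℓ s η₁)) (KA2f.kOf s (KA2f.bOf y ℓ s η₁)) t)⁻¹ w)
      unfold KA2f.Mmove at this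
      rw [← hab.1, ← hab.2] at this
      simpa using this
    have hsub : ∀ η ∈ S, (fun η => (KA2f.aOf y ℓ s η, KA2f.bOf y ℓ s η)) η ∈
        (Set.Icc (1:ℤ) ℓ) ×ˢ (Set.Icc (1:ℤ) ℓ) := by
      intro η hη
      obtain ⟨ha1, ha2, -, -⟩ := KA2f.aOf_spec hη.1
      obtain ⟨hb1, hb2, -, -⟩ := KA2f.bOf_spec hη.1
      exact ⟨⟨ha1, ha2⟩, ⟨hb1, hb2⟩⟩
    have hfin : ((Set.Icc (1:ℤ) ℓ) ×ˢ (Set.Icc (1:ℤ) ℓ)).Finite :=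
      (Set.finite_Icc _ _).prod (Set.finite_Icc _ _)
    have hcard : S.ncard ≤ ℓ * ℓ := by
      have h1 := Set.ncard_le_ncard_of_injOn _ hsub hinj hfin
      have h2 : ((Set.Icc (1:ℤ) ℓ) ×ˢ (Set.Icc (1:ℤ) ℓ)).ncard = ℓ * ℓ := by
        have hn : ((ℓ:ℤ)+1-1).toNat = ℓ := by omega
        rw [← Finset.coe_Icc, ← Finset.coe_product,
          Set.ncard_coe_finset, Finset.card_product, Int.card_Icc, hn]
      omega
    have hl1 : (1:ℝ) ≤ (ℓ:ℝ) := by exact_mod_cast Nat.one_le_of_lt hl2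
    have hlpos : (0:ℝ) < (ℓ:ℝ) := by linarith
    calc (S.ncard : ℝ) ≤ ((ℓ * ℓ : ℕ) : ℝ) := by exact_mod_cast hcard
      _ = (ℓ:ℝ) ^ (2:ℕ) := by push_cast; ring
      _ ≤ (ℓ:ℝ) ^ (10:ℕ) := pow_le_pow_right₀ hl1 (by norm_num)
      _ = (ℓ:ℝ) ^ ((10:ℕ):ℝ) := (Real.rpow_natCast _ _).symm
      _ = ((2:ℝ) ^ (Real.logb 2 ℓ)) ^ ((10:ℕ):ℝ) := by
          rw [Real.rpow_logb (by norm_num) (by norm_num) hlpos]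
      _ = (2:ℝ) ^ (Real.logb 2 ℓ * ((10:ℕ):ℝ)) := by
          rw [← Real.rpow_mul (by norm_num)]
      _ = (2:ℝ) ^ ((10:ℝ) * Real.logb 2 ℓ) := by
          norm_num [mul_comm]
  · -- final state
    intro η hη
    obtain ⟨ha1, ha2, ha3, ha4⟩ := KA2f.aOf_spec hη
    obtain ⟨hb1, hb2, hb3, hb4⟩ := KA2f.bOf_spec hη
    obtain ⟨heL, hsa⟩ := KA2f.e_spec s (KA2f.aOf y ℓ s η) ha3
    obtain ⟨heR, hsb⟩ := KA2f.e_spec s (KA2f.bOf y ℓ s η) hb3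
    have hkL := KA2f.kOf_le hs1 hs2 ha1 ha2
    have hkR := KA2f.kOf_le hs1 hs2 hb1 hb2
    have hfin := KA2f.Pfun_final y.1 y.2 s (KA2f.aOf y ℓ s η) (KA2f.bOf y ℓ s η)
      (KA2f.eOf s (KA2f.aOf y ℓ s η)) (KA2f.eOf s (KA2f.bOf y ℓ s η))
      (KA2f.kOf s (KA2f.aOf y ℓ s η)) (KA2f.kOf s (KA2f.bOf y ℓ s η))
      heL heR hsa hsb (t := 4*ℓ+3) (by omega)
    show (fun z => η (KA2f.Pfun _ _ _ _ _ _ _ _ _ (4*ℓ+3) z)) = _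
    rw [hfin]
    exact KA2f.swap2_eq η _ _
end

section
/- Claim (framing an almost good box, KA-2f in d = 2): Fix the box B = [ℓ]² ⊂ Z² and let M_dom be the set of configurations η ∈ {0,1}^{Z²} such that B is almost good for η (every row and every column of B contains at least one empty site) and the bottom row of B is empty. There exist constants C (independent of ℓ) and a T-step move M with domain M_dom, taking place in B, such that T ≤ C·ℓ², Loss(M) ≤ C·ℓ·log₂(ℓ), and for every η ∈ M_dom the final configuration M_T(η) has both the bottom row and the left column of B empty. -/
/-- The box `B = [ℓ]²`. -/
def boxSet (ℓ : ℕ) : Set (ℤ × ℤ) :=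
  {z | 1 ≤ z.1 ∧ z.1 ≤ (ℓ : ℤ) ∧ 1 ≤ z.2 ∧ z.2 ≤ (ℓ : ℤ)}

/-- Domain of the framing move: the box `[ℓ]²` is almost good (every row and every column
contains an empty site) and its bottom row `[ℓ] × {1}` is empty. -/
def DomFrame (ℓ : ℕ) : Set (ℤ × ℤ → Bool) :=
  {η | (∀ b : ℤ, 1 ≤ b → b ≤ (ℓ : ℤ) →
          ∃ a : ℤ, 1 ≤ a ∧ a ≤ (ℓ : ℤ) ∧ η (a, b) = false) ∧
       (∀ a : ℤ, 1 ≤ a → a ≤ (ℓ : ℤ) →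
          ∃ b : ℤ, 1 ≤ b ∧ b ≤ (ℓ : ℤ) ∧ η (a, b) = false) ∧
       (∀ a : ℤ, 1 ≤ a → a ≤ (ℓ : ℤ) → η (a, 1) = false)}

namespace KAF

abbrev Site := ℤ × ℤ
abbrev Sw := Site × Site

/-- the transposition of the two endpoints of `p`, as a function -/
def swF (p : Sw) (z : Site) : Site := if z = p.1 then p.2 else if z = p.2 then p.1 else z

lemma swF_invol (p : Sw) (z : Site) : swF p (swF p z) = z := by
  unfold swF
  by_cases h1 : z = p.1 <;> by_cases h2 : z = p.2 <;> simp [h1, h2] <;>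
    split_ifs <;> simp_all

lemma swap2_eq_comp (η : Site → Bool) (p : Sw) :
    swap2 η p.1 p.2 = fun z => η (swF p z) := by
  funext z
  unfold swap2 swF
  split_ifs <;> rfl

def stepE (E : Set Site) (p : Sw) : Set Site := swF p '' E

def evolve (L : List Sw) (E : Set Site) : Set Site := L.foldl stepE E

def applyL (L : List Sw) (η : Site → Bool) : Site → Bool :=
  L.foldl (fun η p => swap2 η p.1 p.2) η

@[simp] lemma evolve_nil (E : Set Site) : evolve [] E = E := rfl
@[simp] lemma evolve_cons (p : Sw) (L : List Sw) (E : Set Site) :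
    evolve (p :: L) E = evolve L (stepE E p) := rfl
lemma evolve_append (L1 L2 : List Sw) (E : Set Site) :
    evolve (L1 ++ L2) E = evolve L2 (evolve L1 E) := List.foldl_append

@[simp] lemma applyL_nil (η : Site → Bool) : applyL [] η = η := rfl
@[simp] lemma applyL_cons (p : Sw) (L : List Sw) (η : Site → Bool) :
    applyL (p :: L) η = applyL L (swap2 η p.1 p.2) := rfl

lemma swap2_invol (η : Site → Bool) (x y : Site) :
    swap2 (swap2 η x y) x y = η := by
  rw [swap2_eq_comp (swap2 η x y) (x, y), swap2_eq_comp η (x,y)]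
  funext z
  simp [swF_invol (x,y) z]

lemma applyL_injective (L : List Sw) : Function.Injective (applyL L) := by
  induction L with
  | nil => intro a b h; simpa using h
  | cons p L ih =>
    intro a b h
    simp only [applyL_cons] at h
    have := ih h
    have h2 := congrArg (fun η => swap2 η p.1 p.2) this
    simpa [swap2_invol] using h2

/-- knowledge of emptiness -/
def Empt (η : Site → Bool) (E : Set Site) : Prop := ∀ s ∈ E, η s = false

lemma empt_step {η : Site → Bool} {E : Set Site} (h : Empt η E) (p : Sw) :
    Empt (swap2 η p.1 p.2) (stepE E p) := by
  rintro s ⟨e, he, rfl⟩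
  rw [swap2_eq_comp]
  simpa [swF_invol] using h e he

lemma empt_evolve {η : Site → Bool} {E : Set Site} (h : Empt η E) (L : List Sw) :
    Empt (applyL L η) (evolve L E) := by
  induction L generalizing η E with
  | nil => simpa
  | cons p L ih => exact ih (empt_step h p)

lemma empt_mono {η : Site → Bool} {E F : Set Site} (h : Empt η E) (hFE : F ⊆ E) :
    Empt η F := fun s hs => h s (hFE hs)

/-- legality of a prospective swap relative to known-empty set E -/
def Ok (ℓ : ℕ) (E : Set Site) (p : Sw) : Prop :=
  p.1 ∈ boxSet ℓ ∧ p.2 ∈ boxSet ℓ ∧ d1 p.1 p.2 = 1 ∧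
  (∃ z ∈ nbrs2 p.1, z ∈ boxSet ℓ ∧ z ≠ p.2 ∧ z ∈ E) ∧
  (∃ z ∈ nbrs2 p.2, z ∈ boxSet ℓ ∧ z ≠ p.1 ∧ z ∈ E)

def Good (ℓ : ℕ) : List Sw → Set Site → Prop
  | [], _ => True
  | p :: L, E => Ok ℓ E p ∧ Good ℓ L (stepE E p)

@[simp] lemma good_nil (ℓ : ℕ) (E : Set Site) : Good ℓ [] E := trivial
@[simp] lemma good_cons (ℓ : ℕ) (p : Sw) (L : List Sw) (E : Set Site) :
    Good ℓ (p :: L) E ↔ Ok ℓ E p ∧ Good ℓ L (stepE E p) := Iff.rfl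

lemma good_append (ℓ : ℕ) (L1 L2 : List Sw) (E : Set Site) :
    Good ℓ (L1 ++ L2) E ↔ Good ℓ L1 E ∧ Good ℓ L2 (evolve L1 E) := by
  induction L1 generalizing E with
  | nil => simp
  | cons p L ih => simp [ih, and_assoc]

lemma ok_mono {ℓ : ℕ} {E F : Set Site} (h : E ⊆ F) {p : Sw} (hp : Ok ℓ E p) : Ok ℓ F p := by
  obtain ⟨h1, h2, h3, ⟨z, hz1, hz2, hz3, hz4⟩, ⟨w, hw1, hw2, hw3, hw4⟩⟩ := hp
  exact ⟨h1, h2, h3, ⟨z, hz1, hz2, hz3, h hz4⟩, ⟨w, hw1, hw2, hw3, h hw4⟩⟩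

lemma stepE_mono {E F : Set Site} (h : E ⊆ F) (p : Sw) : stepE E p ⊆ stepE F p :=
  Set.image_mono h

lemma evolve_mono {E F : Set Site} (h : E ⊆ F) (L : List Sw) :
    evolve L E ⊆ evolve L F := by
  induction L generalizing E F with
  | nil => simpa
  | cons p L ih => exact ih (stepE_mono h p)

lemma good_mono {ℓ : ℕ} {E F : Set Site} (h : E ⊆ F) {L : List Sw} (hg : Good ℓ L E) :
    Good ℓ L F := by
  induction L generalizing E F with
  | nil => trivial
  | cons p L ih => exact ⟨ok_mono h hg.1, ih (stepE_mono h p) hg.2⟩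

lemma stepE_union (A B : Set Site) (p : Sw) : stepE (A ∪ B) p = stepE A p ∪ stepE B p :=
  Set.image_union _ _ _

lemma evolve_union (A B : Set Site) (L : List Sw) :
    evolve L (A ∪ B) = evolve L A ∪ evolve L B := by
  induction L generalizing A B with
  | nil => rfl
  | cons p L ih => simp [stepE_union, ih]

lemma stepE_fixed {B : Set Site} {p : Sw} (h1 : p.1 ∉ B) (h2 : p.2 ∉ B) :
    stepE B p = B := by
  unfold stepE
  have : ∀ b ∈ B, swF p b = b := by
    intro b hb
    unfold swF
    rw [if_neg (by rintro rfl; exact h1 hb), if_neg (by rintro rfl; exact h2 hb)]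
  rw [Set.image_congr this]; exact Set.image_id B

lemma evolve_fixed {B : Set Site} {L : List Sw} (h : ∀ p ∈ L, p.1 ∉ B ∧ p.2 ∉ B) :
    evolve L B = B := by
  induction L with
  | nil => rfl
  | cons p L ih =>
    have := h p (by simp)
    rw [evolve_cons, stepE_fixed this.1 this.2]
    exact ih fun q hq => h q (by simp [hq])

lemma stepE_swap {E : Set Site} {p : Sw} (h1 : p.1 ∉ E) (h2 : p.2 ∈ E) :
    stepE E p = insert p.1 (E \ {p.2}) := by
  have hne : p.1 ≠ p.2 := by rintro h; rw [h] at h1; exact h1 h2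
  ext z
  simp only [stepE, Set.mem_image, Set.mem_insert_iff, Set.mem_diff, Set.mem_singleton_iff]
  constructor
  · rintro ⟨e, he, rfl⟩
    unfold swF
    by_cases hx : e = p.1
    · exact absurd (hx ▸ he) h1
    · by_cases hy : e = p.2
      · simp [hx, hy]
      · simp only [if_neg hx, if_neg hy]
        exact Or.inr ⟨he, hy⟩
  · rintro (rfl | ⟨hz, hzne⟩)
    · exact ⟨p.2, h2, by simp [swF, hne.symm]⟩
    · refine ⟨z, hz, ?_⟩
      unfold swF
      rw [if_neg (by rintro rfl; exact h1 hz), if_neg hzne]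

/-- generic loop lemma -/
lemma good_range (ℓ : ℕ) (f : ℕ → Sw) (Einv : ℕ → Set Site) (n : ℕ)
    (h1 : ∀ j < n, Ok ℓ (Einv j) (f j))
    (h2 : ∀ j < n, stepE (Einv j) (f j) = Einv (j + 1)) :
    Good ℓ ((List.range n).map f) (Einv 0) ∧
      evolve ((List.range n).map f) (Einv 0) = Einv n := by
  induction n with
  | zero => simp
  | succ n ih =>
    obtain ⟨hg, he⟩ := ih (fun j hj => h1 j (by omega)) (fun j hj => h2 j (by omega))
    rw [List.range_succ, List.map_append]
    constructor
    · rw [good_append]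
      refine ⟨hg, ?_⟩
      simp only [List.map_cons, List.map_nil, he, good_cons, good_nil, and_true]
      exact h1 n (by omega)
    · rw [evolve_append, he]
      simp only [List.map_cons, List.map_nil, evolve_cons, evolve_nil]
      exact h2 n (by omega)

lemma ok_legal {ℓ : ℕ} {E : Set Site} {p : Sw} {η : Site → Bool}
    (hok : Ok ℓ E p) (hE : Empt η E) :
    LegalEx2 (boxSet ℓ) η (swap2 η p.1 p.2) := by
  obtain ⟨h1, h2, h3, ⟨z, hz1, hz2, hz3, hz4⟩, ⟨w, hw1, hw2, hw3, hw4⟩⟩ := hok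
  exact ⟨p.1, p.2, h1, h2, h3, ⟨z, hz1, hz2, hz3, hE z hz4⟩,
    ⟨w, hw1, hw2, hw3, hE w hw4⟩, rfl⟩

lemma good_legal (ℓ : ℕ) :
    ∀ (L : List Sw) (E : Set Site) (η : Site → Bool), Good ℓ L E → Empt η E →
      ∀ t, t < L.length →
        LegalEx2 (boxSet ℓ) (applyL (L.take t) η) (applyL (L.take (t + 1)) η) := by
  intro L
  induction L with
  | nil => intro E η _ _ t ht; simp at ht
  | cons p L ih =>
    intro E η hg hE t ht
    match t with
    | 0 =>
      simpa using ok_legal hg.1 hE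
    | (t + 1) =>
      have : (p :: L).take (t + 1 + 1) = p :: L.take (t + 1) := rfl
      rw [this, show (p :: L).take (t + 1) = p :: L.take t from rfl,
        applyL_cons, applyL_cons]
      exact ih (stepE E p) (swap2 η p.1 p.2) hg.2 (empt_step hE p) t (by simpa using ht)
-- neighbour membership helpers
lemma mem_nbrs_left (a b : ℤ) : ((a - 1, b) : Site) ∈ nbrs2 (a, b) := by
  simp [nbrs2, Prod.ext_iff] <;> omega
lemma mem_nbrs_right (a b : ℤ) : ((a + 1, b) : Site) ∈ nbrs2 (a, b) := by
  simp [nbrs2, Prod.ext_iff] <;> omega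
lemma mem_nbrs_up (a b : ℤ) : ((a, b + 1) : Site) ∈ nbrs2 (a, b) := by
  simp [nbrs2, Prod.ext_iff] <;> omega
lemma mem_nbrs_down (a b : ℤ) : ((a, b - 1) : Site) ∈ nbrs2 (a, b) := by
  simp [nbrs2, Prod.ext_iff] <;> omega

/-- reflection across the anti-diagonal of the box `[ℓ]²` -/
def rr (ℓ : ℕ) (z : Site) : Site := ((ℓ : ℤ) + 1 - z.2, (ℓ : ℤ) + 1 - z.1)

def rrS (ℓ : ℕ) (p : Sw) : Sw := (rr ℓ p.1, rr ℓ p.2)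

@[simp] lemma rr_invol (ℓ : ℕ) (z : Site) : rr ℓ (rr ℓ z) = z := by
  simp [rr]

lemma rr_inj (ℓ : ℕ) : Function.Injective (rr ℓ) := by
  intro a b h
  have := congrArg (rr ℓ) h
  simpa using this

@[simp] lemma rr_eq_iff (ℓ : ℕ) {a b : Site} : rr ℓ a = rr ℓ b ↔ a = b :=
  ⟨fun h => rr_inj ℓ h, fun h => h ▸ rfl⟩

lemma rr_mem_box {ℓ : ℕ} {z : Site} (h : z ∈ boxSet ℓ) : rr ℓ z ∈ boxSet ℓ := by
  simp only [boxSet, Set.mem_setOf_eq, rr] at *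
  omega

lemma rr_d1 (ℓ : ℕ) (z w : Site) : d1 (rr ℓ z) (rr ℓ w) = d1 z w := by
  simp only [d1, rr]
  omega

lemma rr_mem_nbrs {ℓ : ℕ} {z x : Site} (h : z ∈ nbrs2 x) : rr ℓ z ∈ nbrs2 (rr ℓ x) := by
  obtain ⟨z1, z2⟩ := z
  obtain ⟨x1, x2⟩ := x
  simp only [nbrs2, Finset.mem_insert, Finset.mem_singleton, Prod.mk_add_mk,
    Prod.mk.injEq, rr] at h ⊢
  omega

lemma rr_swF (ℓ : ℕ) (p : Sw) (z : Site) : swF (rrS ℓ p) (rr ℓ z) = rr ℓ (swF p z) := by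
  obtain ⟨x, y⟩ := p
  by_cases h1 : z = x
  · simp [swF, rrS, h1]
  · by_cases h2 : z = y
    · subst h2
      simp [swF, rrS, h1]
    · simp [swF, rrS, h1, h2]

lemma rr_stepE (ℓ : ℕ) (E : Set Site) (p : Sw) :
    stepE (rr ℓ '' E) (rrS ℓ p) = rr ℓ '' stepE E p := by
  unfold stepE
  rw [← Set.image_comp, ← Set.image_comp]
  apply Set.image_congr
  intro a _
  exact rr_swF ℓ p a

lemma rr_evolve (ℓ : ℕ) (L : List Sw) (E : Set Site) :
    evolve (L.map (rrS ℓ)) (rr ℓ '' E) = rr ℓ '' evolve L E := by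
  induction L generalizing E with
  | nil => rfl
  | cons p L ih => simp [rr_stepE, ih]

lemma rr_ok {ℓ : ℕ} {E : Set Site} {p : Sw} (h : Ok ℓ E p) : Ok ℓ (rr ℓ '' E) (rrS ℓ p) := by
  obtain ⟨h1, h2, h3, ⟨z, hz1, hz2, hz3, hz4⟩, ⟨w, hw1, hw2, hw3, hw4⟩⟩ := h
  refine ⟨rr_mem_box h1, rr_mem_box h2, by rw [show (rrS ℓ p).1 = rr ℓ p.1 from rfl,
    show (rrS ℓ p).2 = rr ℓ p.2 from rfl, rr_d1]; exact h3,
    ⟨rr ℓ z, rr_mem_nbrs hz1, rr_mem_box hz2, by simpa [rrS] using hz3, ⟨z, hz4, rfl⟩⟩,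
    ⟨rr ℓ w, rr_mem_nbrs hw1, rr_mem_box hw2, by simpa [rrS] using hw3, ⟨w, hw4, rfl⟩⟩⟩

lemma rr_good {ℓ : ℕ} {L : List Sw} {E : Set Site} (h : Good ℓ L E) :
    Good ℓ (L.map (rrS ℓ)) (rr ℓ '' E) := by
  induction L generalizing E with
  | nil => trivial
  | cons p L ih =>
    refine ⟨rr_ok h.1, ?_⟩
    rw [rr_stepE]
    exact ih h.2
lemma stepE_swap' {E : Set Site} {p : Sw} (h1 : p.1 ∈ E) (h2 : p.2 ∉ E) :
    stepE E p = insert p.2 (E \ {p.1}) := by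
  have hc : stepE E p = stepE E (p.2, p.1) := by
    unfold stepE
    apply Set.image_congr
    intro a _
    unfold swF
    by_cases hx : a = p.1 <;> by_cases hy : a = p.2 <;> simp [hx, hy] <;> simp_all
  rw [hc]
  exact stepE_swap (p := (p.2, p.1)) h2 h1

/-- horizontal segment: columns lo..hi of row c -/
def seg (lo hi c : ℤ) : Set Site := {p | lo ≤ p.1 ∧ p.1 ≤ hi ∧ p.2 = c}

/-- move the hole of row (c+1) (at column k) to column 1 -/
def liftS0 (c k : ℤ) : List Sw :=
  (List.range (k - 1).toNat).map fun j : ℕ => ((k - (j : ℤ) - 1, c + 1), (k - (j : ℤ), c + 1))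
/-- raise the platform row c into row c+1 at columns 2..(ℓ-1) -/
def liftS1 (L c : ℤ) : List Sw :=
  (List.range (L - 2).toNat).map fun j : ℕ => ((2 + (j : ℤ), c), (2 + (j : ℤ), c + 1))
/-- walk the remaining hole from (1,c) to (ℓ-1,c) -/
def liftS2 (L c : ℤ) : List Sw :=
  (List.range (L - 2).toNat).map fun j : ℕ => ((1 + (j : ℤ), c), (2 + (j : ℤ), c))
/-- final corner dance -/
def liftT (L c : ℤ) : List Sw :=
  [((L, c + 1), (L - 1, c + 1)), ((L - 1, c), (L - 1, c + 1))]

def lift (L c k : ℤ) : List Sw := liftS0 c k ++ liftS1 L c ++ liftS2 L c ++ liftT L c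

lemma lift_rows {L c k : ℤ} {p : Sw} (hp : p ∈ lift L c k) :
    (p.1.2 = c ∨ p.1.2 = c + 1) ∧ (p.2.2 = c ∨ p.2.2 = c + 1) := by
  simp only [lift, liftS0, liftS1, liftS2, liftT, List.mem_append, List.mem_map,
    List.mem_range, List.mem_cons, List.mem_singleton, List.not_mem_nil] at hp
  rcases hp with ((⟨j, _, rfl⟩ | ⟨j, _, rfl⟩) | ⟨j, _, rfl⟩) | rfl | rfl | h <;>
    first | exact h.elim | simp
lemma liftS0_good (ℓ : ℕ) (c k : ℤ) (hc1 : 1 ≤ c) (hc2 : c + 1 ≤ (ℓ : ℤ))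
    (hk1 : 1 ≤ k) (hk2 : k ≤ (ℓ : ℤ)) :
    Good ℓ (liftS0 c k) (seg 1 ℓ c ∪ {(k, c + 1)}) ∧
      evolve (liftS0 c k) (seg 1 ℓ c ∪ {(k, c + 1)}) = seg 1 ℓ c ∪ {(1, c + 1)} := by
  unfold liftS0
  have main := good_range ℓ (fun j : ℕ => ((k - (j : ℤ) - 1, c + 1), (k - (j : ℤ), c + 1)))
    (fun j => seg 1 ℓ c ∪ {(k - j, c + 1)}) (k - 1).toNat ?ok ?st
  case ok =>
    intro j hj
    have hj' : (j : ℤ) ≤ k - 2 := by omega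
    refine ⟨?_, ?_, ?_,
      ⟨(k - j - 1, c + 1 - 1), mem_nbrs_down _ _, ?_, ?_, ?_⟩,
      ⟨(k - j, c + 1 - 1), mem_nbrs_down _ _, ?_, ?_, ?_⟩⟩
    · simp only [boxSet, Set.mem_setOf_eq]; omega
    · simp only [boxSet, Set.mem_setOf_eq]; omega
    · simp only [d1]; omega
    · simp only [boxSet, Set.mem_setOf_eq]; omega
    · intro h; simp only [Prod.ext_iff] at h; omega
    · simp only [seg, Set.mem_union, Set.mem_setOf_eq, Set.mem_singleton_iff,
        Prod.ext_iff, and_true, true_and, true_or, or_true, false_or, or_false]; omega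
    · simp only [boxSet, Set.mem_setOf_eq]; omega
    · intro h; simp only [Prod.ext_iff] at h; omega
    · simp only [seg, Set.mem_union, Set.mem_setOf_eq, Set.mem_singleton_iff,
        Prod.ext_iff, and_true, true_and, true_or, or_true, false_or, or_false]; omega
  case st =>
    intro j hj
    have hnm : ((k - (j : ℤ) - 1, c + 1) : Site) ∉ seg 1 ℓ c ∪ {((k - (j : ℤ)), c + 1)} := by
      simp only [seg, Set.mem_union, Set.mem_setOf_eq, Set.mem_singleton_iff,
        Prod.ext_iff, and_true, true_and, true_or, or_true, false_or, or_false]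
      omega
    have hm : (((k - (j : ℤ)), c + 1) : Site) ∈ seg 1 ℓ c ∪ {((k - (j : ℤ)), c + 1)} := by
      simp
    rw [stepE_swap (p := ((k - (j : ℤ) - 1, c + 1), ((k - (j : ℤ)), c + 1))) hnm hm]
    ext ⟨u, v⟩
    simp only [seg, Set.mem_union, Set.mem_setOf_eq, Set.mem_singleton_iff,
      Set.mem_insert_iff, Set.mem_diff, Prod.ext_iff]
    push_cast
    omega
  obtain ⟨hg, he⟩ := main
  simp only [Nat.cast_zero, sub_zero] at hg he
  refine ⟨hg, ?_⟩
  rw [he]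
  have h2 : ((k - 1).toNat : ℤ) = k - 1 := by omega
  rw [h2]
  have h3 : k - (k - 1) = 1 := by ring
  rw [h3]
lemma liftS1_good (ℓ : ℕ) (hl : 2 ≤ ℓ) (c : ℤ) (hc1 : 1 ≤ c) (hc2 : c + 1 ≤ (ℓ : ℤ)) :
    Good ℓ (liftS1 ℓ c) (seg 1 ℓ c ∪ {(1, c + 1)}) ∧
      evolve (liftS1 ℓ c) (seg 1 ℓ c ∪ {(1, c + 1)})
        = {((1 : ℤ), c)} ∪ seg ℓ ℓ c ∪ seg 1 ((ℓ : ℤ) - 1) (c + 1) := by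
  unfold liftS1
  have main := good_range ℓ (fun j : ℕ => ((2 + (j : ℤ), c), (2 + (j : ℤ), c + 1)))
    (fun j : ℕ => {((1 : ℤ), c)} ∪ seg (2 + (j : ℤ)) ℓ c ∪ seg 1 (1 + (j : ℤ)) (c + 1))
    ((ℓ : ℤ) - 2).toNat ?ok ?st
  case ok =>
    intro j hj
    have hj' : (j : ℤ) ≤ (ℓ : ℤ) - 3 := by omega
    refine ⟨?_, ?_, ?_,
      ⟨(2 + (j : ℤ) + 1, c), mem_nbrs_right _ _, ?_, ?_, ?_⟩,
      ⟨(2 + (j : ℤ) - 1, c + 1), mem_nbrs_left _ _, ?_, ?_, ?_⟩⟩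
    · simp only [boxSet, Set.mem_setOf_eq]; omega
    · simp only [boxSet, Set.mem_setOf_eq]; omega
    · simp only [d1]; omega
    · simp only [boxSet, Set.mem_setOf_eq]; omega
    · intro h; simp only [Prod.ext_iff] at h; omega
    · simp only [seg, Set.mem_union, Set.mem_setOf_eq, Set.mem_singleton_iff,
        Prod.ext_iff, and_true, true_and, true_or, or_true, false_or, or_false]; omega
    · simp only [boxSet, Set.mem_setOf_eq]; omega
    · intro h; simp only [Prod.ext_iff] at h; omega
    · simp only [seg, Set.mem_union, Set.mem_setOf_eq, Set.mem_singleton_iff,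
        Prod.ext_iff, and_true, true_and, true_or, or_true, false_or, or_false]; omega
  case st =>
    intro j hj
    have hj' : (j : ℤ) ≤ (ℓ : ℤ) - 3 := by omega
    have hm : ((2 + (j : ℤ), c) : Site)
        ∈ {((1 : ℤ), c)} ∪ seg (2 + (j : ℤ)) ℓ c ∪ seg 1 (1 + (j : ℤ)) (c + 1) := by
      simp only [seg, Set.mem_union, Set.mem_setOf_eq, Set.mem_singleton_iff,
        Prod.ext_iff, and_true, true_and, true_or, or_true, false_or, or_false]; omega
    have hnm : ((2 + (j : ℤ), c + 1) : Site)
        ∉ {((1 : ℤ), c)} ∪ seg (2 + (j : ℤ)) ℓ c ∪ seg 1 (1 + (j : ℤ)) (c + 1) := by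
      simp only [seg, Set.mem_union, Set.mem_setOf_eq, Set.mem_singleton_iff,
        Prod.ext_iff, and_true, true_and, true_or, or_true, false_or, or_false]; omega
    rw [stepE_swap' (p := ((2 + (j : ℤ), c), (2 + (j : ℤ), c + 1))) hm hnm]
    ext ⟨u, v⟩
    simp only [seg, Set.mem_union, Set.mem_setOf_eq, Set.mem_singleton_iff,
      Set.mem_insert_iff, Set.mem_diff, Prod.ext_iff]
    push_cast
    omega
  obtain ⟨hg, he⟩ := main
  have e0 : {((1 : ℤ), c)} ∪ seg (2 + ((0 : ℕ) : ℤ)) ℓ c ∪ seg 1 (1 + ((0 : ℕ) : ℤ)) (c + 1)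
      = seg 1 ℓ c ∪ {(1, c + 1)} := by
    ext ⟨u, v⟩
    simp only [seg, Set.mem_union, Set.mem_setOf_eq, Set.mem_singleton_iff,
      Prod.ext_iff, and_true, true_and, true_or, or_true, false_or, or_false, Nat.cast_zero]
    omega
  have en : {((1 : ℤ), c)} ∪ seg (2 + (((ℓ : ℤ) - 2).toNat : ℤ)) ℓ c
        ∪ seg 1 (1 + (((ℓ : ℤ) - 2).toNat : ℤ)) (c + 1)
      = {((1 : ℤ), c)} ∪ seg ℓ ℓ c ∪ seg 1 ((ℓ : ℤ) - 1) (c + 1) := by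
    have h2 : ((((ℓ : ℤ) - 2).toNat : ℤ)) = (ℓ : ℤ) - 2 := by omega
    rw [h2]
    ext ⟨u, v⟩
    simp only [seg, Set.mem_union, Set.mem_setOf_eq, Set.mem_singleton_iff, Prod.ext_iff,
      and_true, true_and, true_or, or_true, false_or, or_false]
    omega
  rw [e0] at hg he
  rw [en] at he
  exact ⟨hg, he⟩

lemma liftS2_good (ℓ : ℕ) (hl : 2 ≤ ℓ) (c : ℤ) (hc1 : 1 ≤ c) (hc2 : c + 1 ≤ (ℓ : ℤ)) :
    Good ℓ (liftS2 ℓ c) ({((1 : ℤ), c)} ∪ seg ℓ ℓ c ∪ seg 1 ((ℓ : ℤ) - 1) (c + 1)) ∧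
      evolve (liftS2 ℓ c) ({((1 : ℤ), c)} ∪ seg ℓ ℓ c ∪ seg 1 ((ℓ : ℤ) - 1) (c + 1))
        = {((ℓ : ℤ) - 1, c)} ∪ seg ℓ ℓ c ∪ seg 1 ((ℓ : ℤ) - 1) (c + 1) := by
  unfold liftS2
  have main := good_range ℓ (fun j : ℕ => ((1 + (j : ℤ), c), (2 + (j : ℤ), c)))
    (fun j : ℕ => {(1 + (j : ℤ), c)} ∪ seg ℓ ℓ c ∪ seg 1 ((ℓ : ℤ) - 1) (c + 1))
    ((ℓ : ℤ) - 2).toNat ?ok ?st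
  case ok =>
    intro j hj
    have hj' : (j : ℤ) ≤ (ℓ : ℤ) - 3 := by omega
    refine ⟨?_, ?_, ?_,
      ⟨(1 + (j : ℤ), c + 1), mem_nbrs_up _ _, ?_, ?_, ?_⟩,
      ⟨(2 + (j : ℤ), c + 1), mem_nbrs_up _ _, ?_, ?_, ?_⟩⟩
    · simp only [boxSet, Set.mem_setOf_eq]; omega
    · simp only [boxSet, Set.mem_setOf_eq]; omega
    · simp only [d1]; omega
    · simp only [boxSet, Set.mem_setOf_eq]; omega
    · intro h; simp only [Prod.ext_iff] at h; omega
    · simp only [seg, Set.mem_union, Set.mem_setOf_eq, Set.mem_singleton_iff,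
        Prod.ext_iff, and_true, true_and, true_or, or_true, false_or, or_false]; omega
    · simp only [boxSet, Set.mem_setOf_eq]; omega
    · intro h; simp only [Prod.ext_iff] at h; omega
    · simp only [seg, Set.mem_union, Set.mem_setOf_eq, Set.mem_singleton_iff,
        Prod.ext_iff, and_true, true_and, true_or, or_true, false_or, or_false]; omega
  case st =>
    intro j hj
    have hj' : (j : ℤ) ≤ (ℓ : ℤ) - 3 := by omega
    have hm : ((1 + (j : ℤ), c) : Site)
        ∈ {(1 + (j : ℤ), c)} ∪ seg ℓ ℓ c ∪ seg 1 ((ℓ : ℤ) - 1) (c + 1) := by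
      simp
    have hnm : ((2 + (j : ℤ), c) : Site)
        ∉ {(1 + (j : ℤ), c)} ∪ seg ℓ ℓ c ∪ seg 1 ((ℓ : ℤ) - 1) (c + 1) := by
      simp only [seg, Set.mem_union, Set.mem_setOf_eq, Set.mem_singleton_iff,
        Prod.ext_iff, and_true, true_and, true_or, or_true, false_or, or_false]; omega
    rw [stepE_swap' (p := ((1 + (j : ℤ), c), (2 + (j : ℤ), c))) hm hnm]
    ext ⟨u, v⟩
    simp only [seg, Set.mem_union, Set.mem_setOf_eq, Set.mem_singleton_iff,
      Set.mem_insert_iff, Set.mem_diff, Prod.ext_iff]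
    push_cast
    omega
  obtain ⟨hg, he⟩ := main
  simp only [Nat.cast_zero, add_zero] at hg he
  have en : ({(1 + (((ℓ : ℤ) - 2).toNat : ℤ), c)} : Set Site) ∪ seg ℓ ℓ c
        ∪ seg 1 ((ℓ : ℤ) - 1) (c + 1)
      = {((ℓ : ℤ) - 1, c)} ∪ seg ℓ ℓ c ∪ seg 1 ((ℓ : ℤ) - 1) (c + 1) := by
    have h2 : ((((ℓ : ℤ) - 2).toNat : ℤ)) = (ℓ : ℤ) - 2 := by omega
    rw [h2]
    have h3 : 1 + ((ℓ : ℤ) - 2) = (ℓ : ℤ) - 1 := by ring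
    rw [h3]
  rw [en] at he
  exact ⟨hg, he⟩
lemma liftT_good (ℓ : ℕ) (hl : 2 ≤ ℓ) (c : ℤ) (hc1 : 1 ≤ c) (hc2 : c + 1 ≤ (ℓ : ℤ)) :
    Good ℓ (liftT ℓ c) ({((ℓ : ℤ) - 1, c)} ∪ seg ℓ ℓ c ∪ seg 1 ((ℓ : ℤ) - 1) (c + 1)) ∧
      evolve (liftT ℓ c) ({((ℓ : ℤ) - 1, c)} ∪ seg ℓ ℓ c ∪ seg 1 ((ℓ : ℤ) - 1) (c + 1))
        = seg 1 ℓ (c + 1) ∪ {((ℓ : ℤ), c)} := by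
  have hll : (2 : ℤ) ≤ (ℓ : ℤ) := by exact_mod_cast hl
  have hm1 : (((ℓ : ℤ) - 1, c + 1) : Site)
      ∈ {((ℓ : ℤ) - 1, c)} ∪ seg ℓ ℓ c ∪ seg 1 ((ℓ : ℤ) - 1) (c + 1) := by
    simp only [seg, Set.mem_union, Set.mem_setOf_eq, Set.mem_singleton_iff,
      Prod.ext_iff, and_true, true_and, true_or, or_true, false_or, or_false] <;> omega
  have hnm1 : (((ℓ : ℤ), c + 1) : Site)
      ∉ {((ℓ : ℤ) - 1, c)} ∪ seg ℓ ℓ c ∪ seg 1 ((ℓ : ℤ) - 1) (c + 1) := by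
    simp only [seg, Set.mem_union, Set.mem_setOf_eq, Set.mem_singleton_iff,
      Prod.ext_iff, and_true, true_and, true_or, or_true, false_or, or_false] <;> omega
  have hst1 : stepE ({((ℓ : ℤ) - 1, c)} ∪ seg ℓ ℓ c ∪ seg 1 ((ℓ : ℤ) - 1) (c + 1))
        (((ℓ : ℤ), c + 1), ((ℓ : ℤ) - 1, c + 1))
      = {((ℓ : ℤ) - 1, c)} ∪ seg ℓ ℓ c ∪ seg 1 ((ℓ : ℤ) - 2) (c + 1)
          ∪ {((ℓ : ℤ), c + 1)} := by
    rw [stepE_swap (p := (((ℓ : ℤ), c + 1), ((ℓ : ℤ) - 1, c + 1))) hnm1 hm1]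
    ext ⟨u, v⟩
    simp only [seg, Set.mem_union, Set.mem_setOf_eq, Set.mem_singleton_iff,
      Set.mem_insert_iff, Set.mem_diff, Prod.ext_iff, and_true, true_and, true_or,
      or_true, false_or, or_false]
    omega
  have hm2 : (((ℓ : ℤ) - 1, c) : Site)
      ∈ {((ℓ : ℤ) - 1, c)} ∪ seg ℓ ℓ c ∪ seg 1 ((ℓ : ℤ) - 2) (c + 1) ∪ {((ℓ : ℤ), c + 1)} := by
    simp only [seg, Set.mem_union, Set.mem_setOf_eq, Set.mem_singleton_iff,
      Prod.ext_iff, and_true, true_and, true_or, or_true, false_or, or_false] <;> omega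
  have hnm2 : (((ℓ : ℤ) - 1, c + 1) : Site)
      ∉ {((ℓ : ℤ) - 1, c)} ∪ seg ℓ ℓ c ∪ seg 1 ((ℓ : ℤ) - 2) (c + 1) ∪ {((ℓ : ℤ), c + 1)} := by
    simp only [seg, Set.mem_union, Set.mem_setOf_eq, Set.mem_singleton_iff,
      Prod.ext_iff, and_true, true_and, true_or, or_true, false_or, or_false] <;> omega
  have hst2 : stepE ({((ℓ : ℤ) - 1, c)} ∪ seg ℓ ℓ c ∪ seg 1 ((ℓ : ℤ) - 2) (c + 1)
        ∪ {((ℓ : ℤ), c + 1)}) ((((ℓ : ℤ) - 1), c), (((ℓ : ℤ) - 1), c + 1))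
      = seg 1 ℓ (c + 1) ∪ {((ℓ : ℤ), c)} := by
    rw [stepE_swap' (p := ((((ℓ : ℤ) - 1), c), (((ℓ : ℤ) - 1), c + 1))) hm2 hnm2]
    ext ⟨u, v⟩
    simp only [seg, Set.mem_union, Set.mem_setOf_eq, Set.mem_singleton_iff,
      Set.mem_insert_iff, Set.mem_diff, Prod.ext_iff, and_true, true_and, true_or,
      or_true, false_or, or_false]
    omega
  have ok1 : Ok ℓ ({((ℓ : ℤ) - 1, c)} ∪ seg ℓ ℓ c ∪ seg 1 ((ℓ : ℤ) - 1) (c + 1))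
      (((ℓ : ℤ), c + 1), ((ℓ : ℤ) - 1, c + 1)) := by
    refine ⟨?_, ?_, ?_,
      ⟨((ℓ : ℤ), c + 1 - 1), mem_nbrs_down _ _, ?_, ?_, ?_⟩,
      ⟨((ℓ : ℤ) - 1, c + 1 - 1), mem_nbrs_down _ _, ?_, ?_, ?_⟩⟩
    · simp only [boxSet, Set.mem_setOf_eq]; omega
    · simp only [boxSet, Set.mem_setOf_eq]; omega
    · simp only [d1]; omega
    · simp only [boxSet, Set.mem_setOf_eq]; omega
    · intro h; simp only [Prod.ext_iff] at h; omega
    · simp only [seg, Set.mem_union, Set.mem_setOf_eq, Set.mem_singleton_iff,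
        Prod.ext_iff, and_true, true_and, true_or, or_true, false_or, or_false] <;> omega
    · simp only [boxSet, Set.mem_setOf_eq]; omega
    · intro h; simp only [Prod.ext_iff] at h; omega
    · simp only [seg, Set.mem_union, Set.mem_setOf_eq, Set.mem_singleton_iff,
        Prod.ext_iff, and_true, true_and, true_or, or_true, false_or, or_false] <;> omega
  have ok2 : Ok ℓ ({((ℓ : ℤ) - 1, c)} ∪ seg ℓ ℓ c ∪ seg 1 ((ℓ : ℤ) - 2) (c + 1)
      ∪ {((ℓ : ℤ), c + 1)}) ((((ℓ : ℤ) - 1), c), (((ℓ : ℤ) - 1), c + 1)) := by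
    refine ⟨?_, ?_, ?_,
      ⟨((ℓ : ℤ) - 1 + 1, c), mem_nbrs_right _ _, ?_, ?_, ?_⟩,
      ⟨((ℓ : ℤ) - 1 + 1, c + 1), mem_nbrs_right _ _, ?_, ?_, ?_⟩⟩
    · simp only [boxSet, Set.mem_setOf_eq]; omega
    · simp only [boxSet, Set.mem_setOf_eq]; omega
    · simp only [d1]; omega
    · simp only [boxSet, Set.mem_setOf_eq]; omega
    · intro h; simp only [Prod.ext_iff] at h; omega
    · simp only [seg, Set.mem_union, Set.mem_setOf_eq, Set.mem_singleton_iff,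
        Prod.ext_iff, and_true, true_and, true_or, or_true, false_or, or_false] <;> omega
    · simp only [boxSet, Set.mem_setOf_eq]; omega
    · intro h; simp only [Prod.ext_iff] at h; omega
    · simp only [seg, Set.mem_union, Set.mem_setOf_eq, Set.mem_singleton_iff,
        Prod.ext_iff, and_true, true_and, true_or, or_true, false_or, or_false] <;> omega
  constructor
  · exact ⟨ok1, by rw [show stepE _ _ = _ from hst1]; exact ⟨ok2, trivial⟩⟩
  · show evolve [(((ℓ : ℤ), c + 1), ((ℓ : ℤ) - 1, c + 1)),
      ((((ℓ : ℤ) - 1), c), (((ℓ : ℤ) - 1), c + 1))] _ = _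
    rw [evolve_cons, evolve_cons, evolve_nil, hst1, hst2]

lemma lift_good (ℓ : ℕ) (hl : 2 ≤ ℓ) (c k : ℤ) (hc1 : 1 ≤ c) (hc2 : c + 1 ≤ (ℓ : ℤ))
    (hk1 : 1 ≤ k) (hk2 : k ≤ (ℓ : ℤ)) :
    Good ℓ (lift ℓ c k) (seg 1 ℓ c ∪ {(k, c + 1)}) ∧
      evolve (lift ℓ c k) (seg 1 ℓ c ∪ {(k, c + 1)})
        = seg 1 ℓ (c + 1) ∪ {((ℓ : ℤ), c)} := by
  obtain ⟨g0, e0⟩ := liftS0_good ℓ c k hc1 hc2 hk1 hk2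
  obtain ⟨g1, e1⟩ := liftS1_good ℓ hl c hc1 hc2
  obtain ⟨g2, e2⟩ := liftS2_good ℓ hl c hc1 hc2
  obtain ⟨g3, e3⟩ := liftT_good ℓ hl c hc1 hc2
  have E01 : evolve (liftS0 c k ++ liftS1 ℓ c) (seg 1 ℓ c ∪ {(k, c + 1)})
      = {((1 : ℤ), c)} ∪ seg ℓ ℓ c ∪ seg 1 ((ℓ : ℤ) - 1) (c + 1) := by
    rw [evolve_append, e0, e1]
  have E012 : evolve (liftS0 c k ++ liftS1 ℓ c ++ liftS2 ℓ c) (seg 1 ℓ c ∪ {(k, c + 1)})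
      = {((ℓ : ℤ) - 1, c)} ∪ seg ℓ ℓ c ∪ seg 1 ((ℓ : ℤ) - 1) (c + 1) := by
    rw [evolve_append, E01, e2]
  unfold lift
  constructor
  · rw [good_append, good_append, good_append]
    exact ⟨⟨⟨g0, by rw [e0]; exact g1⟩, by rw [evolve_append, e0, e1]; exact g2⟩,
      by rw [E012]; exact g3⟩
  · rw [evolve_append, E012, e3]
/-- deposits at column L, rows 1..n -/
def deps (L n : ℤ) : Set Site := {p | p.1 = L ∧ 1 ≤ p.2 ∧ p.2 ≤ n}
/-- initial holes of rows lo..hi, one in each row at column k b -/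
def holes (k : ℤ → ℤ) (lo hi : ℤ) : Set Site :=
  {p | ∃ b : ℤ, lo ≤ b ∧ b ≤ hi ∧ p = (k b, b)}

/-- the ascent: lift the platform up n times -/
def asc (ℓ : ℕ) (k : ℤ → ℤ) : ℕ → List Sw
  | 0 => []
  | n + 1 => asc ℓ k n ++ lift ℓ ((n : ℤ) + 1) (k ((n : ℤ) + 2))

lemma asc_good (ℓ : ℕ) (hl : 2 ≤ ℓ) (k : ℤ → ℤ)
    (hk : ∀ b : ℤ, 2 ≤ b → b ≤ (ℓ : ℤ) → 1 ≤ k b ∧ k b ≤ (ℓ : ℤ)) (n : ℕ)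
    (hn : (n : ℤ) ≤ (ℓ : ℤ) - 1) :
    Good ℓ (asc ℓ k n) (seg 1 ℓ 1 ∪ holes k 2 ℓ) ∧
      seg 1 ℓ ((n : ℤ) + 1) ∪ deps ℓ n ∪ holes k ((n : ℤ) + 2) ℓ
        ⊆ evolve (asc ℓ k n) (seg 1 ℓ 1 ∪ holes k 2 ℓ) := by
  induction n with
  | zero =>
    refine ⟨trivial, ?_⟩
    rw [show asc ℓ k 0 = [] from rfl, evolve_nil]
    rintro ⟨u, v⟩ hm
    simp only [Nat.cast_zero, deps, holes, seg, Set.mem_union, Set.mem_setOf_eq] at hm ⊢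
    rcases hm with (h | h) | h
    · left; omega
    · omega
    · right; obtain ⟨b, h1, h2, h3⟩ := h; exact ⟨b, by omega, h2, h3⟩
  | succ n ih =>
    obtain ⟨ihg, ihe⟩ := ih (by push_cast; push_cast at hn; omega)
    have hL : (2 : ℤ) ≤ (ℓ : ℤ) := by exact_mod_cast hl
    have hn' : (n : ℤ) + 2 ≤ (ℓ : ℤ) := by push_cast at hn; omega
    obtain ⟨hkb1, hkb2⟩ := hk ((n : ℤ) + 2) (by omega) (by omega)
    obtain ⟨lg, le⟩ := lift_good ℓ hl ((n : ℤ) + 1) (k ((n : ℤ) + 2)) (by omega)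
      (by omega) hkb1 hkb2
    -- the minimal set for the lift is contained in the current state
    have hminsub : seg 1 ℓ ((n : ℤ) + 1) ∪ {(k ((n : ℤ) + 2), (n : ℤ) + 1 + 1)}
        ⊆ evolve (asc ℓ k n) (seg 1 ℓ 1 ∪ holes k 2 ℓ) := by
      refine Set.union_subset ?_ ?_
      · exact fun z hz => ihe (Set.mem_union_left _ (Set.mem_union_left _ hz))
      · rintro z hz
        refine ihe (Set.mem_union_right _ ?_)
        simp only [Set.mem_singleton_iff] at hz
        exact ⟨(n : ℤ) + 2, by omega, by omega, by rw [hz, show ((n:ℤ) + 1 + 1 : ℤ) = (n:ℤ) + 2 from by ring]⟩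
    -- the rest set
    have hrestsub : deps ℓ n ∪ holes k ((n : ℤ) + 3) ℓ
        ⊆ evolve (asc ℓ k n) (seg 1 ℓ 1 ∪ holes k 2 ℓ) := by
      refine Set.union_subset ?_ ?_
      · exact fun z hz => ihe (Set.mem_union_left _ (Set.mem_union_right _ hz))
      · rintro z ⟨b, h1, h2, h3⟩
        exact ihe (Set.mem_union_right _ ⟨b, by omega, h2, h3⟩)
    -- the lift does not touch the rest set
    have hfix : evolve (lift ℓ ((n : ℤ) + 1) (k ((n : ℤ) + 2)))
        (deps ℓ n ∪ holes k ((n : ℤ) + 3) ℓ) = deps ℓ n ∪ holes k ((n : ℤ) + 3) ℓ := by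
      apply evolve_fixed
      intro p hp
      obtain ⟨hr1, hr2⟩ := lift_rows hp
      constructor
      · rintro (h | ⟨b, hb1, hb2, hb3⟩)
        · simp only [deps, Set.mem_setOf_eq] at h; push_cast at h; omega
        · have : p.1.2 = b := by rw [hb3]
          omega
      · rintro (h | ⟨b, hb1, hb2, hb3⟩)
        · simp only [deps, Set.mem_setOf_eq] at h; push_cast at h; omega
        · have : p.2.2 = b := by rw [hb3]
          omega
    constructor
    · rw [show asc ℓ k (n + 1) = asc ℓ k n ++ lift ℓ ((n : ℤ) + 1) (k ((n : ℤ) + 2)) from rfl,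
        good_append]
      exact ⟨ihg, good_mono hminsub lg⟩
    · rw [show asc ℓ k (n + 1) = asc ℓ k n ++ lift ℓ ((n : ℤ) + 1) (k ((n : ℤ) + 2)) from rfl,
        evolve_append]
      have big : evolve (lift ℓ ((n : ℤ) + 1) (k ((n : ℤ) + 2)))
            ((seg 1 ℓ ((n : ℤ) + 1) ∪ {(k ((n : ℤ) + 2), (n : ℤ) + 1 + 1)})
              ∪ (deps ℓ n ∪ holes k ((n : ℤ) + 3) ℓ))
          ⊆ evolve (lift ℓ ((n : ℤ) + 1) (k ((n : ℤ) + 2)))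
              (evolve (asc ℓ k n) (seg 1 ℓ 1 ∪ holes k 2 ℓ)) :=
        evolve_mono (Set.union_subset hminsub hrestsub) _
      rw [evolve_union, le, hfix] at big
      refine Set.Subset.trans ?_ big
      rintro ⟨u, v⟩ hm
      simp only [deps, holes, seg, Set.mem_union, Set.mem_setOf_eq,
        Set.mem_singleton_iff, Prod.ext_iff, and_true, true_and, true_or, or_true,
        false_or, or_false] at hm ⊢
      push_cast at hm
      rcases hm with (h | h) | h
      · left; left; omega
      · rcases h with ⟨h1, h2, h3⟩
        by_cases hv : v ≤ (n : ℤ)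
        · right; left; omega
        · left; right; omega
      · obtain ⟨h1, h2, h3⟩ := h
        right; right; exact ⟨v, by omega, by omega, h3.1, rfl⟩
def kone : ℤ → ℤ := fun _ => 1

/-- vertical segment -/
def vseg (a lo hi : ℤ) : Set Site := {p | p.1 = a ∧ lo ≤ p.2 ∧ p.2 ≤ hi}

/-- the full framing schedule: ascent building column ℓ and row ℓ, then the reflected
ascent building row 1 and column 1 -/
def fullL (ℓ : ℕ) (k : ℤ → ℤ) : List Sw :=
  asc ℓ k (ℓ - 1) ++ (asc ℓ kone (ℓ - 1)).map (rrS ℓ)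

lemma full_good (ℓ : ℕ) (hl : 2 ≤ ℓ) (k : ℤ → ℤ)
    (hk : ∀ b : ℤ, 2 ≤ b → b ≤ (ℓ : ℤ) → 1 ≤ k b ∧ k b ≤ (ℓ : ℤ)) :
    Good ℓ (fullL ℓ k) (seg 1 ℓ 1 ∪ holes k 2 ℓ) ∧
      seg 1 ℓ 1 ∪ vseg 1 1 ℓ ⊆ evolve (fullL ℓ k) (seg 1 ℓ 1 ∪ holes k 2 ℓ) := by
  have hL : (2 : ℤ) ≤ (ℓ : ℤ) := by exact_mod_cast hl
  have hcast : (((ℓ - 1 : ℕ)) : ℤ) = (ℓ : ℤ) - 1 := by omega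
  obtain ⟨g1, e1⟩ := asc_good ℓ hl k hk (ℓ - 1) (by omega)
  obtain ⟨g2, e2⟩ := asc_good ℓ hl kone (fun b _ _ => ⟨le_refl 1, by simp [kone]; omega⟩)
    (ℓ - 1) (by omega)
  rw [hcast] at e1 e2
  -- the reflected initial set of phase 2 is available after phase 1
  have hrrsub : rr ℓ '' (seg 1 ℓ 1 ∪ holes kone 2 ℓ)
      ⊆ evolve (asc ℓ k (ℓ - 1)) (seg 1 ℓ 1 ∪ holes k 2 ℓ) := by
    rintro z ⟨⟨u, v⟩, hw, rfl⟩
    refine e1 ?_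
    simp only [seg, holes, kone, Set.mem_union, Set.mem_setOf_eq, Prod.ext_iff] at hw
    simp only [seg, deps, holes, rr, Set.mem_union, Set.mem_setOf_eq]
    rcases hw with h | ⟨b, h1, h2, h3, h4⟩
    · by_cases hu : u = 1
      · left; left; omega
      · left; right; omega
    · left; left; omega
  constructor
  · rw [fullL, good_append]
    exact ⟨g1, good_mono hrrsub (rr_good g2)⟩
  · rw [fullL, evolve_append]
    have step1 : rr ℓ '' (seg 1 ℓ ((ℓ : ℤ) - 1 + 1) ∪ deps ℓ ((ℓ : ℤ) - 1))
        ⊆ rr ℓ '' (evolve (asc ℓ kone (ℓ - 1))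
            (seg 1 ℓ 1 ∪ holes kone 2 ℓ)) := by
      apply Set.image_mono
      intro z hz
      exact e2 (by rcases hz with h | h
                   · exact Set.mem_union_left _ (Set.mem_union_left _ h)
                   · exact Set.mem_union_left _ (Set.mem_union_right _ h))
    have step2 : rr ℓ '' (evolve (asc ℓ kone (ℓ - 1))
          (seg 1 ℓ 1 ∪ holes kone 2 ℓ))
        ⊆ evolve ((asc ℓ kone (ℓ - 1)).map (rrS ℓ))
            (evolve (asc ℓ k (ℓ - 1)) (seg 1 ℓ 1 ∪ holes k 2 ℓ)) := by
      rw [← rr_evolve]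
      exact evolve_mono hrrsub _
    refine Set.Subset.trans ?_ (Set.Subset.trans step1 step2)
    rintro ⟨u, v⟩ hz
    simp only [seg, vseg, Set.mem_union, Set.mem_setOf_eq] at hz
    refine ⟨rr ℓ (u, v), ?_, by simp⟩
    simp only [seg, deps, rr, Set.mem_union, Set.mem_setOf_eq]
    rcases hz with h | h
    · by_cases hu : u = 1
      · left; omega
      · right; omega
    · left; omega
lemma lift_len (ℓ : ℕ) (hl : 2 ≤ ℓ) (c k : ℤ) (hk2 : k ≤ (ℓ : ℤ)) :
    (lift ℓ c k).length ≤ 3 * ℓ := by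
  simp only [lift, liftS0, liftS1, liftS2, liftT, List.length_append, List.length_map,
    List.length_range, List.length_cons, List.length_nil]
  omega

lemma asc_len (ℓ : ℕ) (k : ℤ → ℤ)
    (hk : ∀ b : ℤ, 2 ≤ b → b ≤ (ℓ : ℤ) → 1 ≤ k b ∧ k b ≤ (ℓ : ℤ)) (n : ℕ)
    (hn : (n : ℤ) ≤ (ℓ : ℤ) - 1) :
    (asc ℓ k n).length ≤ 3 * ℓ * n := by
  induction n with
  | zero => simp [asc]
  | succ n ih =>
    have h1 : (asc ℓ k n).length ≤ 3 * ℓ * n := ih (by push_cast at hn ⊢; omega)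
    have h2 : (lift ℓ ((n : ℤ) + 1) (k ((n : ℤ) + 2))).length ≤ 3 * ℓ := by
      apply lift_len ℓ (by by_contra hcon; push_cast at hn; omega)
      exact (hk ((n : ℤ) + 2) (by omega) (by push_cast at hn; omega)).2
    rw [show asc ℓ k (n + 1) = asc ℓ k n ++ lift ℓ ((n : ℤ) + 1) (k ((n : ℤ) + 2)) from rfl,
      List.length_append]
    calc (asc ℓ k n).length + (lift ℓ ((n : ℤ) + 1) (k ((n : ℤ) + 2))).length
        ≤ 3 * ℓ * n + 3 * ℓ := by omega
      _ = 3 * ℓ * (n + 1) := by ring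

lemma full_len (ℓ : ℕ) (hl : 2 ≤ ℓ) (k : ℤ → ℤ)
    (hk : ∀ b : ℤ, 2 ≤ b → b ≤ (ℓ : ℤ) → 1 ≤ k b ∧ k b ≤ (ℓ : ℤ)) :
    (fullL ℓ k).length ≤ 6 * ℓ ^ 2 := by
  have hk1 : ∀ b : ℤ, 2 ≤ b → b ≤ (ℓ : ℤ) → 1 ≤ kone b ∧ kone b ≤ (ℓ : ℤ) := by
    intro b hb1 hb2
    refine ⟨le_refl 1, ?_⟩
    simp only [kone]
    omega
  have h1 := asc_len ℓ k hk (ℓ - 1) (by omega)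
  have h2 := asc_len ℓ kone hk1 (ℓ - 1) (by omega)
  rw [fullL, List.length_append, List.length_map]
  have h3 : 3 * ℓ * (ℓ - 1) ≤ 3 * ℓ * ℓ := Nat.mul_le_mul_left _ (by omega)
  have h4 : 3 * ℓ * ℓ + 3 * ℓ * ℓ = 6 * ℓ ^ 2 := by ring
  omega

open Classical in
/-- the choice of a hole in each row -/
noncomputable def kfun (ℓ : ℕ) (η : Site → Bool) : ℤ → ℤ := fun b =>
  if h : ∃ a : ℤ, 1 ≤ a ∧ a ≤ (ℓ : ℤ) ∧ η (a, b) = false then Classical.choose h else 1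

lemma kfun_bounds (ℓ : ℕ) (hl : 1 ≤ ℓ) (η : Site → Bool) (b : ℤ) :
    1 ≤ kfun ℓ η b ∧ kfun ℓ η b ≤ (ℓ : ℤ) := by
  unfold kfun
  split
  · next h => exact ⟨(Classical.choose_spec h).1, (Classical.choose_spec h).2.1⟩
  · constructor
    · exact le_refl 1
    · exact_mod_cast hl

lemma kfun_empty (ℓ : ℕ) (η : Site → Bool) (b : ℤ)
    (h : ∃ a : ℤ, 1 ≤ a ∧ a ≤ (ℓ : ℤ) ∧ η (a, b) = false) :
    η (kfun ℓ η b, b) = false := by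
  unfold kfun
  rw [dif_pos h]
  exact (Classical.choose_spec h).2.2

lemma dom_empt (ℓ : ℕ) (η : Site → Bool) (hη : η ∈ DomFrame ℓ) :
    Empt η (seg 1 ℓ 1 ∪ holes (kfun ℓ η) 2 ℓ) := by
  obtain ⟨hrow, _, hbot⟩ := hη
  rintro ⟨u, v⟩ (h | ⟨b, h1, h2, h3⟩)
  · obtain ⟨h4, h5, h6⟩ := h
    simp only at h4 h5 h6
    rw [show ((u, v) : Site) = (u, 1) from by rw [h6]]
    exact hbot u h4 h5
  · rw [h3]
    exact kfun_empty ℓ η b (hrow b (by omega) h2)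

/-- the move -/
noncomputable def Mdef (ℓ : ℕ) : ℕ → (Site → Bool) → (Site → Bool) :=
  fun t η => applyL ((fullL ℓ (kfun ℓ η)).take t) η
lemma asc_congr (ℓ : ℕ) (k k' : ℤ → ℤ) (n : ℕ)
    (h : ∀ b : ℤ, 2 ≤ b → b ≤ (n : ℤ) + 1 → k b = k' b) : asc ℓ k n = asc ℓ k' n := by
  induction n with
  | zero => rfl
  | succ n ih =>
    rw [show asc ℓ k (n + 1) = asc ℓ k n ++ lift ℓ ((n : ℤ) + 1) (k ((n : ℤ) + 2)) from rfl,
      show asc ℓ k' (n + 1) = asc ℓ k' n ++ lift ℓ ((n : ℤ) + 1) (k' ((n : ℤ) + 2)) from rfl,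
      ih (fun b hb1 hb2 => h b hb1 (by push_cast; omega)),
      h ((n : ℤ) + 2) (by omega) (by push_cast; omega)]

lemma full_congr (ℓ : ℕ) (hl : 2 ≤ ℓ) (k k' : ℤ → ℤ)
    (h : ∀ b : ℤ, 2 ≤ b → b ≤ (ℓ : ℤ) → k b = k' b) : fullL ℓ k = fullL ℓ k' := by
  unfold fullL
  rw [asc_congr ℓ k k' (ℓ - 1) (fun b hb1 hb2 => h b hb1 (by omega))]

lemma loss_card (ℓ : ℕ) (hl : 2 ≤ ℓ) (t : ℕ) (η' : Site → Bool) :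
    (({η | η ∈ DomFrame ℓ ∧ Mdef ℓ t η = Mdef ℓ t η' ∧
        Mdef ℓ (t + 1) η = Mdef ℓ (t + 1) η'}.ncard : ℕ) : ℝ)
      ≤ 2 ^ ((6 : ℝ) * (ℓ : ℝ) * Real.logb 2 (ℓ : ℝ)) := by
  classical
  set S := {η | η ∈ DomFrame ℓ ∧ Mdef ℓ t η = Mdef ℓ t η' ∧
      Mdef ℓ (t + 1) η = Mdef ℓ (t + 1) η'} with hS
  have hcard : S.ncard ≤ ℓ ^ (ℓ - 1) := by
    have hmem : ∀ (η : Site → Bool) (b : ℤ),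
        kfun ℓ η b ∈ Finset.Icc (1 : ℤ) (ℓ : ℤ) := by
      intro η b
      exact Finset.mem_Icc.mpr (kfun_bounds ℓ (by omega) η b)
    set Φ : (Site → Bool) →
        ({x // x ∈ Finset.Icc (2 : ℤ) (ℓ : ℤ)} → {x // x ∈ Finset.Icc (1 : ℤ) (ℓ : ℤ)}) :=
      fun η b => ⟨kfun ℓ η b.1, hmem η b.1⟩ with hΦ
    have hinj : Set.InjOn Φ S := by
      intro η₁ h₁ η₂ h₂ heq
      have hkeq : ∀ b : ℤ, 2 ≤ b → b ≤ (ℓ : ℤ) → kfun ℓ η₁ b = kfun ℓ η₂ b := by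
        intro b hb1 hb2
        have := congrFun heq ⟨b, Finset.mem_Icc.mpr ⟨hb1, hb2⟩⟩
        simpa [hΦ, Subtype.ext_iff] using this
      have hfl : fullL ℓ (kfun ℓ η₁) = fullL ℓ (kfun ℓ η₂) :=
        full_congr ℓ hl _ _ hkeq
      have hMeq : Mdef ℓ t η₁ = Mdef ℓ t η₂ := by rw [h₁.2.1, h₂.2.1]
      unfold Mdef at hMeq
      rw [hfl] at hMeq
      exact applyL_injective _ hMeq
    have hle := Set.ncard_le_ncard_of_injOn Φ (fun a _ => Set.mem_univ _) hinj
      Set.finite_univ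
    rw [Set.ncard_univ, Nat.card_eq_fintype_card, Fintype.card_fun, Fintype.card_coe,
      Fintype.card_coe, Int.card_Icc, Int.card_Icc] at hle
    have e1 : ((ℓ : ℤ) + 1 - 1).toNat = ℓ := by omega
    have e2 : ((ℓ : ℤ) + 1 - 2).toNat = ℓ - 1 := by omega
    rwa [e1, e2] at hle
  have hpos : (0 : ℝ) < (ℓ : ℝ) := by positivity
  have hone : (1 : ℝ) ≤ (ℓ : ℝ) := by exact_mod_cast (by omega : 1 ≤ ℓ)
  calc (S.ncard : ℝ) ≤ ((ℓ ^ (ℓ - 1) : ℕ) : ℝ) := by exact_mod_cast hcard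
    _ = (ℓ : ℝ) ^ ((ℓ - 1 : ℕ) : ℝ) := by
        rw [Real.rpow_natCast]; push_cast; ring
    _ ≤ (ℓ : ℝ) ^ ((6 : ℝ) * (ℓ : ℝ)) := by
        apply Real.rpow_le_rpow_of_exponent_le hone
        have : ((ℓ - 1 : ℕ) : ℝ) ≤ (ℓ : ℝ) := by exact_mod_cast (by omega : ℓ - 1 ≤ ℓ)
        nlinarith
    _ = 2 ^ ((6 : ℝ) * (ℓ : ℝ) * Real.logb 2 (ℓ : ℝ)) := by
        rw [show (6 : ℝ) * (ℓ : ℝ) * Real.logb 2 (ℓ : ℝ)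
            = Real.logb 2 (ℓ : ℝ) * ((6 : ℝ) * (ℓ : ℝ)) from by ring,
          Real.rpow_mul (by norm_num : (0 : ℝ) ≤ 2),
          Real.rpow_logb (by norm_num) (by norm_num) hpos]
lemma dom_kbounds (ℓ : ℕ) (hl : 2 ≤ ℓ) (η : Site → Bool) :
    ∀ b : ℤ, 2 ≤ b → b ≤ (ℓ : ℤ) → 1 ≤ kfun ℓ η b ∧ kfun ℓ η b ≤ (ℓ : ℤ) :=
  fun b _ _ => kfun_bounds ℓ (by omega) η b

end KAF

/-- Claim 3.9 (framing an almost good box, KA-2f in `d = 2`): there is a constant `C` such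
that for every `ℓ ≥ 2` there is a `T`-step move with domain `DomFrame ℓ`, taking place in
`B = [ℓ]²`, with `T ≤ C ℓ²` and information loss `≤ C ℓ log₂ ℓ`, whose final state has
both the bottom row and the left column of `B` empty. -/
theorem frame_box :
    ∃ C : ℝ, 0 < C ∧ ∀ ℓ : ℕ, 2 ≤ ℓ →
      ∃ (T : ℕ) (M : ℕ → (ℤ × ℤ → Bool) → (ℤ × ℤ → Bool)),
        (T : ℝ) ≤ C * (ℓ : ℝ) ^ 2 ∧
        IsTMove2 (boxSet ℓ) (DomFrame ℓ) M T ∧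
        LossLE2 (DomFrame ℓ) M T (C * (ℓ : ℝ) * Real.logb 2 ℓ) ∧
        ∀ η ∈ DomFrame ℓ, ∀ a : ℤ, 1 ≤ a → a ≤ (ℓ : ℤ) →
          M T η (a, 1) = false ∧ M T η (1, a) = false := by
  refine ⟨6, by norm_num, ?_⟩
  intro ℓ hl
  refine ⟨6 * ℓ ^ 2, KAF.Mdef ℓ, ?_, ?_, ?_, ?_⟩
  · push_cast
    exact le_refl _
  · -- IsTMove2
    intro η hη
    have hkb := KAF.dom_kbounds ℓ hl η
    have hGF := KAF.full_good ℓ hl (KAF.kfun ℓ η) hkb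
    have hE := KAF.dom_empt ℓ η hη
    have hlen := KAF.full_len ℓ hl (KAF.kfun ℓ η) hkb
    constructor
    · simp [KAF.Mdef]
    · intro t ht
      by_cases hlt : t < (KAF.fullL ℓ (KAF.kfun ℓ η)).length
      · right
        exact KAF.good_legal ℓ _ _ η hGF.1 hE t hlt
      · left
        unfold KAF.Mdef
        rw [List.take_of_length_le (by omega), List.take_of_length_le (by omega)]
  · -- Loss
    intro t ht η' hη'
    exact KAF.loss_card ℓ hl t η'
  · -- final configuration
    intro η hη a ha1 ha2
    have hkb := KAF.dom_kbounds ℓ hl η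
    have hGF := KAF.full_good ℓ hl (KAF.kfun ℓ η) hkb
    have hE := KAF.dom_empt ℓ η hη
    have hlen := KAF.full_len ℓ hl (KAF.kfun ℓ η) hkb
    have hM : KAF.Mdef ℓ (6 * ℓ ^ 2) η = KAF.applyL (KAF.fullL ℓ (KAF.kfun ℓ η)) η := by
      unfold KAF.Mdef
      rw [List.take_of_length_le hlen]
    have hfin := KAF.empt_evolve hE (KAF.fullL ℓ (KAF.kfun ℓ η))
    rw [hM]
    constructor
    · refine hfin _ (hGF.2 ?_)
      exact Set.mem_union_left _ (by
        simp only [KAF.seg, Set.mem_setOf_eq]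
        exact ⟨ha1, ha2, trivial⟩)
    · refine hfin _ (hGF.2 ?_)
      exact Set.mem_union_right _ (by
        simp only [KAF.vseg, Set.mem_setOf_eq]
        exact ⟨trivial, ha1, ha2⟩)
end
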